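/- arXiv:2211.09654 — 8 statements merged into one kernel-verified Lean document; each statement's English description precedes it below -/
import Mathlib

section
/- If a nonempty connected graph G has a cyclic base ordering, then the minimum degree of G satisfies δ(G) ≥ |E(G)|/(|V(G)|−1). -/
open scoped Classical

noncomputable section

/-- A cyclic base ordering of `G`: a bijective labelling of the edges by
`{0, …, m-1}` such that every window of `|V| - 1` cyclically consecutive labels
induces a spanning tree of `G`. -/
def SimpleGraph.IsCBO {V : Type} [Fintype V] (G : SimpleGraph V)
    (O : G.edgeSet ≃ Fin G.edgeFinset.card) : Prop :=
  ∀ i : ℕ,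
    (SimpleGraph.fromEdgeSet
      {s : Sym2 V | ∃ e : G.edgeSet, (e : Sym2 V) = s ∧
        ∃ j < Fintype.card V - 1,
          (O e : ℕ) = (i + j) % G.edgeFinset.card}).IsTree

/-- A graph is cyclically orderable if it admits a cyclic base ordering. -/
def SimpleGraph.CyclicallyOrderable {V : Type} [Fintype V] (G : SimpleGraph V) : Prop :=
  ∃ O : G.edgeSet ≃ Fin G.edgeFinset.card, G.IsCBO O

/-- Every vertex of a connected graph on a nontrivial vertex type has a neighbor. -/
lemma aux_exists_adj {V : Type} [Nontrivial V] (H : SimpleGraph V) (hc : H.Connected)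
    (v : V) : ∃ w, H.Adj v w := by
  obtain ⟨w, hvw⟩ := exists_ne v
  obtain ⟨p⟩ := hc.preconnected v w
  cases p with
  | nil => exact absurd rfl hvw.symm
  | cons h _ => exact ⟨_, h⟩

/-- If a nonempty connected graph `G` has a cyclic base ordering, then
`δ(G) ≥ |E(G)| / (|V(G)| − 1)`. -/
theorem minDegree_ge_density_of_cyclicallyOrderable {V : Type} [Fintype V]
    (G : SimpleGraph V) (hne : G.edgeFinset.Nonempty) (hconn : G.Connected)
    (hcbo : G.CyclicallyOrderable) :
    (G.minDegree : ℚ) ≥ (G.edgeFinset.card : ℚ) / ((Fintype.card V : ℚ) - 1) := by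
  classical
  set m := G.edgeFinset.card with hm
  set n := Fintype.card V with hn
  -- V is nontrivial
  obtain ⟨e₀, he₀⟩ := hne
  have he₀' : e₀ ∈ G.edgeSet := by rwa [← SimpleGraph.mem_edgeFinset]
  have hnt : Nontrivial V := by
    induction e₀ using Sym2.ind with
    | _ a b => exact ⟨a, b, ((G.mem_edgeSet).mp he₀').ne⟩
  have hn2 : 2 ≤ n := Fintype.one_lt_card
  have hnonempty : Nonempty V := ⟨Classical.arbitrary V⟩
  obtain ⟨v, hv⟩ := G.exists_minimal_degree_vertex
  obtain ⟨O, hO⟩ := hcbo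
  -- for each i : Fin m choose an edge at v in window i
  have key : ∀ i : Fin m, ∃ e : G.edgeSet, v ∈ (e : Sym2 V) ∧
      ∃ j < n - 1, (O e : ℕ) = ((i : ℕ) + j) % m := by
    intro i
    have hT := hO (i : ℕ)
    obtain ⟨w, hw⟩ := aux_exists_adj _ hT.isConnected v
    rw [SimpleGraph.fromEdgeSet_adj] at hw
    obtain ⟨⟨e, he, j, hj, hje⟩, _⟩ := hw
    exact ⟨e, by rw [he]; exact Sym2.mem_mk_left v w, j, hj, hje⟩
  set f : Fin m → Sym2 V := fun i => ((key i).choose : Sym2 V) with hf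
  have hfmem : ∀ i, f i ∈ G.incidenceFinset v := by
    intro i
    rw [SimpleGraph.mem_incidenceFinset]
    exact ⟨((key i).choose).2, ((key i).choose_spec).1⟩
  -- fiber bound
  have hfiber : ∀ e ∈ G.incidenceFinset v,
      (Finset.univ.filter (fun i : Fin m => f i = e)).card ≤ n - 1 := by
    intro e he
    have : (Finset.univ.filter (fun i : Fin m => f i = e)).card ≤
        (Finset.range (n - 1)).card := by
      apply Finset.card_le_card_of_injOn
        (fun i => ((key i).choose_spec).2.choose)
      · intro i hi
        rw [Finset.mem_coe, Finset.mem_range]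
        exact ((key i).choose_spec).2.choose_spec.1
      · intro i hi i' hi' hjj
        simp only [Finset.mem_coe, Finset.mem_filter] at hi hi'
        have hee : (key i).choose = (key i').choose :=
          Subtype.ext (hi.2.trans hi'.2.symm)
        have h1 := ((key i).choose_spec).2.choose_spec.2
        have h2 := ((key i').choose_spec).2.choose_spec.2
        have h3 : (O (key i).choose : ℕ) = (O (key i').choose : ℕ) := by rw [hee]
        have h4 := h1.symm.trans (h3.trans h2)
        have hjj' : ((key i).choose_spec).2.choose = ((key i').choose_spec).2.choose := hjj
        rw [hjj'] at h4
        have hmod : (i : ℕ) ≡ (i' : ℕ) [MOD m] :=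
          Nat.ModEq.add_right_cancel' _ h4
        have hmod' : (i : ℕ) % m = (i' : ℕ) % m := hmod
        rw [Nat.mod_eq_of_lt i.isLt, Nat.mod_eq_of_lt i'.isLt] at hmod'
        exact Fin.ext hmod'
    simpa using this
  have hcount : m ≤ G.degree v * (n - 1) := by
    have h1 : (Finset.univ : Finset (Fin m)).card =
        ∑ e ∈ G.incidenceFinset v,
          (Finset.univ.filter (fun i : Fin m => f i = e)).card :=
      Finset.card_eq_sum_card_fiberwise (fun i _ => hfmem i)
    have h2 : ∑ e ∈ G.incidenceFinset v,
        (Finset.univ.filter (fun i : Fin m => f i = e)).card ≤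
        ∑ _e ∈ G.incidenceFinset v, (n - 1) :=
      Finset.sum_le_sum hfiber
    calc m = (Finset.univ : Finset (Fin m)).card := by simp
    _ ≤ ∑ _e ∈ G.incidenceFinset v, (n - 1) := h1 ▸ h2
    _ = G.degree v * (n - 1) := by
        rw [Finset.sum_const, smul_eq_mul, G.card_incidenceFinset_eq_degree]
  have hcount' : m ≤ G.minDegree * (n - 1) := hv ▸ hcount
  -- cast to ℚ
  have hpos : (0 : ℚ) < (n : ℚ) - 1 := by
    have : (1 : ℚ) < (n : ℚ) := by exact_mod_cast hn2
    linarith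
  rw [ge_iff_le, div_le_iff₀ hpos]
  have hcast : ((n : ℚ) - 1) = ((n - 1 : ℕ) : ℚ) := by
    have : 1 ≤ n := le_trans (by norm_num) hn2
    push_cast [Nat.cast_sub this]
    ring
  rw [hcast]
  exact_mod_cast hcount'

end
end

section
/- For every integer k > 4, the triangular grid graph T_k satisfies |E(T_k)|/(|V(T_k)|−1) = (3k²−3k)/(k²+k−2) > 2 = δ(T_k), and hence T_k is not cyclically orderable. -/
open scoped Classical
open Finset

set_option maxHeartbeats 1000000
noncomputable section

/-- The vertex set of the triangular grid graph with `k` levels: the vertex at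
position `j` of row `i` (both 0-indexed) is the pair `(i, j)` with `j ≤ i < k`. -/
abbrev TriGridVert (k : ℕ) : Type := {p : Fin k × Fin k // (p.2 : ℕ) ≤ (p.1 : ℕ)}

/-- The triangular grid graph `T_k` with `k` levels: a vertex is adjacent to its
horizontal neighbours in its own row and to its nearest (up to two) vertices in
each adjacent row. -/
def TriGrid (k : ℕ) : SimpleGraph (TriGridVert k) :=
  SimpleGraph.fromRel fun a b =>
    ((a.1.1 : ℕ) = (b.1.1 : ℕ) ∧ (a.1.2 : ℕ) + 1 = (b.1.2 : ℕ)) ∨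
    ((a.1.1 : ℕ) + 1 = (b.1.1 : ℕ) ∧
      ((a.1.2 : ℕ) = (b.1.2 : ℕ) ∨ (a.1.2 : ℕ) + 1 = (b.1.2 : ℕ)))

lemma card_filter_tri (k : ℕ) (P : ℕ → ℕ → Prop)
    [DecidablePred fun p : TriGridVert k => P p.1.1 p.1.2] [∀ i, DecidablePred (P i)]
    (f : ℕ → ℕ) (hf : ∀ i < k, ((range (i+1)).filter (P i)).card = f i) :
    ((univ : Finset (TriGridVert k)).filter (fun p => P p.1.1 p.1.2)).card
      = ∑ i ∈ range k, f i := by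
  classical
  have : ∑ i ∈ range k, f i = ((range k).sigma fun i => (range (i+1)).filter (P i)).card := by
    rw [Finset.card_sigma]
    exact (Finset.sum_congr rfl fun i hi => (hf i (Finset.mem_range.mp hi)).symm)
  rw [this]
  refine Finset.card_bij' (fun (p : TriGridVert k) _ => (⟨(p.1.1 : ℕ), (p.1.2 : ℕ)⟩ : Σ _ : ℕ, ℕ))
    (fun s hs => ⟨(⟨s.1, ?_⟩, ⟨s.2, ?_⟩), ?_⟩) ?_ ?_ ?_ ?_
  · simp only [Finset.mem_sigma, Finset.mem_range] at hs; exact hs.1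
  · simp only [Finset.mem_sigma, Finset.mem_filter, Finset.mem_range] at hs; omega
  · simp only [Finset.mem_sigma, Finset.mem_filter, Finset.mem_range] at hs; simp; omega
  · intro a ha
    simp only [Finset.mem_filter, Finset.mem_univ, true_and] at ha
    simp only [Finset.mem_sigma, Finset.mem_filter, Finset.mem_range]
    exact ⟨a.1.1.isLt, ⟨by have := a.2; omega, ha⟩⟩
  · intro s hs
    simp only [Finset.mem_sigma, Finset.mem_filter, Finset.mem_range] at hs
    simp only [Finset.mem_filter, Finset.mem_univ, true_and]
    exact hs.2.2
  · intro a ha; ext <;> simp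
  · intro s hs; rfl

lemma two_mul_card_vert (k : ℕ) : 2 * Fintype.card (TriGridVert k) = k * (k+1) := by
  classical
  have h : Fintype.card (TriGridVert k)
      = ((univ : Finset (TriGridVert k)).filter (fun p => 0 ≤ (p.1.1 : ℕ))).card := by
    simp
  rw [h, card_filter_tri k (fun i _ => 0 ≤ i) (fun i => i + 1) (by intro i _; simp)]
  have := Finset.sum_range_id_mul_two (k+1)
  have h4 : ∑ i ∈ range (k+1), i = ∑ i ∈ range k, (i+1) := by
    rw [Finset.sum_range_succ']; simp
  have h6 : (k+1)*(k+1-1) = k*(k+1) := by rw [Nat.add_sub_cancel, Nat.mul_comm]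
  omega

lemma two_mul_card_A (k : ℕ) :
    2 * ((univ : Finset (TriGridVert k)).filter (fun p => (p.1.2 : ℕ) < (p.1.1 : ℕ))).card = k * (k-1) := by
  classical
  rw [card_filter_tri k (fun i j => j < i) (fun i => i) ?_]
  · have := Finset.sum_range_id_mul_two k
    omega
  · intro i _
    rw [Finset.range_add_one, Finset.filter_insert]
    simp [Finset.filter_true_of_mem (fun j hj => Finset.mem_range.mp hj)]

lemma two_mul_card_B (k : ℕ) (hk : 0 < k) :
    2 * ((univ : Finset (TriGridVert k)).filter (fun p => (p.1.1 : ℕ) + 1 < k)).card = k * (k-1) := by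
  classical
  rw [card_filter_tri k (fun i _ => i + 1 < k) (fun i => if i + 1 < k then i + 1 else 0) ?_]
  · obtain ⟨m, rfl⟩ : ∃ m, k = m + 1 := ⟨k-1, by omega⟩
    rw [Finset.sum_range_succ]
    simp only [lt_irrefl, Nat.add_lt_add_iff_right, if_false, add_zero]
    have h5 : ∀ i ∈ range m, (if i < m then i + 1 else 0) = i + 1 := by
      intro i hi; simp [Finset.mem_range.mp hi]
    rw [Finset.sum_congr rfl h5]
    have := Finset.sum_range_id_mul_two (m+1)
    have h4 : ∑ i ∈ range (m+1), i = ∑ i ∈ range m, (i+1) := by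
      rw [Finset.sum_range_succ']; simp
    have h6 : (m+1)*(m+1-1) = (m+1)*m := by rw [Nat.add_sub_cancel]
    omega
  · intro i _
    by_cases h : i + 1 < k <;> simp [h]

def Rrel (k : ℕ) (a b : TriGridVert k) : Prop :=
  ((a.1.1 : ℕ) = (b.1.1 : ℕ) ∧ (a.1.2 : ℕ) + 1 = (b.1.2 : ℕ)) ∨
    ((a.1.1 : ℕ) + 1 = (b.1.1 : ℕ) ∧
      ((a.1.2 : ℕ) = (b.1.2 : ℕ) ∨ (a.1.2 : ℕ) + 1 = (b.1.2 : ℕ)))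

lemma triGrid_adj {k : ℕ} (a b : TriGridVert k) :
    (TriGrid k).Adj a b ↔ a ≠ b ∧ (Rrel k a b ∨ Rrel k b a) := by
  rw [TriGrid, SimpleGraph.fromRel_adj]; rfl

lemma vert_ext {k : ℕ} {a b : TriGridVert k} (h1 : (a.1.1 : ℕ) = (b.1.1 : ℕ))
    (h2 : (a.1.2 : ℕ) = (b.1.2 : ℕ)) : a = b := by
  apply Subtype.ext; apply Prod.ext <;> exact Fin.ext ‹_›

lemma vert_ne {k : ℕ} {a b : TriGridVert k}
    (h : ¬((a.1.1 : ℕ) = (b.1.1 : ℕ) ∧ (a.1.2 : ℕ) = (b.1.2 : ℕ))) : a ≠ b := by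
  intro he; exact h (by rw [he]; exact ⟨rfl, rfl⟩)

lemma edge_card_eq_pairs (k : ℕ) :
    ((univ : Finset (TriGridVert k × TriGridVert k)).filter
        (fun q => Rrel k q.1 q.2)).card = (TriGrid k).edgeFinset.card := by
  classical
  refine Finset.card_bij (fun q _ => s(q.1, q.2)) ?_ ?_ ?_
  · intro q hq
    simp only [Finset.mem_filter, Finset.mem_univ, true_and] at hq
    rw [SimpleGraph.mem_edgeFinset, SimpleGraph.mem_edgeSet, triGrid_adj]
    refine ⟨vert_ne ?_, Or.inl hq⟩
    rcases hq with ⟨h1, h2⟩ | ⟨h1, h2⟩ <;> omega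
  · intro q1 h1 q2 h2 he
    simp only [Finset.mem_filter, Finset.mem_univ, true_and] at h1 h2
    rw [Sym2.eq_iff] at he
    rcases he with ⟨ha, hb⟩ | ⟨ha, hb⟩
    · exact Prod.ext ha hb
    · exfalso
      have ha1 : ((q1.1).1.1 : ℕ) = ((q2.2).1.1 : ℕ) := by rw [ha]
      have ha2 : ((q1.1).1.2 : ℕ) = ((q2.2).1.2 : ℕ) := by rw [ha]
      have hb1 : ((q1.2).1.1 : ℕ) = ((q2.1).1.1 : ℕ) := by rw [hb]
      have hb2 : ((q1.2).1.2 : ℕ) = ((q2.1).1.2 : ℕ) := by rw [hb]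
      rcases h1 with ⟨a1, a2⟩ | ⟨a1, a2⟩ <;> rcases h2 with ⟨b1, b2⟩ | ⟨b1, b2⟩ <;> omega
  · intro e he
    rw [SimpleGraph.mem_edgeFinset] at he
    revert he
    refine Sym2.ind (fun a b he => ?_) e
    rw [SimpleGraph.mem_edgeSet, triGrid_adj] at he
    rcases he.2 with h | h
    · exact ⟨(a, b), by simpa using h, rfl⟩
    · exact ⟨(b, a), by simpa using h, Sym2.eq_swap⟩

lemma pairs_card (k : ℕ) :
    ((univ : Finset (TriGridVert k × TriGridVert k)).filter
        (fun q => Rrel k q.1 q.2)).card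
    = ((univ : Finset (TriGridVert k)).filter (fun p => (p.1.2 : ℕ) < (p.1.1 : ℕ))).card
      + (((univ : Finset (TriGridVert k)).filter (fun p => (p.1.1 : ℕ) + 1 < k)).card
      + ((univ : Finset (TriGridVert k)).filter (fun p => (p.1.1 : ℕ) + 1 < k)).card) := by
  classical
  have hsplit : ((univ : Finset (TriGridVert k × TriGridVert k)).filter
        (fun q => Rrel k q.1 q.2))
      = ((univ : Finset (TriGridVert k × TriGridVert k)).filter
          (fun q => (q.1.1.1 : ℕ) = (q.2.1.1 : ℕ) ∧ (q.1.1.2 : ℕ) + 1 = (q.2.1.2 : ℕ)))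
        ∪ (((univ : Finset (TriGridVert k × TriGridVert k)).filter
          (fun q => (q.1.1.1 : ℕ) + 1 = (q.2.1.1 : ℕ) ∧ (q.1.1.2 : ℕ) = (q.2.1.2 : ℕ)))
        ∪ ((univ : Finset (TriGridVert k × TriGridVert k)).filter
          (fun q => (q.1.1.1 : ℕ) + 1 = (q.2.1.1 : ℕ) ∧ (q.1.1.2 : ℕ) + 1 = (q.2.1.2 : ℕ)))) := by
    ext q
    rw [Finset.mem_filter]
    simp only [Finset.mem_filter, Finset.mem_univ, true_and, Finset.mem_union, Rrel]
    tauto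
  rw [hsplit]
  rw [Finset.card_union_of_disjoint, Finset.card_union_of_disjoint]
  · congr 1
    · refine Finset.card_bij (fun q _ => q.1) ?_ ?_ ?_
      · intro q hq
        simp only [Finset.mem_filter, Finset.mem_univ, true_and] at hq ⊢
        have := q.2.2; omega
      · intro q1 h1 q2 h2 he
        simp only [Finset.mem_filter, Finset.mem_univ, true_and] at h1 h2
        have he' : q1.1 = q2.1 := he
        have e1 : ((q1.1).1.1 : ℕ) = ((q2.1).1.1 : ℕ) := by rw [he']
        have e2 : ((q1.1).1.2 : ℕ) = ((q2.1).1.2 : ℕ) := by rw [he']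
        exact Prod.ext he' (vert_ext (by omega) (by omega))
      · intro a ha
        simp only [Finset.mem_filter, Finset.mem_univ, true_and] at ha
        have h1 : (a.1.2 : ℕ) + 1 < k := by have := a.1.1.isLt; omega
        refine ⟨(a, ⟨(a.1.1, ⟨(a.1.2 : ℕ) + 1, h1⟩), by simp; omega⟩), ?_, rfl⟩
        simp only [Finset.mem_filter, Finset.mem_univ, true_and]
    · congr 1
      · refine Finset.card_bij (fun q _ => q.1) ?_ ?_ ?_
        · intro q hq
          simp only [Finset.mem_filter, Finset.mem_univ, true_and] at hq ⊢
          have := q.2.1.1.isLt; omega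
        · intro q1 h1 q2 h2 he
          simp only [Finset.mem_filter, Finset.mem_univ, true_and] at h1 h2
          have he' : q1.1 = q2.1 := he
          have e1 : ((q1.1).1.1 : ℕ) = ((q2.1).1.1 : ℕ) := by rw [he']
          have e2 : ((q1.1).1.2 : ℕ) = ((q2.1).1.2 : ℕ) := by rw [he']
          exact Prod.ext he' (vert_ext (by omega) (by omega))
        · intro a ha
          simp only [Finset.mem_filter, Finset.mem_univ, true_and] at ha
          refine ⟨(a, ⟨(⟨(a.1.1 : ℕ) + 1, ha⟩, a.1.2), by have := a.2; simp; omega⟩), ?_, rfl⟩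
          simp only [Finset.mem_filter, Finset.mem_univ, true_and]
      · refine Finset.card_bij (fun q _ => q.1) ?_ ?_ ?_
        · intro q hq
          simp only [Finset.mem_filter, Finset.mem_univ, true_and] at hq ⊢
          have := q.2.1.1.isLt; omega
        · intro q1 h1 q2 h2 he
          simp only [Finset.mem_filter, Finset.mem_univ, true_and] at h1 h2
          have he' : q1.1 = q2.1 := he
          have e1 : ((q1.1).1.1 : ℕ) = ((q2.1).1.1 : ℕ) := by rw [he']
          have e2 : ((q1.1).1.2 : ℕ) = ((q2.1).1.2 : ℕ) := by rw [he']
          exact Prod.ext he' (vert_ext (by omega) (by omega))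
        · intro a ha
          simp only [Finset.mem_filter, Finset.mem_univ, true_and] at ha
          have h2 : (a.1.2 : ℕ) + 1 < k := by have := a.2; omega
          refine ⟨(a, ⟨(⟨(a.1.1 : ℕ) + 1, ha⟩, ⟨(a.1.2 : ℕ) + 1, h2⟩), by simp; have := a.2; omega⟩), ?_, rfl⟩
          simp only [Finset.mem_filter, Finset.mem_univ, true_and]
  · rw [Finset.disjoint_left]
    intro q h1 h2
    simp only [Finset.mem_filter, Finset.mem_univ, true_and] at h1 h2
    omega
  · rw [Finset.disjoint_left]
    intro q h1 h2
    simp only [Finset.mem_filter, Finset.mem_univ, true_and, Finset.mem_union] at h1 h2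
    rcases h2 with h2 | h2 <;> omega

def TV {k : ℕ} (i j : ℕ) (hj : j ≤ i) (hi : i < k) : TriGridVert k :=
  ⟨(⟨i, hi⟩, ⟨j, lt_of_le_of_lt hj hi⟩), hj⟩

@[simp] lemma TV_row {k : ℕ} (i j : ℕ) (hj : j ≤ i) (hi : i < k) :
    (((TV i j hj hi : TriGridVert k)).1.1 : ℕ) = i := rfl

@[simp] lemma TV_col {k : ℕ} (i j : ℕ) (hj : j ≤ i) (hi : i < k) :
    (((TV i j hj hi : TriGridVert k)).1.2 : ℕ) = j := rfl

lemma adj_of_coords {k : ℕ} {a b : TriGridVert k}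
    (h : Rrel k a b ∨ Rrel k b a) : (TriGrid k).Adj a b := by
  rw [triGrid_adj]
  refine ⟨vert_ne ?_, h⟩
  rcases h with h | h <;> rcases h with ⟨h1, h2⟩ | ⟨h1, h2⟩ <;> omega

lemma corner_adj {k : ℕ} (hk : 1 < k) (b : TriGridVert k) :
    (TriGrid k).Adj (TV 0 0 le_rfl (by omega)) b
      ↔ b = TV 1 0 (by omega) hk ∨ b = TV 1 1 le_rfl hk := by
  constructor
  · rw [triGrid_adj]
    rintro ⟨hne, h | h⟩
    · rcases h with ⟨h1, h2⟩ | ⟨h1, h2 | h2⟩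
      · exfalso; have := b.2; simp at h1 h2; omega
      · left; apply vert_ext <;> simp at h1 h2 ⊢ <;> omega
      · right; apply vert_ext <;> simp at h1 h2 ⊢ <;> omega
    · exfalso
      rcases h with ⟨h1, h2⟩ | ⟨h1, h2⟩ <;> simp at h1 h2 <;> omega
  · rintro (h | h) <;> rw [h] <;>
      exact adj_of_coords (by simp [Rrel, TV_row, TV_col]; try omega)

lemma corner_degree {k : ℕ} (hk : 1 < k) :
    (TriGrid k).degree (TV 0 0 le_rfl (by omega)) = 2 := by
  classical
  rw [SimpleGraph.degree]
  have h : (TriGrid k).neighborFinset (TV 0 0 le_rfl (by omega))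
      = {TV 1 0 (by omega) hk, TV 1 1 le_rfl hk} := by
    ext b
    rw [SimpleGraph.mem_neighborFinset, corner_adj hk]
    simp
  rw [h]
  rw [Finset.card_insert_of_notMem, Finset.card_singleton]
  simp only [Finset.mem_singleton]
  intro he
  have := congrArg (fun v => ((v : TriGridVert k).1.2 : ℕ)) he
  simp at this
lemma two_le_degree {k : ℕ} (hk : 4 < k) (v : TriGridVert k) :
    2 ≤ (TriGrid k).degree v := by
  classical
  rw [SimpleGraph.degree, show (2 : ℕ) = 1 + 1 from rfl, Nat.add_one_le_iff,
    Finset.one_lt_card_iff]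
  have hrow : (v.1.1 : ℕ) < k := v.1.1.isLt
  have hcol : (v.1.2 : ℕ) ≤ (v.1.1 : ℕ) := v.2
  by_cases hi : (v.1.1 : ℕ) + 1 < k
  · refine ⟨TV ((v.1.1 : ℕ)+1) (v.1.2 : ℕ) (by omega) hi,
      TV ((v.1.1 : ℕ)+1) ((v.1.2 : ℕ)+1) (by omega) hi, ?_, ?_, ?_⟩
    · rw [SimpleGraph.mem_neighborFinset]
      exact adj_of_coords (by simp [Rrel, TV_row, TV_col]; try omega)
    · rw [SimpleGraph.mem_neighborFinset]
      exact adj_of_coords (by simp [Rrel, TV_row, TV_col]; try omega)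
    · apply vert_ne; simp
  · -- last row: row = k-1 ≥ 4
    have hrow4 : 4 ≤ (v.1.1 : ℕ) := by omega
    by_cases hj : (v.1.2 : ℕ) = 0
    · refine ⟨TV (v.1.1 : ℕ) 1 (by omega) hrow,
        TV ((v.1.1 : ℕ)-1) 0 (by omega) (by omega), ?_, ?_, ?_⟩
      · rw [SimpleGraph.mem_neighborFinset]
        exact adj_of_coords (by simp [Rrel, TV_row, TV_col]; try omega)
      · rw [SimpleGraph.mem_neighborFinset]
        exact adj_of_coords (by simp [Rrel, TV_row, TV_col]; try omega)
      · apply vert_ne; simp; try omega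
    · refine ⟨TV (v.1.1 : ℕ) ((v.1.2 : ℕ)-1) (by omega) hrow,
        TV ((v.1.1 : ℕ)-1) ((v.1.2 : ℕ)-1) (by omega) (by omega), ?_, ?_, ?_⟩
      · rw [SimpleGraph.mem_neighborFinset]
        exact adj_of_coords (by simp [Rrel, TV_row, TV_col]; try omega)
      · rw [SimpleGraph.mem_neighborFinset]
        exact adj_of_coords (by simp [Rrel, TV_row, TV_col]; try omega)
      · apply vert_ne; simp; try omega

lemma triGrid_minDegree {k : ℕ} (hk : 4 < k) : (TriGrid k).minDegree = 2 := by
  classical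
  have : Nonempty (TriGridVert k) := ⟨TV 0 0 le_rfl (by omega)⟩
  apply le_antisymm
  · exact (SimpleGraph.minDegree_le_degree _ _).trans (corner_degree (by omega)).le
  · exact SimpleGraph.le_minDegree_of_forall_le_degree _ 2 (two_le_degree hk)

lemma cbo_bound {k : ℕ} (hk : 4 < k) (h : (TriGrid k).CyclicallyOrderable) :
    (TriGrid k).edgeFinset.card ≤ 2 * (Fintype.card (TriGridVert k) - 1) := by
  classical
  obtain ⟨O, hO⟩ := h
  have hk1 : 1 < k := by omega
  set c : TriGridVert k := TV 0 0 le_rfl (by omega) with hc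
  set b1 : TriGridVert k := TV 1 0 (by omega) hk1 with hb1
  set b2 : TriGridVert k := TV 1 1 le_rfl hk1 with hb2
  have hadj1 : (TriGrid k).Adj c b1 := (corner_adj hk1 b1).mpr (Or.inl rfl)
  have hadj2 : (TriGrid k).Adj c b2 := (corner_adj hk1 b2).mpr (Or.inr rfl)
  set e1 : (TriGrid k).edgeSet := ⟨s(c, b1), (SimpleGraph.mem_edgeSet _).mpr hadj1⟩ with he1
  set e2 : (TriGrid k).edgeSet := ⟨s(c, b2), (SimpleGraph.mem_edgeSet _).mpr hadj2⟩ with he2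
  have key : ∀ i : ℕ, ∃ j, j < (Fintype.card (TriGridVert k) - 1) ∧
      ((i + j) % (TriGrid k).edgeFinset.card = (O e1 : ℕ) ∨ (i + j) % (TriGrid k).edgeFinset.card = (O e2 : ℕ)) := by
    intro i
    have hT := hO i
    have hne : c ≠ b1 := vert_ne (by simp [hc, hb1])
    obtain ⟨w⟩ := hT.isConnected.preconnected c b1
    obtain ⟨x, hadj, -, -⟩ := SimpleGraph.Walk.not_nil_iff.mp
      (SimpleGraph.Walk.not_nil_of_ne (p := w) hne)
    rw [SimpleGraph.fromEdgeSet_adj] at hadj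
    obtain ⟨hmem0, hnecx⟩ := hadj
    simp only [Set.mem_setOf_eq] at hmem0
    obtain ⟨e, heq, j, hj, hOe⟩ := hmem0
    have hmem : (e : Sym2 (TriGridVert k)) ∈ (TriGrid k).edgeSet := e.2
    rw [heq] at hmem
    have hadjcx : (TriGrid k).Adj c x := (SimpleGraph.mem_edgeSet _).mp hmem
    rcases (corner_adj hk1 x).mp hadjcx with hx | hx
    · refine ⟨j, hj, Or.inl ?_⟩
      have : e = e1 := Subtype.ext (by rw [heq, hx])
      rw [← this]; exact hOe.symm
    · refine ⟨j, hj, Or.inr ?_⟩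
      have : e = e2 := Subtype.ext (by rw [heq, hx])
      rw [← this]; exact hOe.symm
  -- counting
  have hmaps : ∀ i ∈ Finset.range (TriGrid k).edgeFinset.card,
      ((if (i + (key i).choose) % (TriGrid k).edgeFinset.card = (O e1 : ℕ) then 0 else 1), (key i).choose)
        ∈ ({0, 1} : Finset ℕ) ×ˢ Finset.range ((Fintype.card (TriGridVert k) - 1)) := by
    intro i _
    rw [Finset.mem_product, Finset.mem_range]
    refine ⟨by split <;> simp, (key i).choose_spec.1⟩
  have hinj : ∀ i1 ∈ Finset.range (TriGrid k).edgeFinset.card, ∀ i2 ∈ Finset.range (TriGrid k).edgeFinset.card,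
      ((if (i1 + (key i1).choose) % (TriGrid k).edgeFinset.card = (O e1 : ℕ) then 0 else 1), (key i1).choose)
        = ((if (i2 + (key i2).choose) % (TriGrid k).edgeFinset.card = (O e1 : ℕ) then 0 else 1), (key i2).choose)
      → i1 = i2 := by
    intro i1 h1 i2 h2 heqp
    rw [Finset.mem_range] at h1 h2
    have hJ : (key i1).choose = (key i2).choose := congrArg Prod.snd heqp
    have hfst := congrArg Prod.fst heqp
    simp only at hfst
    have hmod : (i1 + (key i1).choose) % (TriGrid k).edgeFinset.card = (i2 + (key i2).choose) % (TriGrid k).edgeFinset.card := by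
      by_cases c1 : (i1 + (key i1).choose) % (TriGrid k).edgeFinset.card = (O e1 : ℕ)
      · by_cases c2 : (i2 + (key i2).choose) % (TriGrid k).edgeFinset.card = (O e1 : ℕ)
        · rw [c1, c2]
        · rw [if_pos c1, if_neg c2] at hfst; omega
      · by_cases c2 : (i2 + (key i2).choose) % (TriGrid k).edgeFinset.card = (O e1 : ℕ)
        · rw [if_neg c1, if_pos c2] at hfst; omega
        · have s1 := (key i1).choose_spec.2
          have s2 := (key i2).choose_spec.2
          rcases s1 with s1 | s1
          · exact absurd s1 c1
          · rcases s2 with s2 | s2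
            · exact absurd s2 c2
            · rw [s1, s2]
    rw [hJ] at hmod
    have : i1 ≡ i2 [MOD (TriGrid k).edgeFinset.card] := Nat.ModEq.add_right_cancel' _ hmod
    rw [Nat.ModEq, Nat.mod_eq_of_lt h1, Nat.mod_eq_of_lt h2] at this
    exact this
  have hcount := Finset.card_le_card_of_injOn
    (fun i => ((if (i + (key i).choose) % (TriGrid k).edgeFinset.card = (O e1 : ℕ) then 0 else 1), (key i).choose))
    hmaps (fun i1 h1 i2 h2 h => hinj i1 h1 i2 h2 h)
  rw [Finset.card_range, Finset.card_product, Finset.card_range] at hcount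
  have : ({0, 1} : Finset ℕ).card = 2 := by decide
  rw [this] at hcount
  exact hcount

/-- For every integer `k > 4`, the triangular grid graph `T_k` satisfies
`|E(T_k)|/(|V(T_k)|−1) = (3k²−3k)/(k²+k−2) > 2 = δ(T_k)`, and hence `T_k` is
not cyclically orderable. -/
theorem triGrid_not_cyclicallyOrderable_of_four_lt (k : ℕ) (hk : 4 < k) :
    ((TriGrid k).edgeFinset.card : ℚ) / ((Fintype.card (TriGridVert k) : ℚ) - 1)
      = (3 * (k : ℚ) ^ 2 - 3 * (k : ℚ)) / ((k : ℚ) ^ 2 + (k : ℚ) - 2) ∧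
    (3 * (k : ℚ) ^ 2 - 3 * (k : ℚ)) / ((k : ℚ) ^ 2 + (k : ℚ) - 2) > 2 ∧
    (TriGrid k).minDegree = 2 ∧
    ¬ (TriGrid k).CyclicallyOrderable := by
  have hk5 : 5 ≤ k := hk
  have hV : 2 * Fintype.card (TriGridVert k) = k * (k+1) := two_mul_card_vert k
  have hE2 : 2 * (TriGrid k).edgeFinset.card = 3 * (k * (k-1)) := by
    have h1 := edge_card_eq_pairs k
    have h2 := pairs_card k
    have hA := two_mul_card_A k
    have hB := two_mul_card_B k (by omega)
    omega
  have hq : (5:ℚ) ≤ (k:ℚ) := by exact_mod_cast hk5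
  have hEq : (((TriGrid k).edgeFinset.card : ℕ) : ℚ) = (3*(k:ℚ)^2 - 3*(k:ℚ))/2 := by
    have hc : ((2 * (TriGrid k).edgeFinset.card : ℕ) : ℚ) = ((3 * (k * (k-1)) : ℕ) : ℚ) := by
      exact_mod_cast congrArg (fun x : ℕ => (x : ℚ)) hE2
    push_cast [Nat.cast_sub (show 1 ≤ k by omega)] at hc
    nlinarith [hc]
  have hVq : ((Fintype.card (TriGridVert k) : ℕ) : ℚ) = ((k:ℚ)^2 + (k:ℚ))/2 := by
    have hc : ((2 * Fintype.card (TriGridVert k) : ℕ) : ℚ) = ((k * (k+1) : ℕ) : ℚ) := by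
      exact_mod_cast congrArg (fun x : ℕ => (x : ℚ)) hV
    push_cast at hc
    nlinarith [hc]
  have hdpos : (0:ℚ) < (k:ℚ)^2 + (k:ℚ) - 2 := by nlinarith
  refine ⟨?_, ?_, triGrid_minDegree hk, ?_⟩
  · rw [hEq, hVq]
    have hd2 : ((k:ℚ)^2 + (k:ℚ))/2 - 1 ≠ 0 := by intro h0; nlinarith
    field_simp
  · rw [gt_iff_lt, lt_div_iff₀ hdpos]
    nlinarith
  · intro hcbo
    have hb := cbo_bound hk hcbo
    have h30 : 5*6 ≤ k*(k+1) := Nat.mul_le_mul (by omega) (by omega)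
    have hn1 : 1 ≤ Fintype.card (TriGridVert k) := by omega
    obtain ⟨t, rfl⟩ : ∃ t, k = t + 5 := ⟨k - 5, by omega⟩
    have hE3 : 2 * (TriGrid (t+5)).edgeFinset.card = 3*(t*t) + 27*t + 60 := by
      rw [hE2]
      have h1 : (t+5) - 1 = t + 4 := by omega
      rw [h1]; ring
    have hV3 : 2 * Fintype.card (TriGridVert (t+5)) = t*t + 11*t + 30 := by
      rw [hV]; ring
    clear hE2 hV h30
    generalize t*t = T at hE3 hV3
    omega

end
end

section
/- Let G and H be cyclically orderable graphs with |V(G)| = |V(H)| and |E(G)| = |E(H)|. Then every series composition G ⊕ H is cyclically orderable. -/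
open scoped Classical

noncomputable section

/-- The series composition (1-sum) `G ⊕ H` of `G` and `H`, obtained from disjoint
copies of `G` and `H` by identifying `u ∈ V(G)` and `v ∈ V(H)` as a single vertex:
the merged vertex is represented by `Sum.inl u`, and the remaining vertices of `H`
by `Sum.inr`. -/
def SimpleGraph.oneSum {α β : Type} (G : SimpleGraph α) (H : SimpleGraph β)
    (u : α) (v : β) : SimpleGraph (α ⊕ {b : β // b ≠ v}) :=
  SimpleGraph.fromRel fun x y =>
    match x, y with
    | Sum.inl a, Sum.inl a' => G.Adj a a'
    | Sum.inr b, Sum.inr b' => H.Adj b.1 b'.1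
    | Sum.inl a, Sum.inr b => a = u ∧ H.Adj v b.1
    | Sum.inr b, Sum.inl a => a = u ∧ H.Adj b.1 v

section AuxOS

open SimpleGraph

variable {α β : Type}

/-- The canonical injection of `β` into the vertex set of the one-sum. -/
def osVmap (u : α) (v : β) (b : β) : α ⊕ {b : β // b ≠ v} :=
  if h : b = v then Sum.inl u else Sum.inr ⟨b, h⟩

lemma osVmap_v (u : α) (v : β) : osVmap u v v = Sum.inl u := dif_pos rfl

lemma osVmap_ne (u : α) (v : β) (b : {b : β // b ≠ v}) : osVmap u v b.1 = Sum.inr b := by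
  rw [osVmap, dif_neg b.2]

lemma osVmap_inj (u : α) (v : β) : Function.Injective (osVmap u v) := by
  intro b b' h
  by_cases h1 : b = v <;> by_cases h2 : b' = v <;>
    simp [osVmap, h1, h2] at h <;> simp [h1, h2, h]

variable {A : SimpleGraph α} {B : SimpleGraph β} {u : α} {v : β}

lemma oneSum_adj_ll {a a' : α} :
    (A.oneSum B u v).Adj (Sum.inl a) (Sum.inl a') ↔ A.Adj a a' := by
  rw [SimpleGraph.oneSum, SimpleGraph.fromRel_adj]
  constructor
  · rintro ⟨hne, h | h⟩
    · exact h
    · exact h.symm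
  · intro h
    exact ⟨fun hh => h.ne (Sum.inl.inj hh), Or.inl h⟩

lemma oneSum_adj_rr {b b' : {b : β // b ≠ v}} :
    (A.oneSum B u v).Adj (Sum.inr b) (Sum.inr b') ↔ B.Adj b.1 b'.1 := by
  rw [SimpleGraph.oneSum, SimpleGraph.fromRel_adj]
  constructor
  · rintro ⟨hne, h | h⟩
    · exact h
    · exact h.symm
  · intro h
    exact ⟨fun hh => h.ne (congrArg Subtype.val (Sum.inr.inj hh)), Or.inl h⟩

lemma oneSum_adj_lr {a : α} {b : {b : β // b ≠ v}} :
    (A.oneSum B u v).Adj (Sum.inl a) (Sum.inr b) ↔ a = u ∧ B.Adj v b.1 := by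
  rw [SimpleGraph.oneSum, SimpleGraph.fromRel_adj]
  constructor
  · rintro ⟨hne, ⟨ha, h⟩ | ⟨ha, h⟩⟩
    · exact ⟨ha, h⟩
    · exact ⟨ha, h.symm⟩
  · rintro ⟨ha, h⟩
    exact ⟨by simp, Or.inl ⟨ha, h⟩⟩

lemma osVmap_adj {x y : β} (h : B.Adj x y) :
    (A.oneSum B u v).Adj (osVmap u v x) (osVmap u v y) := by
  by_cases hx : x = v <;> by_cases hy : y = v
  · exact absurd (hx.trans hy.symm) h.ne
  · rw [hx, osVmap_v, show osVmap u v y = Sum.inr ⟨y, hy⟩ from dif_neg hy]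
    exact oneSum_adj_lr.mpr ⟨rfl, hx ▸ h⟩
  · rw [hy, osVmap_v, show osVmap u v x = Sum.inr ⟨x, hx⟩ from dif_neg hx]
    exact (oneSum_adj_lr.mpr ⟨rfl, hy ▸ h.symm⟩).symm
  · rw [show osVmap u v x = Sum.inr ⟨x, hx⟩ from dif_neg hx,
      show osVmap u v y = Sum.inr ⟨y, hy⟩ from dif_neg hy]
    exact oneSum_adj_rr.mpr h

lemma mem_os_left {s : Sym2 α} (hs : s ∈ A.edgeSet) :
    Sym2.map Sum.inl s ∈ (A.oneSum B u v).edgeSet := by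
  revert hs
  refine Sym2.ind (fun x y => ?_) s
  intro hs
  rw [Sym2.map_pair_eq, SimpleGraph.mem_edgeSet]
  exact oneSum_adj_ll.mpr hs

lemma mem_os_right {s : Sym2 β} (hs : s ∈ B.edgeSet) :
    Sym2.map (osVmap u v) s ∈ (A.oneSum B u v).edgeSet := by
  revert hs
  refine Sym2.ind (fun x y => ?_) s
  intro hs
  rw [Sym2.map_pair_eq, SimpleGraph.mem_edgeSet]
  exact osVmap_adj hs

lemma os_edge_cases {s : Sym2 (α ⊕ {b : β // b ≠ v})} (hs : s ∈ (A.oneSum B u v).edgeSet) :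
    (∃ t ∈ A.edgeSet, Sym2.map Sum.inl t = s) ∨
      (∃ t ∈ B.edgeSet, Sym2.map (osVmap u v) t = s) := by
  revert hs
  refine Sym2.ind (fun x y => ?_) s
  intro hs
  rw [SimpleGraph.mem_edgeSet] at hs
  cases x with
  | inl a =>
    cases y with
    | inl a' =>
      exact Or.inl ⟨s(a, a'), oneSum_adj_ll.mp hs, Sym2.map_pair_eq _ _ _⟩
    | inr b =>
      obtain ⟨rfl, hadj⟩ := oneSum_adj_lr.mp hs
      refine Or.inr ⟨s(v, b.1), hadj, ?_⟩
      rw [Sym2.map_pair_eq, osVmap_v, osVmap_ne]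
  | inr b =>
    cases y with
    | inl a =>
      obtain ⟨rfl, hadj⟩ := oneSum_adj_lr.mp hs.symm
      refine Or.inr ⟨s(b.1, v), hadj.symm, ?_⟩
      rw [Sym2.map_pair_eq, osVmap_v, osVmap_ne]
    | inr b' =>
      refine Or.inr ⟨s(b.1, b'.1), oneSum_adj_rr.mp hs, ?_⟩
      rw [Sym2.map_pair_eq, osVmap_ne, osVmap_ne]

lemma sym2_map_inj {γ δ : Type*} {f : γ → δ} (hf : Function.Injective f) :
    Function.Injective (Sym2.map f) := by
  intro s t h
  induction s using Sym2.ind with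
  | _ x y =>
    induction t using Sym2.ind with
    | _ x' y' =>
      rw [Sym2.map_pair_eq, Sym2.map_pair_eq, Sym2.eq_iff] at h
      rcases h with ⟨h1, h2⟩ | ⟨h1, h2⟩
      · rw [Sym2.eq_iff]; exact Or.inl ⟨hf h1, hf h2⟩
      · rw [Sym2.eq_iff]; exact Or.inr ⟨hf h1, hf h2⟩

lemma os_maps_ne {t : Sym2 α} {t' : Sym2 β} (ht' : t' ∈ B.edgeSet) :
    Sym2.map (Sum.inl : α → α ⊕ {b : β // b ≠ v}) t ≠ Sym2.map (osVmap u v) t' := by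
  revert ht'
  refine Sym2.ind (fun x y => ?_) t'
  intro ht' heq
  rw [SimpleGraph.mem_edgeSet] at ht'
  have hxy : ¬(x = v ∧ y = v) := by
    rintro ⟨rfl, rfl⟩; exact ht'.ne rfl
  have hmem : ∃ c, c ∈ Sym2.map (osVmap u v) s(x, y) ∧ ∀ a : α, c ≠ Sum.inl a := by
    by_cases hx : x = v
    · have hy : y ≠ v := fun hy => hxy ⟨hx, hy⟩
      refine ⟨Sum.inr ⟨y, hy⟩, ?_, by simp⟩
      rw [Sym2.map_pair_eq, show osVmap u v y = Sum.inr ⟨y, hy⟩ from dif_neg hy]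
      simp
    · refine ⟨Sum.inr ⟨x, hx⟩, ?_, by simp⟩
      rw [Sym2.map_pair_eq, show osVmap u v x = Sum.inr ⟨x, hx⟩ from dif_neg hx]
      simp
  obtain ⟨c, hc, hcl⟩ := hmem
  rw [← heq] at hc
  obtain ⟨a, _, ha⟩ := Sym2.mem_map.mp hc
  exact hcl a ha.symm

/-- The edge sets of `A`, `B` biject with the edge set of the one-sum. -/
def osEdgeEquiv (A : SimpleGraph α) (B : SimpleGraph β) (u : α) (v : β) :
    (A.edgeSet ⊕ B.edgeSet) ≃ (A.oneSum B u v).edgeSet :=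
  Equiv.ofBijective
    (fun e => match e with
      | Sum.inl e => ⟨Sym2.map Sum.inl e.1, mem_os_left e.2⟩
      | Sum.inr e => ⟨Sym2.map (osVmap u v) e.1, mem_os_right e.2⟩)
    (by
      constructor
      · rintro (e | e) (e' | e') h
        · rw [Subtype.mk.injEq] at h
          rw [Sum.inl.injEq]
          exact Subtype.ext (sym2_map_inj Sum.inl_injective h)
        · exact absurd (congrArg Subtype.val h) (os_maps_ne e'.2)
        · exact absurd (congrArg Subtype.val h).symm (os_maps_ne e.2)
        · rw [Subtype.mk.injEq] at h
          rw [Sum.inr.injEq]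
          exact Subtype.ext (sym2_map_inj (osVmap_inj u v) h)
      · rintro ⟨s, hs⟩
        rcases os_edge_cases hs with ⟨t, ht, hmap⟩ | ⟨t, ht, hmap⟩
        · exact ⟨Sum.inl ⟨t, ht⟩, Subtype.ext hmap⟩
        · exact ⟨Sum.inr ⟨t, ht⟩, Subtype.ext hmap⟩)

lemma osEdgeEquiv_inl (A : SimpleGraph α) (B : SimpleGraph β) (u : α) (v : β) (e : A.edgeSet) :
    (osEdgeEquiv A B u v (Sum.inl e) : Sym2 (α ⊕ {b : β // b ≠ v})) = Sym2.map Sum.inl e.1 :=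
  rfl

lemma osEdgeEquiv_inr (A : SimpleGraph α) (B : SimpleGraph β) (u : α) (v : β) (e : B.edgeSet) :
    (osEdgeEquiv A B u v (Sum.inr e) : Sym2 (α ⊕ {b : β // b ≠ v})) = Sym2.map (osVmap u v) e.1 :=
  rfl

lemma os_edge_card [Fintype α] [Fintype β] (A : SimpleGraph α) (B : SimpleGraph β)
    (u : α) (v : β) :
    (A.oneSum B u v).edgeFinset.card = A.edgeFinset.card + B.edgeFinset.card := by
  rw [SimpleGraph.edgeFinset_card, SimpleGraph.edgeFinset_card, SimpleGraph.edgeFinset_card,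
    ← Fintype.card_congr (osEdgeEquiv A B u v), Fintype.card_sum]

lemma os_vcard [Fintype α] [Fintype β] (v : β) :
    Fintype.card (α ⊕ {b : β // b ≠ v}) = Fintype.card α + (Fintype.card β - 1) := by
  rw [Fintype.card_sum]
  congr 1
  have h1 : Fintype.card {b : β // ¬ b = v} = Fintype.card β - Fintype.card {b : β // b = v} :=
    Fintype.card_subtype_compl _
  rw [Fintype.card_subtype_eq] at h1
  exact h1

end AuxOS

section AuxTree

open SimpleGraph

variable {V W : Type}

/-- Contract a walk along a vertex map, skipping edges that collapse. -/
def contractWalk {G : SimpleGraph V} {A : SimpleGraph W} (π : V → W)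
    (hπ : ∀ ⦃x z : V⦄, G.Adj x z → π x ≠ π z → A.Adj (π x) (π z)) :
    ∀ {x y : V}, G.Walk x y → A.Walk (π x) (π y)
  | _, _, SimpleGraph.Walk.nil => SimpleGraph.Walk.nil
  | x, _, SimpleGraph.Walk.cons (v := z) h p =>
    if hxz : π x = π z then (contractWalk π hπ p).copy hxz.symm rfl
    else SimpleGraph.Walk.cons (hπ h hxz) (contractWalk π hπ p)

lemma contractWalk_edges {G : SimpleGraph V} {A : SimpleGraph W} (π : V → W) (g : W → V)
    (hπ : ∀ ⦃x z : V⦄, G.Adj x z → π x ≠ π z → A.Adj (π x) (π z))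
    (hg : ∀ ⦃x z : V⦄, G.Adj x z → π x ≠ π z → x = g (π x) ∧ z = g (π z)) :
    ∀ {x y : V} (p : G.Walk x y) (e : Sym2 W),
      e ∈ (contractWalk π hπ p).edges → Sym2.map g e ∈ p.edges := by
  intro x y p
  induction p with
  | nil =>
    intro e he
    simp only [contractWalk, SimpleGraph.Walk.edges_nil, List.not_mem_nil] at he
  | @cons x z y h p ih =>
    intro e he
    simp only [contractWalk] at he
    rw [SimpleGraph.Walk.edges_cons]
    split_ifs at he with hxz
    · rw [SimpleGraph.Walk.edges_copy] at he
      exact List.mem_cons_of_mem _ (ih e he)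
    · rw [SimpleGraph.Walk.edges_cons] at he
      rcases List.mem_cons.mp he with rfl | he'
      · obtain ⟨hx, hz⟩ := hg h hxz
        rw [Sym2.map_pair_eq, ← hx, ← hz]
        exact List.mem_cons_self
      · exact List.mem_cons_of_mem _ (ih e he')

end AuxTree

section AuxGlue

open SimpleGraph

variable {α β : Type} {A : SimpleGraph α} {B : SimpleGraph β} {u : α} {v : β}

theorem os_isTree (hA : A.IsTree) (hB : B.IsTree) : (A.oneSum B u v).IsTree := by
  constructor
  · -- connectivity
    have hreach : ∀ x, (A.oneSum B u v).Reachable x (Sum.inl u) := by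
      intro x
      cases x with
      | inl a =>
        exact (hA.isConnected.preconnected a u).map
          (⟨Sum.inl, fun h => oneSum_adj_ll.mpr h⟩ : A →g (A.oneSum B u v))
      | inr b =>
        have h2 : (A.oneSum B u v).Reachable (osVmap u v b.1) (osVmap u v v) :=
          (hB.isConnected.preconnected b.1 v).map
            (⟨osVmap u v, fun h => osVmap_adj h⟩ : B →g (A.oneSum B u v))
        rwa [osVmap_ne, osVmap_v] at h2
    haveI : Nonempty (α ⊕ {b : β // b ≠ v}) := ⟨Sum.inl u⟩
    exact SimpleGraph.Connected.mk fun x y => (hreach x).trans (hreach y).symm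
  · -- acyclicity
    rw [isAcyclic_iff_forall_adj_isBridge]
    intro x y hxy
    rw [isBridge_iff_adj_and_forall_walk_mem_edges]
    intro p
    -- left projection
    have hπA : ∀ ⦃x z : α ⊕ {b : β // b ≠ v}⦄, (A.oneSum B u v).Adj x z →
        Sum.elim id (fun _ => u) x ≠ Sum.elim id (fun _ => u) z →
        A.Adj (Sum.elim id (fun _ => u) x) (Sum.elim id (fun _ => u) z) := by
      rintro (a | b) (a' | b') hadj hne
      · exact oneSum_adj_ll.mp hadj
      · exact absurd (oneSum_adj_lr.mp hadj).1 hne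
      · exact absurd (oneSum_adj_lr.mp hadj.symm).1 (fun hh => hne hh.symm)
      · exact absurd rfl hne
    have hgA : ∀ ⦃x z : α ⊕ {b : β // b ≠ v}⦄, (A.oneSum B u v).Adj x z →
        Sum.elim id (fun _ => u) x ≠ Sum.elim id (fun _ => u) z →
        x = Sum.inl (Sum.elim id (fun _ => u) x) ∧ z = Sum.inl (Sum.elim id (fun _ => u) z) := by
      rintro (a | b) (a' | b') hadj hne
      · exact ⟨rfl, rfl⟩
      · exact absurd (oneSum_adj_lr.mp hadj).1 hne
      · exact absurd (oneSum_adj_lr.mp hadj.symm).1 (fun hh => hne hh.symm)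
      · exact absurd rfl hne
    -- right projection
    have hπB : ∀ ⦃x z : α ⊕ {b : β // b ≠ v}⦄, (A.oneSum B u v).Adj x z →
        Sum.elim (fun _ => v) Subtype.val x ≠ Sum.elim (fun _ => v) Subtype.val z →
        B.Adj (Sum.elim (fun _ => v) Subtype.val x) (Sum.elim (fun _ => v) Subtype.val z) := by
      rintro (a | b) (a' | b') hadj hne
      · exact absurd rfl hne
      · exact (oneSum_adj_lr.mp hadj).2
      · exact (oneSum_adj_lr.mp hadj.symm).2.symm
      · exact oneSum_adj_rr.mp hadj
    have hgB : ∀ ⦃x z : α ⊕ {b : β // b ≠ v}⦄, (A.oneSum B u v).Adj x z →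
        Sum.elim (fun _ => v) Subtype.val x ≠ Sum.elim (fun _ => v) Subtype.val z →
        x = osVmap u v (Sum.elim (fun _ => v) Subtype.val x) ∧
          z = osVmap u v (Sum.elim (fun _ => v) Subtype.val z) := by
      rintro (a | b) (a' | b') hadj hne
      · exact absurd rfl hne
      · refine ⟨?_, (osVmap_ne u v b').symm⟩
        rw [Sum.elim_inl, osVmap_v, (oneSum_adj_lr.mp hadj).1]
      · refine ⟨(osVmap_ne u v b).symm, ?_⟩
        rw [Sum.elim_inl, osVmap_v, (oneSum_adj_lr.mp hadj.symm).1]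
      · exact ⟨(osVmap_ne u v b).symm, (osVmap_ne u v b').symm⟩
    have hbrA := isAcyclic_iff_forall_adj_isBridge.mp hA.IsAcyclic
    have hbrB := isAcyclic_iff_forall_adj_isBridge.mp hB.IsAcyclic
    cases x with
    | inl a =>
      cases y with
      | inl a' =>
        have hadj : A.Adj a a' := oneSum_adj_ll.mp hxy
        have hbr := isBridge_iff_adj_and_forall_walk_mem_edges.mp (hbrA hadj)
        have hmem := hbr (contractWalk _ hπA p)
        have := contractWalk_edges _ Sum.inl hπA hgA p s(a, a') hmem
        rwa [Sym2.map_pair_eq] at this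
      | inr b =>
        obtain ⟨ha, hadj⟩ := oneSum_adj_lr.mp hxy
        rw [show s(Sum.inl a, (Sum.inr b : α ⊕ {b : β // b ≠ v})) = s(Sum.inl u, Sum.inr b) from
          by rw [ha]]
        have hbr := isBridge_iff_adj_and_forall_walk_mem_edges.mp (hbrB hadj)
        have hmem := hbr (contractWalk _ hπB p)
        have := contractWalk_edges _ (osVmap u v) hπB hgB p s(v, b.1) hmem
        rwa [Sym2.map_pair_eq, osVmap_v, osVmap_ne] at this
    | inr b =>
      cases y with
      | inl a =>
        obtain ⟨ha, hadj⟩ := oneSum_adj_lr.mp hxy.symm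
        rw [show s((Sum.inr b : α ⊕ {b : β // b ≠ v}), Sum.inl a) = s(Sum.inr b, Sum.inl u) from
          by rw [ha]]
        have hbr := isBridge_iff_adj_and_forall_walk_mem_edges.mp (hbrB hadj.symm)
        have hmem := hbr (contractWalk _ hπB p)
        have := contractWalk_edges _ (osVmap u v) hπB hgB p s(b.1, v) hmem
        rwa [Sym2.map_pair_eq, osVmap_v, osVmap_ne] at this
      | inr b' =>
        have hadj : B.Adj b.1 b'.1 := oneSum_adj_rr.mp hxy
        have hbr := isBridge_iff_adj_and_forall_walk_mem_edges.mp (hbrB hadj)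
        have hmem := hbr (contractWalk _ hπB p)
        have := contractWalk_edges _ (osVmap u v) hπB hgB p s(b.1, b'.1) hmem
        rwa [Sym2.map_pair_eq, osVmap_ne, osVmap_ne] at this

end AuxGlue

section AuxArith

lemma os_arith_even (m n i : ℕ) (hm : 0 < m) (k : ℕ) :
    (∃ j, j < 2 * n ∧ 2 * k = (i + j) % (m + m)) ↔
      ∃ j', j' < n ∧ k = ((i + 1) / 2 + j') % m := by
  have h2m : m + m = 2 * m := by omega
  constructor
  · rintro ⟨j, hj, hk⟩
    have hpar : (i + j) % 2 = 0 := by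
      have h1 : (i + j) % (m + m) % 2 = (i + j) % 2 := by
        rw [h2m]; exact Nat.mod_mod_of_dvd _ ⟨m, rfl⟩
      omega
    have h2t : 2 * ((i + j) / 2) = i + j := by omega
    have hkt : k = ((i + j) / 2) % m := by
      rw [← h2t, h2m, Nat.mul_mod_mul_left] at hk; omega
    refine ⟨(i + j) / 2 - (i + 1) / 2, by omega, ?_⟩
    rw [hkt]
    congr 1
    omega
  · rintro ⟨j', hj', hk⟩
    refine ⟨2 * j' + i % 2, by omega, ?_⟩
    have h2 : i + (2 * j' + i % 2) = 2 * ((i + 1) / 2 + j') := by omega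
    rw [h2, h2m, Nat.mul_mod_mul_left, hk]

lemma os_arith_odd (m n i : ℕ) (hm : 0 < m) (k : ℕ) :
    (∃ j, j < 2 * n ∧ 2 * k + 1 = (i + j) % (m + m)) ↔
      ∃ j', j' < n ∧ k = (i / 2 + j') % m := by
  have h2m : m + m = 2 * m := by omega
  have hodd : ∀ t, (2 * t + 1) % (2 * m) = 2 * (t % m) + 1 := by
    intro t
    have hdm := Nat.div_add_mod t m
    have hlt := Nat.mod_lt t hm
    have h1 : 2 * t + 1 = 2 * (m * (t / m)) + (2 * (t % m) + 1) := by omega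
    rw [h1, ← Nat.mul_assoc, Nat.mul_add_mod]
    exact Nat.mod_eq_of_lt (by omega)
  constructor
  · rintro ⟨j, hj, hk⟩
    have hpar : (i + j) % 2 = 1 := by
      have h1 : (i + j) % (m + m) % 2 = (i + j) % 2 := by
        rw [h2m]; exact Nat.mod_mod_of_dvd _ ⟨m, rfl⟩
      omega
    have h2t : 2 * ((i + j) / 2) + 1 = i + j := by omega
    have hkt : k = ((i + j) / 2) % m := by
      rw [← h2t, h2m, hodd] at hk; omega
    refine ⟨(i + j) / 2 - i / 2, by omega, ?_⟩
    rw [hkt]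
    congr 1
    omega
  · rintro ⟨j', hj', hk⟩
    refine ⟨2 * j' + (1 - i % 2), by omega, ?_⟩
    have h2 : i + (2 * j' + (1 - i % 2)) = 2 * (i / 2 + j') + 1 := by omega
    rw [h2, h2m, hodd, hk]

/-- Interleaving equivalence `Fin m ⊕ Fin m ≃ Fin (m + m)`. -/
def osInterleave (m : ℕ) : (Fin m ⊕ Fin m) ≃ Fin (m + m) where
  toFun := Sum.elim (fun k => ⟨2 * k.1, by omega⟩) (fun k => ⟨2 * k.1 + 1, by omega⟩)
  invFun j :=
    if j.1 % 2 = 0 then Sum.inl ⟨j.1 / 2, by omega⟩ else Sum.inr ⟨j.1 / 2, by omega⟩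
  left_inv := by
    rintro (⟨k, hk⟩ | ⟨k, hk⟩) <;> simp only [Sum.elim_inl, Sum.elim_inr]
    · simp only [show 2 * k % 2 = 0 by omega, ↓reduceIte]
      simp only [Sum.inl.injEq, Fin.mk.injEq]
      omega
    · simp only [show ¬((2 * k + 1) % 2 = 0) by omega, ↓reduceIte]
      simp only [Sum.inr.injEq, Fin.mk.injEq]
      omega
  right_inv := by
    rintro ⟨j, hj⟩
    dsimp only
    by_cases h : j % 2 = 0
    · rw [if_pos h]
      simp only [Sum.elim_inl, Fin.mk.injEq]
      omega
    · rw [if_neg h]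
      simp only [Sum.elim_inr, Fin.mk.injEq]
      omega

lemma osInterleave_inl (m : ℕ) (k : Fin m) : (osInterleave m (Sum.inl k) : ℕ) = 2 * k.1 := rfl

lemma osInterleave_inr (m : ℕ) (k : Fin m) :
    (osInterleave m (Sum.inr k) : ℕ) = 2 * k.1 + 1 := rfl

end AuxArith

section AuxWindow

open SimpleGraph

variable {α β : Type} (A : SimpleGraph α) (B : SimpleGraph β) (u : α) (v : β)

lemma os_window_eq (PW : (A.oneSum B u v).edgeSet → Prop) (PA : A.edgeSet → Prop)
    (PB : B.edgeSet → Prop)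
    (hcompA : ∀ e : A.edgeSet, PW (osEdgeEquiv A B u v (Sum.inl e)) ↔ PA e)
    (hcompB : ∀ e : B.edgeSet, PW (osEdgeEquiv A B u v (Sum.inr e)) ↔ PB e) :
    SimpleGraph.fromEdgeSet
        {s : Sym2 (α ⊕ {b : β // b ≠ v}) |
          ∃ e : (A.oneSum B u v).edgeSet, (e : Sym2 (α ⊕ {b : β // b ≠ v})) = s ∧ PW e}
      = (SimpleGraph.fromEdgeSet {s : Sym2 α | ∃ e : A.edgeSet, (e : Sym2 α) = s ∧ PA e}).oneSum
          (SimpleGraph.fromEdgeSet {s : Sym2 β | ∃ e : B.edgeSet, (e : Sym2 β) = s ∧ PB e})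
          u v := by
  set WL := SimpleGraph.fromEdgeSet
      {s : Sym2 (α ⊕ {b : β // b ≠ v}) |
        ∃ e : (A.oneSum B u v).edgeSet, (e : Sym2 (α ⊕ {b : β // b ≠ v})) = s ∧ PW e} with hWL
  set WR := (SimpleGraph.fromEdgeSet
        {s : Sym2 α | ∃ e : A.edgeSet, (e : Sym2 α) = s ∧ PA e}).oneSum
      (SimpleGraph.fromEdgeSet {s : Sym2 β | ∃ e : B.edgeSet, (e : Sym2 β) = s ∧ PB e})
      u v with hWR
  have hlr : ∀ (a : α) (b : {b : β // b ≠ v}),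
      WL.Adj (Sum.inl a) (Sum.inr b) ↔ WR.Adj (Sum.inl a) (Sum.inr b) := by
    intro a b
    rw [hWL, hWR, SimpleGraph.fromEdgeSet_adj, oneSum_adj_lr, SimpleGraph.fromEdgeSet_adj]
    constructor
    · rintro ⟨⟨e, he, hP⟩, hne⟩
      have hadj' : (A.oneSum B u v).Adj (Sum.inl a) (Sum.inr b) :=
        (SimpleGraph.mem_edgeSet _).mp (he ▸ e.2)
      obtain ⟨ha, hadj⟩ := oneSum_adj_lr.mp hadj'
      have hee : e = osEdgeEquiv A B u v (Sum.inr ⟨s(v, b.1), hadj⟩) := by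
        refine Subtype.ext ?_
        rw [he, osEdgeEquiv_inr, Sym2.map_pair_eq, osVmap_v, osVmap_ne, ha]
      exact ⟨ha, ⟨⟨s(v, b.1), hadj⟩, rfl, (hcompB _).mp (hee ▸ hP)⟩, hadj.ne⟩
    · rintro ⟨ha, ⟨e, he, hPB'⟩, hne⟩
      have hadj : B.Adj v b.1 := (SimpleGraph.mem_edgeSet _).mp (he ▸ e.2)
      refine ⟨⟨osEdgeEquiv A B u v (Sum.inr e), ?_, (hcompB e).mpr hPB'⟩, by simp⟩
      rw [osEdgeEquiv_inr, he, Sym2.map_pair_eq, osVmap_v, osVmap_ne, ha]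
  have hll : ∀ a a' : α, WL.Adj (Sum.inl a) (Sum.inl a') ↔ WR.Adj (Sum.inl a) (Sum.inl a') := by
    intro a a'
    rw [hWL, hWR, SimpleGraph.fromEdgeSet_adj, oneSum_adj_ll, SimpleGraph.fromEdgeSet_adj]
    constructor
    · rintro ⟨⟨e, he, hP⟩, hne⟩
      have hadj : A.Adj a a' := oneSum_adj_ll.mp ((SimpleGraph.mem_edgeSet _).mp (he ▸ e.2))
      have hee : e = osEdgeEquiv A B u v (Sum.inl ⟨s(a, a'), hadj⟩) := by
        refine Subtype.ext ?_
        rw [he, osEdgeEquiv_inl, Sym2.map_pair_eq]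
      exact ⟨⟨⟨s(a, a'), hadj⟩, rfl, (hcompA _).mp (hee ▸ hP)⟩, hadj.ne⟩
    · rintro ⟨⟨e, he, hPA'⟩, hne⟩
      refine ⟨⟨osEdgeEquiv A B u v (Sum.inl e), ?_, (hcompA e).mpr hPA'⟩, by simp [hne]⟩
      rw [osEdgeEquiv_inl, he, Sym2.map_pair_eq]
  have hrr : ∀ b b' : {b : β // b ≠ v},
      WL.Adj (Sum.inr b) (Sum.inr b') ↔ WR.Adj (Sum.inr b) (Sum.inr b') := by
    intro b b'
    rw [hWL, hWR, SimpleGraph.fromEdgeSet_adj, oneSum_adj_rr, SimpleGraph.fromEdgeSet_adj]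
    constructor
    · rintro ⟨⟨e, he, hP⟩, hne⟩
      have hadj : B.Adj b.1 b'.1 := oneSum_adj_rr.mp ((SimpleGraph.mem_edgeSet _).mp (he ▸ e.2))
      have hee : e = osEdgeEquiv A B u v (Sum.inr ⟨s(b.1, b'.1), hadj⟩) := by
        refine Subtype.ext ?_
        rw [he, osEdgeEquiv_inr, Sym2.map_pair_eq, osVmap_ne, osVmap_ne]
      exact ⟨⟨⟨s(b.1, b'.1), hadj⟩, rfl, (hcompB _).mp (hee ▸ hP)⟩, hadj.ne⟩
    · rintro ⟨⟨e, he, hPB'⟩, hne⟩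
      refine ⟨⟨osEdgeEquiv A B u v (Sum.inr e), ?_, (hcompB e).mpr hPB'⟩, ?_⟩
      · rw [osEdgeEquiv_inr, he, Sym2.map_pair_eq, osVmap_ne, osVmap_ne]
      · intro hc
        exact hne (congrArg Subtype.val (Sum.inr.inj hc))
  ext x y
  cases x with
  | inl a =>
    cases y with
    | inl a' => exact hll a a'
    | inr b => exact hlr a b
  | inr b =>
    cases y with
    | inl a => exact (WL.adj_comm _ _).trans ((hlr a b).trans (WR.adj_comm _ _))
    | inr b' => exact hrr b b'

end AuxWindow

/-- If `G` and `H` are cyclically orderable graphs with `|V(G)| = |V(H)|` and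
`|E(G)| = |E(H)|`, then every series composition `G ⊕ H` is cyclically orderable. -/
theorem oneSum_cyclicallyOrderable {α β : Type} [Fintype α] [Fintype β]
    (G : SimpleGraph α) (H : SimpleGraph β) (u : α) (v : β)
    (hG : G.CyclicallyOrderable) (hH : H.CyclicallyOrderable)
    (hV : Fintype.card α = Fintype.card β)
    (hE : G.edgeFinset.card = H.edgeFinset.card) :
    (G.oneSum H u v).CyclicallyOrderable := by
  obtain ⟨OG, hOG⟩ := hG
  obtain ⟨OH, hOH⟩ := hH
  have hmH : H.edgeFinset.card = G.edgeFinset.card := hE.symm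
  have hcard : (G.oneSum H u v).edgeFinset.card = G.edgeFinset.card + G.edgeFinset.card := by
    rw [os_edge_card, hE]
  suffices hgen : ∀ O : (G.oneSum H u v).edgeSet ≃ Fin (G.oneSum H u v).edgeFinset.card,
      (∀ e : G.edgeSet, (O (osEdgeEquiv G H u v (Sum.inl e)) : ℕ) = 2 * (OG e : ℕ)) →
      (∀ e : H.edgeSet, (O (osEdgeEquiv G H u v (Sum.inr e)) : ℕ) = 2 * (OH e : ℕ) + 1) →
      (G.oneSum H u v).IsCBO O by
    refine ⟨(osEdgeEquiv G H u v).symm.trans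
      ((Equiv.sumCongr OG (OH.trans (finCongr hmH))).trans
        ((osInterleave G.edgeFinset.card).trans (finCongr hcard.symm))), hgen _ ?_ ?_⟩
    · intro e
      simp only [Equiv.trans_apply, Equiv.symm_apply_apply, Equiv.sumCongr_apply, Sum.map_inl,
        finCongr_apply, Fin.coe_cast, osInterleave_inl]
    · intro e
      simp only [Equiv.trans_apply, Equiv.symm_apply_apply, Equiv.sumCongr_apply, Sum.map_inr,
        finCongr_apply, Fin.coe_cast, osInterleave_inr]
  intro O hOl hOr
  unfold SimpleGraph.IsCBO
  intro i
  have hTA := hOG ((i + 1) / 2)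
  have hTB := hOH (i / 2)
  have hα : 0 < Fintype.card α := Fintype.card_pos_iff.mpr hTA.isConnected.nonempty
  have hβ : 0 < Fintype.card β := Fintype.card_pos_iff.mpr hTB.isConnected.nonempty
  have hVc : Fintype.card (α ⊕ {b : β // b ≠ v}) - 1 = 2 * (Fintype.card α - 1) := by
    rw [os_vcard]
    omega
  have hcompA : ∀ e : G.edgeSet,
      (∃ j < Fintype.card (α ⊕ {b : β // b ≠ v}) - 1,
        (O (osEdgeEquiv G H u v (Sum.inl e)) : ℕ)
          = (i + j) % (G.oneSum H u v).edgeFinset.card) ↔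
      ∃ j < Fintype.card α - 1, (OG e : ℕ) = ((i + 1) / 2 + j) % G.edgeFinset.card := by
    intro e
    have hm : 0 < G.edgeFinset.card := (Nat.zero_le _).trans_lt (OG e).isLt
    rw [hOl e, hcard, hVc]
    exact os_arith_even _ _ i hm _
  have hcompB : ∀ e : H.edgeSet,
      (∃ j < Fintype.card (α ⊕ {b : β // b ≠ v}) - 1,
        (O (osEdgeEquiv G H u v (Sum.inr e)) : ℕ)
          = (i + j) % (G.oneSum H u v).edgeFinset.card) ↔
      ∃ j < Fintype.card β - 1, (OH e : ℕ) = (i / 2 + j) % H.edgeFinset.card := by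
    intro e
    have hm : 0 < H.edgeFinset.card := (Nat.zero_le _).trans_lt (OH e).isLt
    rw [hOr e, hcard, hVc, ← hV, hE]
    exact os_arith_odd _ _ i hm _
  rw [os_window_eq G H u v _ _ _ hcompA hcompB]
  exact os_isTree hTA hTB

end
end

section
/- Let t ≥ 2 be an integer and let G_1, G_2, …, G_t be cyclically orderable graphs with |V(G_1)| = |V(G_2)| = ⋯ = |V(G_t)| and |E(G_1)| = |E(G_2)| = ⋯ = |E(G_t)|. Then any iterated series composition G_1 ⊕ G_2 ⊕ ⋯ ⊕ G_t is cyclically orderable. -/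
open scoped Classical

noncomputable section

/-- A graph bundled with a finite vertex type. -/
structure FinGraph : Type 1 where
  V : Type
  [instFin : Fintype V]
  G : SimpleGraph V

attribute [instance] FinGraph.instFin

/-- The number of vertices of a bundled finite graph. -/
def FinGraph.vertCount (A : FinGraph) : ℕ := Fintype.card A.V

/-- The number of edges of a bundled finite graph. -/
noncomputable def FinGraph.edgeCount (A : FinGraph) : ℕ := A.G.edgeFinset.card

/-- A bundled finite graph is cyclically orderable if its underlying graph is. -/
def FinGraph.CyclicallyOrderable (A : FinGraph) : Prop := A.G.CyclicallyOrderable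

/-- The series composition of bundled finite graphs. -/
noncomputable def FinGraph.oneSum (A B : FinGraph) (u : A.V) (v : B.V) : FinGraph :=
  { V := A.V ⊕ {b : B.V // b ≠ v}, G := A.G.oneSum B.G u v }

/-- `IsIterSC Gs R` means that `R` is an iterated series composition
`G₁ ⊕ G₂ ⊕ ⋯ ⊕ Gₜ` of the list of graphs `Gs = [G₁, …, Gₜ]`, glued successively
(at arbitrarily chosen pairs of vertices). -/
inductive IsIterSC : List FinGraph → FinGraph → Prop
  | single (A : FinGraph) : IsIterSC [A] A
  | step {Gs : List FinGraph} {A : FinGraph} (h : IsIterSC Gs A)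
      (B : FinGraph) (u : A.V) (v : B.V) :
      IsIterSC (Gs ++ [B]) (A.oneSum B u v)

namespace CBOAux

open SimpleGraph

/-! ### Cyclic-interval arithmetic -/

/-- cyclic distance from `i` to `p` modulo `T` -/
def cdist (T i p : ℕ) : ℕ := (p + (T - i % T)) % T

lemma cdist_eq_of {T i p j : ℕ} (hT : 0 < T) (hp : p < T) (hj : j < T)
    (h : (i + j) % T = p) : cdist T i p = j := by
  subst h
  unfold cdist
  have h0 : i % T < T := Nat.mod_lt _ hT
  have h1 : T * (i / T) + i % T = i := Nat.div_add_mod i T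
  rw [Nat.mod_add_mod]
  have h2 : i + j + (T - i % T) = T * (i / T) + (j + T) := by omega
  rw [h2, Nat.mul_add_mod, Nat.add_mod_right, Nat.mod_eq_of_lt hj]

lemma cdist_spec {T i p : ℕ} (hT : 0 < T) (hp : p < T) : (i + cdist T i p) % T = p := by
  unfold cdist
  have h0 : i % T < T := Nat.mod_lt _ hT
  have h1 : T * (i / T) + i % T = i := Nat.div_add_mod i T
  rw [Nat.add_mod_mod]
  have h2 : i + (p + (T - i % T)) = T * (i / T) + (p + T) := by omega
  rw [h2, Nat.mul_add_mod, Nat.add_mod_right, Nat.mod_eq_of_lt hp]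

lemma mem_window {T L i p : ℕ} (hT : 0 < T) (hp : p < T) (hL : L ≤ T) :
    (∃ j < L, p = (i + j) % T) ↔ cdist T i p < L := by
  constructor
  · rintro ⟨j, hj, rfl⟩
    rwa [cdist_eq_of hT (Nat.mod_lt _ hT) (lt_of_lt_of_le hj hL) rfl]
  · intro h
    exact ⟨cdist T i p, h, (cdist_spec hT hp).symm⟩

lemma cdist_mod (T i p : ℕ) : cdist T (i % T) p = cdist T i p := by
  simp [cdist, Nat.mod_mod_of_dvd]

lemma lt_mul_iff' {s x y z : ℕ} (hy : y < s) : x * s + y < z * s ↔ x < z := by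
  constructor
  · intro h
    by_contra hc
    push_neg at hc
    exact absurd h (not_lt.2 (le_trans (Nat.mul_le_mul_right s hc) (Nat.le_add_right _ _)))
  · intro h
    calc x * s + y < x * s + s := by omega
    _ = (x + 1) * s := by ring
    _ ≤ z * s := Nat.mul_le_mul_right s h

lemma cdist_congr {T x y : ℕ} (p : ℕ) (h : x % T = y % T) : cdist T x p = cdist T y p := by
  unfold cdist; rw [h]

lemma cdist_of_add {T i p j : ℕ} (hT : 0 < T) (hp : p < T) (hj : j < T)
    (h : i + j = p) : cdist T i p = j :=
  cdist_eq_of hT hp hj (by rw [h, Nat.mod_eq_of_lt hp])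

lemma cdist_of_add' {T i p j : ℕ} (hT : 0 < T) (hp : p < T) (hj : j < T)
    (h : i + j = p + T) : cdist T i p = j :=
  cdist_eq_of hT hp hj (by rw [h, Nat.add_mod_right, Nat.mod_eq_of_lt hp])

lemma scaleB {k m b w : ℕ} (hm : 0 < m) (hb : b < m) {i : ℕ} (hi : i < m * (k + 1)) :
    (cdist (m * (k + 1)) i (b * (k + 1) + k) < w * (k + 1) ↔ cdist m (i / (k + 1)) b < w) := by
  have hs : 0 < k + 1 := Nat.succ_pos k
  have hT : 0 < m * (k + 1) := Nat.mul_pos hm hs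
  set e := i / (k + 1) with he
  set d := i % (k + 1) with hd
  have hd1 : d < k + 1 := Nat.mod_lt _ hs
  have he1 : e < m := Nat.div_lt_iff_lt_mul hs |>.2 hi
  have h1 : (k + 1) * e + d = i := Nat.div_add_mod i (k + 1)
  clear_value e d
  have hp : b * (k + 1) + k < m * (k + 1) := (lt_mul_iff' (Nat.lt_succ_self k)).2 hb
  obtain ⟨g, hg⟩ : ∃ g, d + g = k := ⟨k - d, by omega⟩
  have hgs : g < k + 1 := by omega
  rcases le_or_gt e b with hc | hc
  · obtain ⟨t, ht⟩ : ∃ t, e + t = b := ⟨b - e, by omega⟩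
    have htm : t < m := by omega
    have hX : cdist (m * (k + 1)) i (b * (k + 1) + k) = t * (k + 1) + g := by
      refine cdist_of_add hT hp ((lt_mul_iff' hgs).2 htm) ?_
      have h2 : (e + t) * (k + 1) = b * (k + 1) := by rw [ht]
      rw [add_mul] at h2
      linarith
    have hY : cdist m e b = t :=
      cdist_of_add hm hb htm ht
    rw [hX, hY, lt_mul_iff' hgs]
  · obtain ⟨t, ht⟩ : ∃ t, e + t = b + m := ⟨b + m - e, by omega⟩
    have htm : t < m := by omega
    have hX : cdist (m * (k + 1)) i (b * (k + 1) + k) = t * (k + 1) + g := by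
      refine cdist_of_add' hT hp ((lt_mul_iff' hgs).2 htm) ?_
      have h2 : (e + t) * (k + 1) = (b + m) * (k + 1) := by rw [ht]
      rw [add_mul, add_mul] at h2
      linarith
    have hY : cdist m e b = t :=
      cdist_of_add' hm hb htm ht
    rw [hX, hY, lt_mul_iff' hgs]

lemma scaleA {k m a w : ℕ} (hm : 0 < m) (hk : 0 < k) (ha : a < m * k)
    {i : ℕ} (hi : i < m * (k + 1)) :
    (cdist (m * (k + 1)) i ((a / k) * (k + 1) + a % k) < w * (k + 1) ↔
      cdist (m * k) ((i / (k + 1)) * k + i % (k + 1)) a < w * k) := by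
  have hs : 0 < k + 1 := Nat.succ_pos k
  have hT : 0 < m * (k + 1) := Nat.mul_pos hm hs
  have hT' : 0 < m * k := Nat.mul_pos hm hk
  set e := i / (k + 1) with he
  set d := i % (k + 1) with hd
  set q := a / k with hq
  set r := a % k with hr
  have hd1 : d < k + 1 := Nat.mod_lt _ hs
  have hr1 : r < k := Nat.mod_lt _ hk
  have he1 : e < m := Nat.div_lt_iff_lt_mul hs |>.2 hi
  have hq1 : q < m := Nat.div_lt_iff_lt_mul hk |>.2 ha
  have h1 : (k + 1) * e + d = i := Nat.div_add_mod i (k + 1)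
  have h2 : k * q + r = a := Nat.div_add_mod a k
  clear_value e d q r
  have hp : q * (k + 1) + r < m * (k + 1) := (lt_mul_iff' (by omega)).2 hq1
  rcases le_or_gt d r with hdr | hdr
  · -- remainders don't wrap
    obtain ⟨g, hg⟩ : ∃ g, d + g = r := ⟨r - d, by omega⟩
    have hgk : g < k := by omega
    rcases le_or_gt e q with hc | hc
    · obtain ⟨t, ht⟩ : ∃ t, e + t = q := ⟨q - e, by omega⟩
      have htm : t < m := by omega
      have hmul : e * (k + 1) + t * (k + 1) = q * (k + 1) := by
        rw [← add_mul, ht]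
      have hmul' : e * k + t * k = q * k := by rw [← add_mul, ht]
      have hX : cdist (m * (k + 1)) i (q * (k + 1) + r) = t * (k + 1) + g :=
        cdist_of_add hT hp ((lt_mul_iff' (by omega)).2 htm) (by linarith)
      have hY : cdist (m * k) (e * k + d) a = t * k + g :=
        cdist_of_add hT' ha ((lt_mul_iff' hgk).2 htm) (by linarith)
      rw [hX, hY, lt_mul_iff' (by omega : g < k + 1), lt_mul_iff' hgk]
    · obtain ⟨t, ht⟩ : ∃ t, e + t = q + m := ⟨q + m - e, by omega⟩
      have htm : t < m := by omega
      have hmul : e * (k + 1) + t * (k + 1) = q * (k + 1) + m * (k + 1) := by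
        rw [← add_mul, ht, add_mul]
      have hmul' : e * k + t * k = q * k + m * k := by rw [← add_mul, ht, add_mul]
      have hX : cdist (m * (k + 1)) i (q * (k + 1) + r) = t * (k + 1) + g :=
        cdist_of_add' hT hp ((lt_mul_iff' (by omega)).2 htm) (by linarith)
      have hY : cdist (m * k) (e * k + d) a = t * k + g :=
        cdist_of_add' hT' ha ((lt_mul_iff' hgk).2 htm) (by linarith)
      rw [hX, hY, lt_mul_iff' (by omega : g < k + 1), lt_mul_iff' hgk]
  · -- remainders wrap
    obtain ⟨gX, hgX⟩ : ∃ g, d + g = k + 1 + r := ⟨k + 1 + r - d, by omega⟩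
    obtain ⟨gY, hgY⟩ : ∃ g, d + g = k + r := ⟨k + r - d, by omega⟩
    have hgXk : gX < k + 1 := by omega
    have hgYk : gY < k := by omega
    rcases lt_or_ge e q with hc | hc
    · obtain ⟨t, ht⟩ : ∃ t, e + 1 + t = q := ⟨q - e - 1, by omega⟩
      have htm : t < m := by omega
      have hmul : e * (k + 1) + (k + 1) + t * (k + 1) = q * (k + 1) := by
        rw [show e * (k+1) + (k+1) + t * (k+1) = (e + 1 + t) * (k+1) by ring, ht]
      have hmul' : e * k + k + t * k = q * k := by
        rw [show e * k + k + t * k = (e + 1 + t) * k by ring, ht]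
      have hX : cdist (m * (k + 1)) i (q * (k + 1) + r) = t * (k + 1) + gX :=
        cdist_of_add hT hp ((lt_mul_iff' hgXk).2 htm) (by linarith)
      have hY : cdist (m * k) (e * k + d) a = t * k + gY :=
        cdist_of_add hT' ha ((lt_mul_iff' hgYk).2 htm) (by linarith)
      rw [hX, hY, lt_mul_iff' hgXk, lt_mul_iff' hgYk]
    · rcases lt_or_ge (e * k + d) (m * k) with hnc | hnc
      · -- non-corner
        obtain ⟨t, ht⟩ : ∃ t, e + 1 + t = q + m := ⟨q + m - e - 1, by omega⟩
        have htm : t < m := by omega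
        have hmul : e * (k + 1) + (k + 1) + t * (k + 1) = q * (k + 1) + m * (k + 1) := by
          rw [show e * (k+1) + (k+1) + t * (k+1) = (e + 1 + t) * (k+1) by ring, ht, add_mul]
        have hmul' : e * k + k + t * k = q * k + m * k := by
          rw [show e * k + k + t * k = (e + 1 + t) * k by ring, ht, add_mul]
        have hX : cdist (m * (k + 1)) i (q * (k + 1) + r) = t * (k + 1) + gX :=
          cdist_of_add' hT hp ((lt_mul_iff' hgXk).2 htm) (by linarith)
        have hY : cdist (m * k) (e * k + d) a = t * k + gY :=
          cdist_of_add' hT' ha ((lt_mul_iff' hgYk).2 htm) (by linarith)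
        rw [hX, hY, lt_mul_iff' hgXk, lt_mul_iff' hgYk]
      · -- corner : e * k + d = m * k, forcing e = m - 1, d = k
        obtain ⟨m', rfl⟩ : ∃ m', m = m' + 1 := ⟨m - 1, by omega⟩
        have h6 : e * k ≤ m' * k := Nat.mul_le_mul_right _ (by omega)
        have h7 : m' * k + k = (m' + 1) * k := by ring
        have hdk : d = k := by omega
        have hek : e * k = m' * k := by omega
        have hem : e = m' := Nat.eq_of_mul_eq_mul_right hk hek
        have hX : cdist ((m' + 1) * (k + 1)) i (q * (k + 1) + r) = q * (k + 1) + (r + 1) := by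
          refine cdist_of_add' hT hp ((lt_mul_iff' (by omega : r + 1 < k + 1)).2 hq1) ?_
          have hmul : e * (k + 1) + (k + 1) = (m' + 1) * (k + 1) := by rw [hem]; ring
          linarith
        have hY : cdist ((m' + 1) * k) (e * k + d) a = a := by
          have hcc : e * k + d = (m' + 1) * k := by omega
          rw [hcc]
          exact cdist_eq_of hT' ha ha
            (by rw [Nat.add_comm, Nat.add_mod_right, Nat.mod_eq_of_lt ha])
        rw [hX, hY, lt_mul_iff' (by omega : r + 1 < k + 1), ← h2,
          show k * q + r = q * k + r by ring, lt_mul_iff' hr1]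

lemma scaleB' {k m b w : ℕ} (hm : 0 < m) (hb : b < m) (i : ℕ) :
    (cdist (m * (k + 1)) i (b * (k + 1) + k) < w * (k + 1) ↔ cdist m (i / (k + 1)) b < w) := by
  have hT : 0 < m * (k + 1) := Nat.mul_pos hm (Nat.succ_pos k)
  have h := scaleB (k := k) (w := w) hm hb (i := i % (m * (k + 1))) (Nat.mod_lt _ hT)
  rw [cdist_mod] at h
  have e1 : i % (m * (k + 1)) / (k + 1) = i / (k + 1) % m := by
    rw [mul_comm m (k + 1), Nat.mod_mul_right_div_self]
  rw [e1, cdist_mod] at h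
  exact h

lemma scaleA' {k m a w : ℕ} (hm : 0 < m) (hk : 0 < k) (ha : a < m * k) (i : ℕ) :
    (cdist (m * (k + 1)) i ((a / k) * (k + 1) + a % k) < w * (k + 1) ↔
      cdist (m * k) ((i / (k + 1)) * k + i % (k + 1)) a < w * k) := by
  have hT : 0 < m * (k + 1) := Nat.mul_pos hm (Nat.succ_pos k)
  have h := scaleA (k := k) (w := w) hm hk ha (i := i % (m * (k + 1))) (Nat.mod_lt _ hT)
  rw [cdist_mod] at h
  have e1 : i % (m * (k + 1)) / (k + 1) = i / (k + 1) % m := by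
    rw [mul_comm m (k + 1), Nat.mod_mul_right_div_self]
  have e2 : i % (m * (k + 1)) % (k + 1) = i % (k + 1) :=
    Nat.mod_mod_of_dvd i ⟨m, mul_comm m (k + 1)⟩
  rw [e1, e2] at h
  have e3 : ((i / (k + 1) % m) * k + i % (k + 1)) % (m * k)
      = ((i / (k + 1)) * k + i % (k + 1)) % (m * k) := by
    have e4 : (i / (k + 1)) * k + i % (k + 1)
        = m * k * (i / (k + 1) / m) + ((i / (k + 1) % m) * k + i % (k + 1)) := by
      conv_lhs => rw [← Nat.div_add_mod (i / (k + 1)) m]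
      ring
    rw [e4, Nat.mul_add_mod]
  rw [cdist_congr a e3] at h
  exact h

end CBOAux

namespace CBOAux

open SimpleGraph

/-! ### Generic counting lemmas for graphs -/

lemma ecard_eq {V : Type} [Fintype V] (G : SimpleGraph V) [Fintype G.edgeSet] :
    G.edgeFinset.card = G.edgeSet.ncard :=
  (Set.ncard_eq_toFinset_card' _).symm

lemma exists_delete {V : Type} [Fintype V] (G : SimpleGraph V) (hc : G.Connected)
    (hna : ¬ G.IsAcyclic) :
    ∃ G' : SimpleGraph V, G'.Connected ∧ G'.edgeFinset.card + 1 = G.edgeFinset.card := by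
  rw [isAcyclic_iff_forall_adj_isBridge] at hna
  push_neg at hna
  obtain ⟨v, w, hadj, hnb⟩ := hna
  refine ⟨G \ fromEdgeSet {s(v, w)}, ?_, ?_⟩
  · have hreach : (G \ fromEdgeSet {s(v, w)}).Reachable v w := by
      by_contra h
      exact hnb h
    have key : ∀ {x y : V}, G.Walk x y → (G \ fromEdgeSet {s(v, w)}).Reachable x y := by
      intro x y p
      induction p with
      | nil => exact Reachable.refl _
      | @cons x z y h q ih =>
        refine Reachable.trans ?_ ih
        by_cases he : s(x, z) = s(v, w)
        · rw [Sym2.eq_iff] at he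
          rcases he with ⟨rfl, rfl⟩ | ⟨rfl, rfl⟩
          · exact hreach
          · exact hreach.symm
        · have h2 : (G \ fromEdgeSet {s(v, w)}).Adj x z := by
            rw [sdiff_adj, fromEdgeSet_adj]
            refine ⟨h, ?_⟩
            simp only [Set.mem_singleton_iff]
            intro hcon
            exact he (by tauto)
          exact h2.reachable
    rw [connected_iff]
    exact ⟨fun x y => (hc.preconnected x y).elim fun p => key p, hc.nonempty⟩
  · have hes : (G \ fromEdgeSet {s(v, w)}).edgeSet = G.edgeSet \ {s(v, w)} := by
      rw [edgeSet_sdiff, edgeSet_fromEdgeSet, edgeSet_sdiff_sdiff_isDiag]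
    rw [ecard_eq, ecard_eq, hes]
    exact Set.ncard_diff_singleton_add_one ((SimpleGraph.mem_edgeSet G).2 hadj) (Set.toFinite _)

lemma connected_card_le' : ∀ (n : ℕ) {V : Type} [Fintype V] (G : SimpleGraph V),
    G.edgeFinset.card = n → G.Connected → Fintype.card V ≤ n + 1 := by
  intro n
  induction n using Nat.strong_induction_on with
  | _ n ih =>
    intro V _ G hn hc
    by_cases ha : G.IsAcyclic
    · exact le_of_eq (hn ▸ (IsTree.card_edgeFinset ⟨hc, ha⟩).symm)
    · obtain ⟨G', hc', he'⟩ := exists_delete G hc ha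
      have h1 : G'.edgeFinset.card < n := by omega
      have := ih _ h1 G' rfl hc'
      omega

lemma connected_card_le {V : Type} [Fintype V] (G : SimpleGraph V) (hc : G.Connected) :
    Fintype.card V ≤ G.edgeFinset.card + 1 :=
  connected_card_le' _ G rfl hc

lemma isTree_of_connected_card {V : Type} [Fintype V] (G : SimpleGraph V) (hc : G.Connected)
    (hcard : G.edgeFinset.card + 1 = Fintype.card V) : G.IsTree := by
  by_cases ha : G.IsAcyclic
  · exact ⟨hc, ha⟩
  · obtain ⟨G', hc', he'⟩ := exists_delete G hc ha
    have := connected_card_le G' hc'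
    omega

/-! ### The interleaving equivalence -/

def interleave (m k : ℕ) (hk : 0 < k) : Fin (m * k) ⊕ Fin m ≃ Fin (m * (k + 1)) where
  toFun x := x.elim
    (fun a => ⟨(a.1 / k) * (k + 1) + a.1 % k, by
      have hq : a.1 / k < m := Nat.div_lt_iff_lt_mul hk |>.2 a.2
      have hr : a.1 % k < k := Nat.mod_lt _ hk
      exact (lt_mul_iff' (by omega)).2 hq⟩)
    (fun b => ⟨b.1 * (k + 1) + k, (lt_mul_iff' (Nat.lt_succ_self k)).2 b.2⟩)
  invFun p := if h : p.1 % (k + 1) = k then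
      Sum.inr ⟨p.1 / (k + 1), Nat.div_lt_iff_lt_mul (Nat.succ_pos k) |>.2 p.2⟩
    else
      Sum.inl ⟨(p.1 / (k + 1)) * k + p.1 % (k + 1), by
        have h1 : p.1 % (k + 1) < k := by
          have := Nat.mod_lt p.1 (show 0 < k + 1 by omega); omega
        have h2 : p.1 / (k + 1) < m := Nat.div_lt_iff_lt_mul (Nat.succ_pos k) |>.2 p.2
        exact (lt_mul_iff' h1).2 h2⟩
  left_inv x := by
    rcases x with a | b
    · have hr : a.1 % k < k := Nat.mod_lt _ hk
      simp only [Sum.elim_inl]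
      have e1 : ((a.1 / k) * (k + 1) + a.1 % k) % (k + 1) = a.1 % k := by
        rw [mul_comm (a.1 / k) (k + 1), Nat.mul_add_mod, Nat.mod_eq_of_lt (by omega)]
      have e2 : ((a.1 / k) * (k + 1) + a.1 % k) / (k + 1) = a.1 / k := by
        have hz : a.1 % k / (k + 1) = 0 := Nat.div_eq_of_lt (by omega)
        rw [mul_comm (a.1 / k) (k + 1), Nat.mul_add_div (show 0 < k + 1 by omega), hz,
          Nat.add_zero]
      refine (dif_neg (show ¬ (((a.1 / k) * (k + 1) + a.1 % k) % (k + 1) = k) by rw [e1]; omega)).trans ?_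
      congr 1
      ext
      simp only [e1, e2]
      rw [mul_comm (a.1 / k) k]
      exact Nat.div_add_mod a.1 k
    · simp only [Sum.elim_inr]
      have e1 : (b.1 * (k + 1) + k) % (k + 1) = k := by
        rw [mul_comm b.1 (k + 1), Nat.mul_add_mod, Nat.mod_eq_of_lt (Nat.lt_succ_self k)]
      refine (dif_pos e1).trans ?_
      congr 1
      ext
      simp only
      have hz : k / (k + 1) = 0 := Nat.div_eq_of_lt (Nat.lt_succ_self k)
      rw [mul_comm b.1 (k + 1), Nat.mul_add_div (show 0 < k + 1 by omega), hz, Nat.add_zero]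
  right_inv p := by
    dsimp only
    by_cases h : p.1 % (k + 1) = k
    · rw [dif_pos h]
      ext
      simp only [Sum.elim_inr]
      conv_rhs => rw [← Nat.div_add_mod p.1 (k + 1)]
      rw [h, mul_comm]
    · rw [dif_neg h]
      ext
      simp only [Sum.elim_inl]
      have h1 : p.1 % (k + 1) < k := by
        have := Nat.mod_lt p.1 (show 0 < k + 1 by omega); omega
      have e1 : ((p.1 / (k + 1)) * k + p.1 % (k + 1)) % k = p.1 % (k + 1) := by
        rw [mul_comm (p.1 / (k + 1)) k, Nat.mul_add_mod, Nat.mod_eq_of_lt h1]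
      have e2 : ((p.1 / (k + 1)) * k + p.1 % (k + 1)) / k = p.1 / (k + 1) := by
        have hz : p.1 % (k + 1) / k = 0 := Nat.div_eq_of_lt h1
        rw [mul_comm (p.1 / (k + 1)) k, Nat.mul_add_div hk, hz, Nat.add_zero]
      rw [e1, e2]
      conv_rhs => rw [← Nat.div_add_mod p.1 (k + 1)]
      rw [mul_comm]

/-! ### The gluing map and the edge set of a one-sum -/

def glue {β : Type} (v : β) {α : Type} (u : α) (b : β) : α ⊕ {b : β // b ≠ v} :=
  if h : b = v then Sum.inl u else Sum.inr ⟨b, h⟩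

lemma glue_injective {α β : Type} (v : β) (u : α) :
    Function.Injective (glue v u (α := α)) := by
  intro b b' h
  unfold glue at h
  split at h <;> split at h <;> simp_all

lemma glue_v {α β : Type} (v : β) (u : α) : glue v u v = Sum.inl u := dif_pos rfl

lemma glue_ne {α β : Type} (v : β) (u : α) (b : β) (hb : b ≠ v) :
    glue v u b = Sum.inr ⟨b, hb⟩ := dif_neg hb

lemma oneSum_edgeSet {α β : Type} (G : SimpleGraph α) (H : SimpleGraph β) (u : α) (v : β) :
    (G.oneSum H u v).edgeSet =
      Sym2.map Sum.inl '' G.edgeSet ∪ Sym2.map (glue v u) '' H.edgeSet := by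
  ext s
  refine Sym2.ind (fun x y => ?_) s
  constructor
  · intro hmem
    rw [mem_edgeSet] at hmem
    rw [SimpleGraph.oneSum, fromRel_adj] at hmem
    obtain ⟨hne, hr⟩ := hmem
    rcases x with a | b <;> rcases y with a' | b'
    · refine Or.inl ⟨s(a, a'), ?_, Sym2.map_pair_eq _ _ _⟩
      rw [mem_edgeSet]
      rcases hr with h | h
      · exact h
      · exact h.symm
    · have hadj : a = u ∧ H.Adj v b'.1 := by
        rcases hr with ⟨h1, h2⟩ | ⟨h1, h2⟩
        · exact ⟨h1, h2⟩
        · exact ⟨h1, h2.symm⟩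
      rw [hadj.1]
      refine Or.inr ⟨s(v, b'.1), hadj.2, ?_⟩
      rw [Sym2.map_pair_eq, glue_v, glue_ne v u b'.1 b'.2]
    · have hadj : a' = u ∧ H.Adj v b.1 := by
        rcases hr with ⟨h1, h2⟩ | ⟨h1, h2⟩
        · exact ⟨h1, h2.symm⟩
        · exact ⟨h1, h2⟩
      rw [hadj.1]
      refine Or.inr ⟨s(v, b.1), hadj.2, ?_⟩
      rw [Sym2.map_pair_eq, glue_v, glue_ne v u b.1 b.2, Sym2.eq_swap]
    · refine Or.inr ⟨s(b.1, b'.1), ?_, ?_⟩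
      · rw [mem_edgeSet]
        rcases hr with h | h
        · exact h
        · exact h.symm
      · rw [Sym2.map_pair_eq, glue_ne v u b.1 b.2, glue_ne v u b'.1 b'.2]
  · intro hmem
    rcases hmem with ⟨e, he, hmap⟩ | ⟨e, he, hmap⟩
    · rw [← hmap]
      revert he
      refine Sym2.ind (fun c c' => ?_) e
      intro he
      rw [mem_edgeSet] at he
      rw [Sym2.map_pair_eq, mem_edgeSet, SimpleGraph.oneSum, fromRel_adj]
      exact ⟨fun hc => he.ne (Sum.inl_injective hc), Or.inl he⟩
    · rw [← hmap]
      revert he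
      refine Sym2.ind (fun c c' => ?_) e
      intro he
      rw [mem_edgeSet] at he
      rw [Sym2.map_pair_eq, mem_edgeSet, SimpleGraph.oneSum, fromRel_adj]
      refine ⟨fun hc => he.ne (glue_injective v u hc), ?_⟩
      by_cases hc : c = v
      · rw [hc] at he ⊢
        rw [glue_v, glue_ne v u c' (fun h => he.ne' h)]
        exact Or.inl ⟨rfl, he⟩
      · by_cases hc' : c' = v
        · rw [hc'] at he ⊢
          rw [glue_v, glue_ne v u c hc]
          exact Or.inl ⟨rfl, he⟩
        · rw [glue_ne v u c hc, glue_ne v u c' hc']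
          exact Or.inl he

lemma not_inr_mem_inl_image {α γ : Type} {SA : Set (Sym2 α)} {s : Sym2 (α ⊕ γ)}
    (hs : s ∈ Sym2.map Sum.inl '' SA) (c : γ) : Sum.inr c ∉ s := by
  obtain ⟨t, _, rfl⟩ := hs
  revert t
  refine fun t => Sym2.ind (fun x y => ?_) t
  intro _hmem
  rw [Sym2.map_pair_eq, Sym2.mem_iff]
  rintro (h | h) <;> exact Sum.inr_ne_inl h

lemma exists_inr_mem_glue_image {α β : Type} {v : β} {u : α} {SB : Set (Sym2 β)}
    {H : SimpleGraph β} (hSB : SB ⊆ H.edgeSet) {s : Sym2 (α ⊕ {b : β // b ≠ v})}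
    (hs : s ∈ Sym2.map (glue v u) '' SB) : ∃ c, Sum.inr c ∈ s := by
  obtain ⟨t, ht, rfl⟩ := hs
  have ht' := hSB ht
  revert ht'
  refine Sym2.ind (fun x y => ?_) t
  intro hadj
  rw [mem_edgeSet] at hadj
  rw [Sym2.map_pair_eq]
  by_cases hx : x = v
  · rw [hx] at hadj ⊢
    refine ⟨⟨y, fun h => hadj.ne' h⟩, ?_⟩
    rw [glue_ne v u y (fun h => hadj.ne' h)]
    simp
  · exact ⟨⟨x, hx⟩, by rw [glue_ne v u x hx]; simp⟩

lemma images_disjoint {α β : Type} {v : β} {u : α} {H : SimpleGraph β}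
    (SA : Set (Sym2 α)) (SB : Set (Sym2 β)) (hSB : SB ⊆ H.edgeSet) :
    Disjoint (Sym2.map (Sum.inl : α → α ⊕ {b : β // b ≠ v}) '' SA)
      (Sym2.map (glue v u) '' SB) := by
  rw [Set.disjoint_left]
  intro s hsA hsB
  obtain ⟨c, hc⟩ := exists_inr_mem_glue_image hSB hsB
  exact not_inr_mem_inl_image hsA c hc

end CBOAux

namespace CBOAux

open SimpleGraph

lemma fromEdgeSet_edgeSet_of_subset {V : Type} {S : Set (Sym2 V)} {G : SimpleGraph V}
    (h : S ⊆ G.edgeSet) : (fromEdgeSet S).edgeSet = S := by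
  rw [edgeSet_fromEdgeSet]
  ext s
  constructor
  · rintro ⟨h1, _⟩
    exact h1
  · intro hs
    exact ⟨hs, G.not_isDiag_of_mem_edgeSet (h hs)⟩

lemma co_facts {V : Type} [Fintype V] (G : SimpleGraph V) (h : G.CyclicallyOrderable) :
    1 ≤ Fintype.card V ∧ Fintype.card V - 1 ≤ G.edgeFinset.card := by
  obtain ⟨O, hO⟩ := h
  have t := hO 0
  have hsub : {s : Sym2 V | ∃ e : G.edgeSet, (e : Sym2 V) = s ∧
      ∃ j < Fintype.card V - 1, (O e : ℕ) = (0 + j) % G.edgeFinset.card} ⊆ G.edgeSet := by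
    rintro s ⟨e, rfl, _⟩
    exact e.2
  constructor
  · have := t.isConnected.nonempty
    exact Fintype.card_pos
  · have h1 := t.card_edgeFinset
    have h2 : (fromEdgeSet {s : Sym2 V | ∃ e : G.edgeSet, (e : Sym2 V) = s ∧
        ∃ j < Fintype.card V - 1, (O e : ℕ) = (0 + j) % G.edgeFinset.card}).edgeFinset.card
        ≤ G.edgeFinset.card := by
      rw [ecard_eq, fromEdgeSet_edgeSet_of_subset hsub]
      exact le_trans (Set.ncard_le_ncard hsub (Set.toFinite _)) (ecard_eq G).ge
    omega

lemma edge_empty_of_card_le_one {V : Type} [Fintype V] (G : SimpleGraph V)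
    (h : Fintype.card V ≤ 1) : G.edgeSet = ∅ := by
  have hsub : Subsingleton V := Fintype.card_le_one_iff_subsingleton.1 h
  ext s
  refine Sym2.ind (fun x y => ?_) s
  simp only [mem_edgeSet, Set.mem_empty_iff_false, iff_false]
  intro hadj
  exact hadj.ne (Subsingleton.elim x y)

lemma bot_isTree {V : Type} [Fintype V] (h : Fintype.card V = 1) :
    (⊥ : SimpleGraph V).IsTree := by
  have hsub : Subsingleton V := Fintype.card_le_one_iff_subsingleton.1 (by omega)
  have hne : Nonempty V := Fintype.card_pos_iff.1 (by omega)
  constructor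
  · rw [connected_iff]
    refine ⟨fun x y => ?_, hne⟩
    rw [Subsingleton.elim x y]
  · intro x c hc
    cases c with
    | nil => exact Walk.IsCycle.not_of_nil hc
    | cons h' p => exact h'.elim

lemma co_of_card_one {V : Type} [Fintype V] (G : SimpleGraph V) (h1 : Fintype.card V = 1) :
    G.CyclicallyOrderable := by
  have hes : G.edgeSet = ∅ := edge_empty_of_card_le_one G (by omega)
  have hempty : IsEmpty G.edgeSet := by
    rw [hes]
    infer_instance
  have hcard0 : G.edgeFinset.card = 0 := by
    rw [ecard_eq, hes, Set.ncard_empty]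
  have hfin0 : IsEmpty (Fin G.edgeFinset.card) := by
    rw [hcard0]
    infer_instance
  refine ⟨Equiv.equivOfIsEmpty _ _, fun i => ?_⟩
  have hS : {s : Sym2 V | ∃ e : G.edgeSet, (e : Sym2 V) = s ∧
      ∃ j < Fintype.card V - 1, ((Equiv.equivOfIsEmpty G.edgeSet
        (Fin G.edgeFinset.card) e : Fin G.edgeFinset.card) : ℕ)
          = (i + j) % G.edgeFinset.card} = ∅ := by
    ext s
    simp only [Set.mem_setOf_eq, Set.mem_empty_iff_false, iff_false]
    rintro ⟨e, _⟩
    exact hempty.elim e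
  rw [hS, fromEdgeSet_empty]
  exact bot_isTree h1

def sumToOneSum {α β : Type} (G : SimpleGraph α) (H : SimpleGraph β) (u : α) (v : β) :
    G.edgeSet ⊕ H.edgeSet → (G.oneSum H u v).edgeSet :=
  Sum.elim
    (fun e => ⟨Sym2.map Sum.inl (e : Sym2 α), by
      rw [oneSum_edgeSet]
      exact Or.inl ⟨e, e.2, rfl⟩⟩)
    (fun e => ⟨Sym2.map (glue v u) (e : Sym2 β), by
      rw [oneSum_edgeSet]
      exact Or.inr ⟨e, e.2, rfl⟩⟩)

@[simp] lemma sumToOneSum_inl {α β : Type} (G : SimpleGraph α) (H : SimpleGraph β)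
    (u : α) (v : β) (e : G.edgeSet) :
    (sumToOneSum G H u v (Sum.inl e) : Sym2 (α ⊕ {b : β // b ≠ v}))
      = Sym2.map Sum.inl (e : Sym2 α) := rfl

@[simp] lemma sumToOneSum_inr {α β : Type} (G : SimpleGraph α) (H : SimpleGraph β)
    (u : α) (v : β) (e : H.edgeSet) :
    (sumToOneSum G H u v (Sum.inr e) : Sym2 (α ⊕ {b : β // b ≠ v}))
      = Sym2.map (glue v u) (e : Sym2 β) := rfl

lemma step_co {α β : Type} [Fintype α] [Fintype β]
    (A : SimpleGraph α) (B : SimpleGraph β) (u : α) (v : β) (k : ℕ) (hk : 0 < k)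
    (hcardα : Fintype.card α = k * (Fintype.card β - 1) + 1)
    (hedgeA : A.edgeFinset.card = k * B.edgeFinset.card)
    (hA : A.CyclicallyOrderable) (hB : B.CyclicallyOrderable) :
    (A.oneSum B u v).CyclicallyOrderable := by
  obtain ⟨hβ1, hβ2⟩ := co_facts B hB
  by_cases hm0 : B.edgeFinset.card = 0
  · -- degenerate case : B is a single vertex
    have hβ : Fintype.card β = 1 := by omega
    have hα : Fintype.card α = 1 := by
      rw [hcardα, hβ]
      simp
    have hγ : Fintype.card {b : β // b ≠ v} = 0 := by
      rw [Fintype.card_eq_zero_iff]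
      refine ⟨fun b => ?_⟩
      have : Subsingleton β := Fintype.card_le_one_iff_subsingleton.1 (by omega)
      exact b.2 (Subsingleton.elim b.1 v)
    exact co_of_card_one _ (by rw [Fintype.card_sum, hα, hγ])
  · -- main case
    set m := B.edgeFinset.card with hmdef
    set n₁ := Fintype.card β - 1 with hn₁def
    have hm : 0 < m := Nat.pos_of_ne_zero hm0
    have hn₁ : 0 < n₁ := by
      rcases Nat.eq_zero_or_pos n₁ with h0 | h
      · exfalso
        have hc1 : Fintype.card β ≤ 1 := by omega
        have hc2 := edge_empty_of_card_le_one B hc1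
        have hc3 : B.edgeFinset.card = 0 := by
          rw [ecard_eq, hc2, Set.ncard_empty]
        omega
      · exact h
    have hn₁m : n₁ ≤ m := hβ2
    obtain ⟨OA, hOA⟩ := hA
    obtain ⟨OB, hOB⟩ := hB
    have hαcard : Fintype.card α = k * n₁ + 1 := hcardα
    have hγ : Fintype.card {b : β // b ≠ v} = n₁ := by
      have h1 := Fintype.card_subtype_compl (fun b : β => b = v)
      rw [Fintype.card_subtype_eq] at h1
      exact h1
    have hVR : Fintype.card (α ⊕ {b : β // b ≠ v}) = (k + 1) * n₁ + 1 := by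
      rw [Fintype.card_sum, hαcard, hγ]
      ring
    have hES : (A.oneSum B u v).edgeSet =
        Sym2.map Sum.inl '' A.edgeSet ∪ Sym2.map (glue v u) '' B.edgeSet :=
      oneSum_edgeSet A B u v
    have injinl : Function.Injective (Sym2.map (Sum.inl : α → α ⊕ {b : β // b ≠ v})) :=
      Sym2.map.injective Sum.inl_injective
    have injglue : Function.Injective (Sym2.map (glue v u (α := α))) :=
      Sym2.map.injective (glue_injective v u)
    have hMA : A.edgeFinset.card = m * k := by rw [hedgeA, mul_comm]
    have hT : 0 < m * (k + 1) := Nat.mul_pos hm (Nat.succ_pos k)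
    have hT' : 0 < m * k := Nat.mul_pos hm hk
    have hERval : (A.oneSum B u v).edgeSet.ncard = k * m + m := by
      rw [hES, Set.ncard_union_eq (images_disjoint _ _ (Set.Subset.refl B.edgeSet))
        (Set.toFinite _) (Set.toFinite _), Set.ncard_image_of_injective _ injinl,
        Set.ncard_image_of_injective _ injglue, ← ecard_eq, ← ecard_eq, hedgeA]
    have hERcard : (A.oneSum B u v).edgeFinset.card = m * (k + 1) := by
      rw [ecard_eq, hERval]
      ring
    have hdisjfull := images_disjoint (v := v) (u := u) A.edgeSet B.edgeSet
      (Set.Subset.refl B.edgeSet)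
    have hFinj : Function.Injective (sumToOneSum A B u v) := by
      rintro (e | e) (e' | e') h
      · congr 1
        exact Subtype.ext (injinl (congrArg Subtype.val h))
      · exfalso
        have hv := congrArg Subtype.val h
        rw [sumToOneSum_inl, sumToOneSum_inr] at hv
        exact Set.disjoint_left.1 hdisjfull ⟨e, e.2, rfl⟩ ⟨e', e'.2, hv.symm⟩
      · exfalso
        have hv := congrArg Subtype.val h
        rw [sumToOneSum_inr, sumToOneSum_inl] at hv
        exact Set.disjoint_left.1 hdisjfull ⟨e', e'.2, rfl⟩ ⟨e, e.2, hv⟩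
      · congr 1
        exact Subtype.ext (injglue (congrArg Subtype.val h))
    have hFsurj : Function.Surjective (sumToOneSum A B u v) := by
      rintro ⟨s, hs⟩
      rw [hES] at hs
      rcases hs with ⟨t, ht, hteq⟩ | ⟨t, ht, hteq⟩
      · exact ⟨Sum.inl ⟨t, ht⟩, Subtype.ext hteq⟩
      · exact ⟨Sum.inr ⟨t, ht⟩, Subtype.ext hteq⟩
    have hbij : Function.Bijective (sumToOneSum A B u v) := ⟨hFinj, hFsurj⟩
    refine ⟨(Equiv.ofBijective _ hbij).symm.trans ((Equiv.sumCongr OA OB).trans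
      ((Equiv.sumCongr (finCongr hMA) (Equiv.refl (Fin m))).trans
        ((interleave m k hk).trans (finCongr hERcard.symm)))), fun i => ?_⟩
    set O' : (A.oneSum B u v).edgeSet ≃ Fin (A.oneSum B u v).edgeFinset.card :=
      (Equiv.ofBijective _ hbij).symm.trans ((Equiv.sumCongr OA OB).trans
        ((Equiv.sumCongr (finCongr hMA) (Equiv.refl (Fin m))).trans
          ((interleave m k hk).trans (finCongr hERcard.symm)))) with hO'def
    have hsymm_inl : ∀ eA : A.edgeSet,
        (Equiv.ofBijective _ hbij).symm (sumToOneSum A B u v (Sum.inl eA)) = Sum.inl eA :=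
      fun eA => Equiv.symm_apply_apply (Equiv.ofBijective _ hbij) (Sum.inl eA)
    have hsymm_inr : ∀ eB : B.edgeSet,
        (Equiv.ofBijective _ hbij).symm (sumToOneSum A B u v (Sum.inr eB)) = Sum.inr eB :=
      fun eB => Equiv.symm_apply_apply (Equiv.ofBijective _ hbij) (Sum.inr eB)
    have hlabA : ∀ eA : A.edgeSet, ((O' (sumToOneSum A B u v (Sum.inl eA))) : ℕ)
        = ((OA eA : ℕ) / k) * (k + 1) + (OA eA : ℕ) % k := by
      intro eA
      rw [hO'def]
      simp only [Equiv.trans_apply, hsymm_inl, Equiv.sumCongr_apply, Sum.map_inl,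
        finCongr_apply]
      rfl
    have hlabB : ∀ eB : B.edgeSet, ((O' (sumToOneSum A B u v (Sum.inr eB))) : ℕ)
        = (OB eB : ℕ) * (k + 1) + k := by
      intro eB
      rw [hO'def]
      simp only [Equiv.trans_apply, hsymm_inr, Equiv.sumCongr_apply, Sum.map_inr,
        finCongr_apply]
      rfl
    have hL : Fintype.card (α ⊕ {b : β // b ≠ v}) - 1 = n₁ * (k + 1) := by
      rw [hVR, Nat.add_sub_cancel, mul_comm]
    have hcardα1 : Fintype.card α - 1 = n₁ * k := by
      rw [hαcard, Nat.add_sub_cancel, mul_comm]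
    -- window translation lemmas
    have hwinA : ∀ eA : A.edgeSet,
        (∃ j < Fintype.card (α ⊕ {b : β // b ≠ v}) - 1,
          ((O' (sumToOneSum A B u v (Sum.inl eA))) : ℕ)
            = (i + j) % (A.oneSum B u v).edgeFinset.card)
        ↔ (∃ j < Fintype.card α - 1,
            (OA eA : ℕ) = ((i / (k + 1)) * k + i % (k + 1) + j) % A.edgeFinset.card) := by
      intro eA
      rw [hlabA eA, hL, hERcard, hcardα1]
      generalize hgen : ((OA eA : Fin A.edgeFinset.card) : ℕ) = a
      have ha : a < m * k := by
        have := (OA eA).isLt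
        omega
      have hpb : (a / k) * (k + 1) + a % k < m * (k + 1) := by
        have hq : a / k < m := Nat.div_lt_iff_lt_mul hk |>.2 ha
        have hr : a % k < k := Nat.mod_lt _ hk
        exact (lt_mul_iff' (by omega)).2 hq
      rw [mem_window hT hpb (Nat.mul_le_mul_right _ hn₁m)]
      rw [scaleA' hm hk ha i]
      rw [← mem_window hT' ha (Nat.mul_le_mul_right _ hn₁m), hMA]
    have hwinB : ∀ eB : B.edgeSet,
        (∃ j < Fintype.card (α ⊕ {b : β // b ≠ v}) - 1,
          ((O' (sumToOneSum A B u v (Sum.inr eB))) : ℕ)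
            = (i + j) % (A.oneSum B u v).edgeFinset.card)
        ↔ (∃ j < Fintype.card β - 1,
            (OB eB : ℕ) = (i / (k + 1) + j) % B.edgeFinset.card) := by
      intro eB
      rw [hlabB eB, hL, hERcard]
      generalize hgen : ((OB eB : Fin B.edgeFinset.card) : ℕ) = b
      have hb : b < m := by
        have := (OB eB).isLt
        omega
      have hpb : b * (k + 1) + k < m * (k + 1) :=
        (lt_mul_iff' (Nat.lt_succ_self k)).2 hb
      rw [mem_window hT hpb (Nat.mul_le_mul_right _ hn₁m)]
      rw [scaleB' hm hb i]
      rw [← mem_window hm hb hn₁m]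
    -- the two window trees
    set SA : Set (Sym2 α) := {s : Sym2 α | ∃ e : A.edgeSet, (e : Sym2 α) = s ∧
      ∃ j < Fintype.card α - 1,
        (OA e : ℕ) = ((i / (k + 1)) * k + i % (k + 1) + j) % A.edgeFinset.card} with hSAdef
    set SB : Set (Sym2 β) := {s : Sym2 β | ∃ e : B.edgeSet, (e : Sym2 β) = s ∧
      ∃ j < Fintype.card β - 1,
        (OB e : ℕ) = (i / (k + 1) + j) % B.edgeFinset.card} with hSBdef
    have treeA : (fromEdgeSet SA).IsTree := hOA ((i / (k + 1)) * k + i % (k + 1))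
    have treeB : (fromEdgeSet SB).IsTree := hOB (i / (k + 1))
    have hSAsub : SA ⊆ A.edgeSet := by
      rw [hSAdef]
      rintro s ⟨e, rfl, _⟩
      exact e.2
    have hSBsub : SB ⊆ B.edgeSet := by
      rw [hSBdef]
      rintro s ⟨e, rfl, _⟩
      exact e.2
    -- decomposition of the window edge set
    have hSdec : {s : Sym2 (α ⊕ {b : β // b ≠ v}) | ∃ e : (A.oneSum B u v).edgeSet,
          (e : Sym2 (α ⊕ {b : β // b ≠ v})) = s ∧ ∃ j < Fintype.card (α ⊕ {b : β // b ≠ v}) - 1,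
          (O' e : ℕ) = (i + j) % (A.oneSum B u v).edgeFinset.card}
        = Sym2.map Sum.inl '' SA ∪ Sym2.map (glue v u) '' SB := by
      ext s
      simp only [Set.mem_setOf_eq, Set.mem_union, Set.mem_image, hSAdef, hSBdef]
      constructor
      · rintro ⟨e, rfl, hwin⟩
        have he : sumToOneSum A B u v ((Equiv.ofBijective _ hbij).symm e) = e :=
          Equiv.apply_symm_apply (Equiv.ofBijective _ hbij) e
        rcases hEx : (Equiv.ofBijective _ hbij).symm e with eA | eB
        · rw [hEx] at he
          left
          refine ⟨(eA : Sym2 α), ?_, by rw [← he]; rfl⟩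
          exact ⟨eA, rfl, (hwinA eA).1 (by rwa [he])⟩
        · rw [hEx] at he
          right
          refine ⟨(eB : Sym2 β), ?_, by rw [← he]; rfl⟩
          exact ⟨eB, rfl, (hwinB eB).1 (by rwa [he])⟩
      · rintro (⟨t, ⟨eA, rfl, hwin⟩, rfl⟩ | ⟨t, ⟨eB, rfl, rwin⟩, rfl⟩)
        · exact ⟨sumToOneSum A B u v (Sum.inl eA), rfl, (hwinA eA).2 hwin⟩
        · exact ⟨sumToOneSum A B u v (Sum.inr eB), rfl, (hwinB eB).2 rwin⟩
    rw [hSdec]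
    -- tree-ness of the union
    have hUsub : Sym2.map Sum.inl '' SA ∪ Sym2.map (glue v u) '' SB
        ⊆ (A.oneSum B u v).edgeSet := by
      rw [hES]
      exact Set.union_subset
        (subset_trans (Set.image_mono hSAsub) Set.subset_union_left)
        (subset_trans (Set.image_mono hSBsub) Set.subset_union_right)
    have hmapA : ∀ ⦃a a' : α⦄, (fromEdgeSet SA).Adj a a' →
        (fromEdgeSet (Sym2.map Sum.inl '' SA ∪ Sym2.map (glue v u) '' SB)).Adj
          (Sum.inl a) (Sum.inl a') := by
      intro a a' hadj
      rw [fromEdgeSet_adj] at hadj ⊢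
      exact ⟨Or.inl ⟨s(a, a'), hadj.1, Sym2.map_pair_eq _ _ _⟩,
        fun hc => hadj.2 (Sum.inl_injective hc)⟩
    have hmapB : ∀ ⦃b b' : β⦄, (fromEdgeSet SB).Adj b b' →
        (fromEdgeSet (Sym2.map Sum.inl '' SA ∪ Sym2.map (glue v u) '' SB)).Adj
          (glue v u b) (glue v u b') := by
      intro b b' hadj
      rw [fromEdgeSet_adj] at hadj ⊢
      exact ⟨Or.inr ⟨s(b, b'), hadj.1, Sym2.map_pair_eq _ _ _⟩,
        fun hc => hadj.2 (glue_injective v u hc)⟩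
    have hreach : ∀ x : α ⊕ {b : β // b ≠ v},
        (fromEdgeSet (Sym2.map Sum.inl '' SA ∪ Sym2.map (glue v u) '' SB)).Reachable
          x (Sum.inl u) := by
      rintro (a | b)
      · exact Reachable.map (⟨Sum.inl, fun h => hmapA h⟩ :
          fromEdgeSet SA →g fromEdgeSet (Sym2.map Sum.inl '' SA ∪ Sym2.map (glue v u) '' SB))
          (treeA.isConnected.preconnected a u)
      · have h1 : (fromEdgeSet (Sym2.map Sum.inl '' SA ∪ Sym2.map (glue v u) '' SB)).Reachable
            (glue v u b.1) (glue v u v) :=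
          Reachable.map (⟨glue v u, fun h => hmapB h⟩ :
            fromEdgeSet SB →g fromEdgeSet (Sym2.map Sum.inl '' SA ∪ Sym2.map (glue v u) '' SB))
            (treeB.isConnected.preconnected b.1 v)
        rwa [glue_ne v u b.1 b.2, glue_v] at h1
    have hconn : (fromEdgeSet (Sym2.map Sum.inl '' SA ∪ Sym2.map (glue v u) '' SB)).Connected := by
      rw [connected_iff]
      exact ⟨fun x y => (hreach x).trans (hreach y).symm, ⟨Sum.inl u⟩⟩
    refine isTree_of_connected_card _ hconn ?_
    have hcSA : SA.ncard = k * n₁ := by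
      have h1 := treeA.card_edgeFinset
      rw [ecard_eq, fromEdgeSet_edgeSet_of_subset hSAsub, hαcard] at h1
      omega
    have hcSB : SB.ncard = n₁ := by
      have h1 := treeB.card_edgeFinset
      rw [ecard_eq, fromEdgeSet_edgeSet_of_subset hSBsub] at h1
      omega
    rw [ecard_eq, fromEdgeSet_edgeSet_of_subset hUsub,
      Set.ncard_union_eq (images_disjoint _ _ hSBsub) (Set.toFinite _) (Set.toFinite _),
      Set.ncard_image_of_injective _ injinl, Set.ncard_image_of_injective _ injglue,
      hcSA, hcSB, hVR]
    ring

end CBOAux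

namespace CBOAux

open SimpleGraph

lemma card_ne_vertex {β : Type} [Fintype β] (v : β) :
    Fintype.card {b : β // b ≠ v} = Fintype.card β - 1 := by
  have h1 := Fintype.card_subtype_compl (fun b : β => b = v)
  rw [Fintype.card_subtype_eq] at h1
  exact h1

lemma oneSum_vertCard {α β : Type} [Fintype α] [Fintype β] (v : β) :
    Fintype.card (α ⊕ {b : β // b ≠ v}) = Fintype.card α + (Fintype.card β - 1) := by
  rw [Fintype.card_sum, card_ne_vertex]

lemma oneSum_edgeCard {α β : Type} [Fintype α] [Fintype β]
    (A : SimpleGraph α) (B : SimpleGraph β) (u : α) (v : β) :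
    (A.oneSum B u v).edgeFinset.card = A.edgeFinset.card + B.edgeFinset.card := by
  rw [ecard_eq, oneSum_edgeSet,
    Set.ncard_union_eq (images_disjoint _ _ (Set.Subset.refl B.edgeSet))
      (Set.toFinite _) (Set.toFinite _),
    Set.ncard_image_of_injective _ (Sym2.map.injective Sum.inl_injective),
    Set.ncard_image_of_injective _ (Sym2.map.injective (glue_injective v u)),
    ← ecard_eq, ← ecard_eq]

lemma iter_pos {Gs : List FinGraph} {R : FinGraph} (h : IsIterSC Gs R) : 0 < Gs.length := by
  induction h with
  | single A => simp
  | step h B u v ih => simp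

lemma key (n m : ℕ) : ∀ {Gs : List FinGraph} {R : FinGraph}, IsIterSC Gs R →
    (∀ A ∈ Gs, A.CyclicallyOrderable ∧ A.vertCount = n ∧ A.edgeCount = m) →
    R.CyclicallyOrderable ∧ R.vertCount = Gs.length * (n - 1) + 1 ∧
      R.edgeCount = Gs.length * m := by
  intro Gs R hR
  induction hR with
  | single A =>
    intro h
    obtain ⟨h1, h2, h3⟩ := h A (by simp)
    have hpos : 1 ≤ Fintype.card A.V := (co_facts A.G h1).1
    refine ⟨h1, ?_, ?_⟩
    · have h2' : Fintype.card A.V = n := h2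
      simp only [List.length_singleton, one_mul]
      show Fintype.card A.V = n - 1 + 1
      omega
    · simpa using h3
  | @step Gs' A hR' B u v ih =>
    intro h
    obtain ⟨ihco, ihvert, ihedge⟩ := ih (fun C hC => h C (List.mem_append_left _ hC))
    obtain ⟨hBco, hBvert, hBedge⟩ := h B (List.mem_append_right _ (by simp))
    have hk : 0 < Gs'.length := iter_pos hR'
    have hBn : Fintype.card B.V = n := hBvert
    have hBm : B.G.edgeFinset.card = m := hBedge
    have hAvert : Fintype.card A.V = Gs'.length * (n - 1) + 1 := ihvert
    have hAedge : A.G.edgeFinset.card = Gs'.length * m := ihedge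
    have hco' : (A.G.oneSum B.G u v).CyclicallyOrderable := by
      refine step_co A.G B.G u v Gs'.length hk ?_ ?_ ihco hBco
      · rw [hAvert, hBn]
      · rw [hAedge, hBm]
    have hlen : (Gs' ++ [B]).length = Gs'.length + 1 := by simp
    refine ⟨hco', ?_, ?_⟩
    · show Fintype.card (A.V ⊕ {b : B.V // b ≠ v}) = (Gs' ++ [B]).length * (n - 1) + 1
      rw [oneSum_vertCard, hAvert, hBn, hlen]
      have : (Gs'.length + 1) * (n - 1) = Gs'.length * (n - 1) + (n - 1) := by ring
      omega
    · show (A.G.oneSum B.G u v).edgeFinset.card = (Gs' ++ [B]).length * m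
      rw [oneSum_edgeCard, hAedge, hBm, hlen]
      ring

end CBOAux

/-- Let `t ≥ 2` and let `G₁, …, Gₜ` be cyclically orderable graphs with equal
numbers of vertices and equal numbers of edges. Then any iterated series
composition `G₁ ⊕ G₂ ⊕ ⋯ ⊕ Gₜ` is cyclically orderable. -/
theorem iterSC_cyclicallyOrderable (t : ℕ) (ht : 2 ≤ t)
    (Gs : List FinGraph) (hlen : Gs.length = t)
    (hco : ∀ A ∈ Gs, A.CyclicallyOrderable)
    (hV : ∀ A ∈ Gs, ∀ B ∈ Gs, A.vertCount = B.vertCount)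
    (hE : ∀ A ∈ Gs, ∀ B ∈ Gs, A.edgeCount = B.edgeCount)
    (R : FinGraph) (hR : IsIterSC Gs R) :
    R.CyclicallyOrderable := by
  have hne : 0 < Gs.length := by omega
  obtain ⟨A0, hA0⟩ : ∃ A0, A0 ∈ Gs := by
    rcases Gs with _ | ⟨A0, Gs'⟩
    · simp at hne
    · exact ⟨A0, by simp⟩
  exact (CBOAux.key A0.vertCount A0.edgeCount hR
    (fun A hA => ⟨hco A hA, hV A hA A0 hA0, hE A hA A0 hA0⟩)).1

end
end

section
/- Let G and H be cyclically orderable graphs with equal density d(G) = d(H). Then every series composition G ⊕ H is cyclically orderable. -/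
open scoped Classical

noncomputable section

/-- The density of a graph `G`: `d(G) = |E(G)| / (|V(G)| − 1)`. -/
noncomputable def SimpleGraph.density {V : Type} [Fintype V] (G : SimpleGraph V) : ℚ :=
  (G.edgeFinset.card : ℚ) / ((Fintype.card V : ℚ) - 1)


open SimpleGraph

/-- Collapsing projection: walks in `Γ` map to reachability in `T`. -/
lemma reachable_collapse {X Y : Type} {Γ : SimpleGraph X} {T : SimpleGraph Y} (π : X → Y)
    (h : ∀ ⦃x x'⦄, Γ.Adj x x' → π x = π x' ∨ T.Adj (π x) (π x')) {x x' : X}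
    (hr : Γ.Reachable x x') : T.Reachable (π x) (π x') := by
  obtain ⟨w⟩ := hr
  induction w with
  | nil => exact Reachable.refl _
  | cons ha p ih =>
    rcases h ha with he | hadj
    · rw [he]; exact ih
    · exact hadj.reachable.trans ih

/-- The embedding of the second factor into the one-sum vertex set. -/
def gmap {α β : Type} (u : α) (v : β) : β → α ⊕ {b : β // b ≠ v} :=
  fun b => if h : b = v then Sum.inl u else Sum.inr ⟨b, h⟩

lemma gmap_v {α β : Type} (u : α) (v : β) : gmap u v v = Sum.inl u := dif_pos rfl

lemma gmap_ne {α β : Type} (u : α) (v : β) {b : β} (h : b ≠ v) :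
    gmap u v b = Sum.inr ⟨b, h⟩ := dif_neg h

lemma gmap_inj {α β : Type} (u : α) (v : β) : Function.Injective (gmap u v) := by
  intro b b' h
  unfold gmap at h
  split_ifs at h with h1 h2 h2 <;> simp_all

lemma glue_adj_iff {α β : Type} (u : α) (v : β) (S1 : Set (Sym2 α)) (S2 : Set (Sym2 β))
    {x y : α ⊕ {b : β // b ≠ v}} :
    (fromEdgeSet (Sym2.map Sum.inl '' S1 ∪ Sym2.map (gmap u v) '' S2)).Adj x y ↔
      (∃ a a', s(a, a') ∈ S1 ∧ a ≠ a' ∧ x = Sum.inl a ∧ y = Sum.inl a') ∨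
      (∃ b b', s(b, b') ∈ S2 ∧ b ≠ b' ∧ x = gmap u v b ∧ y = gmap u v b') := by
  rw [fromEdgeSet_adj]
  constructor
  · rintro ⟨hmem | hmem, hne⟩
    · obtain ⟨s, hs, hmap⟩ := hmem
      induction s with
      | _ a a' =>
        rw [Sym2.map_pair_eq, Sym2.eq_iff] at hmap
        rcases hmap with ⟨hx, hy⟩ | ⟨hy, hx⟩
        · exact Or.inl ⟨a, a', hs, by rintro rfl; exact hne (hx.symm.trans hy), hx.symm, hy.symm⟩
        · exact Or.inl ⟨a', a, by rwa [Sym2.eq_swap] at hs, by rintro rfl; exact hne (hx.symm.trans hy), hx.symm, hy.symm⟩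
    · obtain ⟨s, hs, hmap⟩ := hmem
      induction s with
      | _ b b' =>
        rw [Sym2.map_pair_eq, Sym2.eq_iff] at hmap
        rcases hmap with ⟨hx, hy⟩ | ⟨hy, hx⟩
        · exact Or.inr ⟨b, b', hs, by rintro rfl; exact hne (hx.symm.trans hy), hx.symm, hy.symm⟩
        · exact Or.inr ⟨b', b, by rwa [Sym2.eq_swap] at hs, by rintro rfl; exact hne (hx.symm.trans hy), hx.symm, hy.symm⟩
  · rintro (⟨a, a', hs, hne, rfl, rfl⟩ | ⟨b, b', hs, hne, rfl, rfl⟩)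
    · exact ⟨Or.inl ⟨s(a, a'), hs, Sym2.map_pair_eq _ _ _⟩, by simpa using hne⟩
    · exact ⟨Or.inr ⟨s(b, b'), hs, Sym2.map_pair_eq _ _ _⟩, fun h => hne (gmap_inj u v h)⟩

def pi1 {α β : Type} (u : α) (v : β) : α ⊕ {b : β // b ≠ v} → α :=
  Sum.elim id (fun _ => u)

def pi2 {α β : Type} (u : α) (v : β) : α ⊕ {b : β // b ≠ v} → β :=
  Sum.elim (fun _ => v) Subtype.val

lemma pi1_gmap {α β : Type} (u : α) (v : β) (b : β) : pi1 u v (gmap u v b) = u := by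
  unfold gmap; split_ifs <;> rfl

lemma pi2_gmap {α β : Type} (u : α) (v : β) (b : β) : pi2 u v (gmap u v b) = b := by
  unfold gmap
  split_ifs with h
  · exact h.symm
  · rfl

lemma glue_isTree {α β : Type} (u : α) (v : β) (S1 : Set (Sym2 α)) (S2 : Set (Sym2 β))
    (h1 : (fromEdgeSet S1).IsTree) (h2 : (fromEdgeSet S2).IsTree) :
    (fromEdgeSet (Sym2.map Sum.inl '' S1 ∪ Sym2.map (gmap u v) '' S2)).IsTree := by
  set W := fromEdgeSet (Sym2.map Sum.inl '' S1 ∪ Sym2.map (gmap u v) '' S2) with hW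
  constructor
  · -- connectedness
    rw [connected_iff]
    refine ⟨?_, ⟨Sum.inl u⟩⟩
    have key : ∀ x, W.Reachable (Sum.inl u) x := by
      rintro (a | b)
      · exact reachable_collapse (Γ := fromEdgeSet S1) (T := W) Sum.inl
          (fun x x' h => by
            rw [fromEdgeSet_adj] at h
            exact Or.inr ((glue_adj_iff u v S1 S2).2 (Or.inl ⟨x, x', h.1, h.2, rfl, rfl⟩)))
          (h1.isConnected.preconnected u a)
      · have := reachable_collapse (Γ := fromEdgeSet S2) (T := W) (gmap u v)
          (fun x x' h => by
            rw [fromEdgeSet_adj] at h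
            exact Or.inr ((glue_adj_iff u v S1 S2).2 (Or.inr ⟨x, x', h.1, h.2, rfl, rfl⟩)))
          (h2.isConnected.preconnected v b.1)
        rw [gmap_v, gmap_ne u v b.2] at this
        exact this
    exact fun x y => (key x).symm.trans (key y)
  · -- acyclicity
    rw [isAcyclic_iff_forall_adj_isBridge]
    intro x y hxy
    rcases (glue_adj_iff u v S1 S2).1 hxy with ⟨a, a', hs, hne, rfl, rfl⟩ |
      ⟨b, b', hs, hne, rfl, rfl⟩
    · rw [isBridge_iff]
      intro hreach
      have hbridge : (fromEdgeSet S1).IsBridge s(a, a') :=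
        (isAcyclic_iff_forall_adj_isBridge.1 h1.IsAcyclic)
          (by rw [fromEdgeSet_adj]; exact ⟨hs, hne⟩)
      rw [isBridge_iff] at hbridge
      refine hbridge ?_
      have := reachable_collapse (Γ := W \ fromEdgeSet {s(Sum.inl a, Sum.inl a')})
        (T := fromEdgeSet S1 \ fromEdgeSet {s(a, a')}) (pi1 u v) ?_ hreach
      · exact this
      · rintro z z' ⟨hadj, hnot⟩
        rcases (glue_adj_iff u v S1 S2).1 hadj with ⟨c, c', hcs, hcne, rfl, rfl⟩ |
          ⟨c, c', hcs, hcne, rfl, rfl⟩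
        · refine Or.inr ⟨?_, ?_⟩
          · rw [fromEdgeSet_adj]; exact ⟨hcs, hcne⟩
          · rw [fromEdgeSet_adj]
            rintro ⟨hmem, -⟩
            apply hnot
            rw [fromEdgeSet_adj]
            refine ⟨?_, hadj.ne⟩
            rw [Set.mem_singleton_iff] at hmem ⊢
            simpa [pi1] using hmem
        · exact Or.inl ((pi1_gmap u v c).trans (pi1_gmap u v c').symm)
    · rw [isBridge_iff]
      intro hreach
      have hbridge : (fromEdgeSet S2).IsBridge s(b, b') :=
        (isAcyclic_iff_forall_adj_isBridge.1 h2.IsAcyclic)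
          (by rw [fromEdgeSet_adj]; exact ⟨hs, hne⟩)
      rw [isBridge_iff] at hbridge
      refine hbridge ?_
      have := reachable_collapse (Γ := W \ fromEdgeSet {s(gmap u v b, gmap u v b')})
        (T := fromEdgeSet S2 \ fromEdgeSet {s(b, b')}) (pi2 u v) ?_ hreach
      · rwa [pi2_gmap, pi2_gmap] at this
      · rintro z z' ⟨hadj, hnot⟩
        rcases (glue_adj_iff u v S1 S2).1 hadj with ⟨c, c', hcs, hcne, rfl, rfl⟩ |
          ⟨c, c', hcs, hcne, rfl, rfl⟩
        · exact Or.inl rfl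
        · rw [pi2_gmap, pi2_gmap]
          refine Or.inr ⟨?_, ?_⟩
          · rw [fromEdgeSet_adj]; exact ⟨hcs, hcne⟩
          · rw [fromEdgeSet_adj]
            rintro ⟨hmem, -⟩
            apply hnot
            rw [fromEdgeSet_adj]
            refine ⟨?_, hadj.ne⟩
            rw [Set.mem_singleton_iff] at hmem ⊢
            rw [← Sym2.map_pair_eq (gmap u v), ← Sym2.map_pair_eq (gmap u v), hmem]

/-- Decomposition of a quasi-periodic step function. -/
lemma cdecomp (c : ℕ → ℕ) (m mc : ℕ) (hper : ∀ t, c (t + m) = c t + mc) :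
    ∀ q r, c (q * m + r) = q * mc + c r := by
  intro q
  induction q with
  | zero => simp
  | succ n ih =>
    intro r
    have : (n + 1) * m + r = (n * m + r) + m := by ring
    rw [this, hper, ih, add_mul, one_mul]
    ring

/-- The key window lemma: labels of jump positions in a cyclic window of length `k`
form a cyclic interval of length `kc` starting at `c i`. -/
lemma window_iff (c : ℕ → ℕ) (m mc k kc : ℕ) (hm : 0 < m)
    (hc0 : c 0 = 0) (hmono : ∀ t, c t ≤ c (t + 1)) (hstep : ∀ t, c (t + 1) ≤ c t + 1)
    (hper : ∀ t, c (t + m) = c t + mc) (hwin : ∀ t, c (t + k) = c t + kc) (i a : ℕ) :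
    (∃ j < k, c ((i + j) % m) < c ((i + j) % m + 1) ∧ c ((i + j) % m) = a)
      ↔ ∃ j' < kc, a = (c i + j') % mc := by
  have hmono' : Monotone c := monotone_nat_of_le_succ hmono
  have hcm : c m = mc := by have := hper 0; simpa [hc0] using this
  have hdec : ∀ t, c t = t / m * mc + c (t % m) := by
    intro t
    conv_lhs => rw [← Nat.div_add_mod t m, Nat.mul_comm]
    exact cdecomp c m mc hper _ _
  have hdec1 : ∀ t, c (t + 1) = t / m * mc + c (t % m + 1) := by
    intro t
    conv_lhs => rw [← Nat.div_add_mod t m, Nat.mul_comm]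
    rw [add_assoc]
    exact cdecomp c m mc hper _ _
  have hjb : ∀ r, r < m → c r < c (r + 1) → c r < mc := by
    intro r hr hj
    calc c r < c (r + 1) := hj
    _ ≤ c m := hmono' (by omega)
    _ = mc := hcm
  constructor
  · rintro ⟨j, hj, hjump, rfl⟩
    set t := i + j with ht
    set r := t % m with hr
    have hrm : r < m := Nat.mod_lt _ hm
    have hcr : c r < mc := hjb r hrm hjump
    have h1 : c t = t / m * mc + c r := hdec t
    have h2 : c (t + 1) = t / m * mc + c (r + 1) := hdec1 t
    have hjt : c t < c (t + 1) := by omega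
    have hle : c i ≤ c t := hmono' (by omega)
    have hlt : c (t + 1) ≤ c (i + k) := hmono' (by omega)
    have hik : c (i + k) = c i + kc := hwin i
    refine ⟨c t - c i, by omega, ?_⟩
    have : c t % mc = c r := by
      rw [h1, Nat.mul_comm, Nat.mul_add_mod]
      exact Nat.mod_eq_of_lt hcr
    rw [← this]
    congr 1
    omega
  · rintro ⟨j', hj', rfl⟩
    set x := c i + j' with hx
    have hkpos : 0 < k := by
      rcases Nat.eq_zero_or_pos k with h0 | h0
      · exfalso
        have h := hwin 0
        rw [h0] at h
        simp [hc0] at h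
        omega
      · exact h0
    have hik : c (i + k) = c i + kc := hwin i
    have hex : ∃ j, x < c (i + j + 1) := ⟨k - 1, by
      have : i + (k - 1) + 1 = i + k := by omega
      rw [this, hik]; omega⟩
    set j0 := Nat.find hex with hj0
    have hlt : x < c (i + j0 + 1) := Nat.find_spec hex
    have hub : j0 < k := by
      have : j0 ≤ k - 1 := Nat.find_le (by
        have : i + (k - 1) + 1 = i + k := by omega
        rw [this, hik]; omega)
      omega
    have hlb : c (i + j0) ≤ x := by
      rcases Nat.eq_zero_or_pos j0 with h0 | h0
      · rw [h0]; simpa using hx ▸ (by omega : c i ≤ x)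
      · have := Nat.find_min hex (m := j0 - 1) (by omega)
        push_neg at this
        have heq : i + (j0 - 1) + 1 = i + j0 := by omega
        rwa [heq] at this
    have hstep' := hstep (i + j0)
    have hct : c (i + j0) = x ∧ c (i + j0 + 1) = x + 1 := by omega
    set t := i + j0 with ht
    set r := t % m with hr
    have hrm : r < m := Nat.mod_lt _ hm
    have h1 : c t = t / m * mc + c r := hdec t
    have h2 : c (t + 1) = t / m * mc + c (r + 1) := hdec1 t
    have hjump : c r < c (r + 1) := by omega
    have hcr : c r < mc := hjb r hrm hjump
    refine ⟨j0, hub, hjump, ?_⟩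
    have : c t % mc = c r := by
      rw [h1, Nat.mul_comm, Nat.mul_add_mod]
      exact Nat.mod_eq_of_lt hcr
    rw [← this, hct.1]

/-- `cfun m1 m t = ⌊t·m1/m⌋`: the number of `G`-positions below `t`. -/
def cfun (m1 m : ℕ) : ℕ → ℕ := fun t => t * m1 / m

/-- number of `H`-positions below `t`. -/
def dfun (m1 m : ℕ) : ℕ → ℕ := fun t => t - cfun m1 m t

lemma cfun_zero (m1 m : ℕ) : cfun m1 m 0 = 0 := by simp [cfun]

lemma cfun_mono (m1 m : ℕ) (t : ℕ) : cfun m1 m t ≤ cfun m1 m (t + 1) :=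
  Nat.div_le_div_right (Nat.mul_le_mul_right _ (Nat.le_succ t))

lemma cfun_step (m1 m : ℕ) (hm : 0 < m) (hle : m1 ≤ m) (t : ℕ) :
    cfun m1 m (t + 1) ≤ cfun m1 m t + 1 := by
  unfold cfun
  have h1 : (t + 1) * m1 = t * m1 + m1 := by ring
  rw [h1]
  calc (t * m1 + m1) / m ≤ (t * m1 + m) / m := Nat.div_le_div_right (by omega)
  _ = t * m1 / m + 1 := Nat.add_div_right _ hm

lemma cfun_per (m1 m : ℕ) (hm : 0 < m) (t : ℕ) : cfun m1 m (t + m) = cfun m1 m t + m1 := by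
  unfold cfun
  rw [add_mul, Nat.mul_comm m m1, Nat.add_mul_div_right _ _ hm]

lemma cfun_win (m1 m k kc : ℕ) (hm : 0 < m) (hkk : k * m1 = kc * m) (t : ℕ) :
    cfun m1 m (t + k) = cfun m1 m t + kc := by
  unfold cfun
  rw [add_mul, hkk, Nat.add_mul_div_right _ _ hm]

lemma cfun_le_self (m1 m : ℕ) (hm : 0 < m) (hle : m1 ≤ m) (t : ℕ) : cfun m1 m t ≤ t := by
  unfold cfun
  calc t * m1 / m ≤ t * m / m := Nat.div_le_div_right (Nat.mul_le_mul_left _ hle)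
  _ = t := Nat.mul_div_cancel t hm

lemma cfun_m (m1 m : ℕ) (hm : 0 < m) : cfun m1 m m = m1 := by
  have := cfun_per m1 m hm 0
  simpa [cfun_zero] using this

lemma cfun_jump_lt (m1 m : ℕ) (t : ℕ) (ht : t < m)
    (h : cfun m1 m t < cfun m1 m (t + 1)) : cfun m1 m t < m1 := by
  have hm : 0 < m := by omega
  have hmono : Monotone (cfun m1 m) := monotone_nat_of_le_succ (cfun_mono m1 m)
  calc cfun m1 m t < cfun m1 m (t + 1) := h
  _ ≤ cfun m1 m m := hmono (by omega)
  _ = m1 := cfun_m m1 m hm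

lemma dfun_mono (m1 m : ℕ) (hm : 0 < m) (hle : m1 ≤ m) :
    Monotone (dfun m1 m) := by
  apply monotone_nat_of_le_succ
  intro t
  have h1 := cfun_step m1 m hm hle t
  have h2 := cfun_le_self m1 m hm hle t
  unfold dfun
  omega

lemma dfun_jump_lt (m1 m : ℕ) (hm : 0 < m) (hle : m1 ≤ m) (t : ℕ) (ht : t < m)
    (h : ¬ cfun m1 m t < cfun m1 m (t + 1)) : dfun m1 m t < m - m1 := by
  have h1 := cfun_mono m1 m t
  have h2 := cfun_le_self m1 m hm hle t
  have h3 : dfun m1 m (t + 1) = dfun m1 m t + 1 := by unfold dfun; omega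
  have h4 : dfun m1 m (t + 1) ≤ dfun m1 m m := dfun_mono m1 m hm hle (by omega)
  have h5 : dfun m1 m m = m - m1 := by unfold dfun; rw [cfun_m m1 m hm]
  omega

lemma dfun_jump_iff (m1 m : ℕ) (hm : 0 < m) (hle : m1 ≤ m) (t : ℕ) :
    dfun m1 m t < dfun m1 m (t + 1) ↔ ¬ cfun m1 m t < cfun m1 m (t + 1) := by
  have h1 := cfun_mono m1 m t
  have h2 := cfun_le_self m1 m hm hle t
  have h3 := cfun_step m1 m hm hle t
  unfold dfun
  omega

/-- The merge function: position `t` carries the `⌊t·m1/m⌋`-th edge of `G` if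
`⌊·m1/m⌋` jumps at `t`, and the `(t - ⌊t·m1/m⌋)`-th edge of `H` otherwise. -/
def fmerge (m1 m2 : ℕ) : Fin (m1 + m2) → Fin m1 ⊕ Fin m2 := fun t =>
  if h : cfun m1 (m1 + m2) ↑t < cfun m1 (m1 + m2) (↑t + 1) then
    Sum.inl ⟨cfun m1 (m1 + m2) ↑t, cfun_jump_lt m1 (m1 + m2) ↑t t.2 h⟩
  else
    Sum.inr ⟨dfun m1 (m1 + m2) ↑t, by
      have := dfun_jump_lt m1 (m1 + m2) t.pos (Nat.le_add_right _ _) ↑t t.2 h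
      omega⟩

lemma fmerge_inj (m1 m2 : ℕ) : Function.Injective (fmerge m1 m2) := by
  have key : ∀ s t : Fin (m1 + m2), (s : ℕ) < (t : ℕ) → fmerge m1 m2 s = fmerge m1 m2 t → False := by
    intro s t hst h
    have hm : 0 < m1 + m2 := by omega
    have hmono : Monotone (cfun m1 (m1 + m2)) := monotone_nat_of_le_succ (cfun_mono _ _)
    have hdmono : Monotone (dfun m1 (m1 + m2)) := dfun_mono _ _ hm (by omega)
    unfold fmerge at h
    by_cases h1 : cfun m1 (m1 + m2) ↑s < cfun m1 (m1 + m2) (↑s + 1) <;>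
      by_cases h2 : cfun m1 (m1 + m2) ↑t < cfun m1 (m1 + m2) (↑t + 1)
    · rw [dif_pos h1, dif_pos h2, Sum.inl.injEq, Fin.mk.injEq] at h
      have : cfun m1 (m1 + m2) (↑s + 1) ≤ cfun m1 (m1 + m2) ↑t := hmono (by omega)
      omega
    · rw [dif_pos h1, dif_neg h2] at h
      exact absurd h (by simp)
    · rw [dif_neg h1, dif_pos h2] at h
      exact absurd h (by simp)
    · rw [dif_neg h1, dif_neg h2, Sum.inr.injEq, Fin.mk.injEq] at h
      have hd : dfun m1 (m1 + m2) ↑s < dfun m1 (m1 + m2) (↑s + 1) :=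
        (dfun_jump_iff m1 (m1 + m2) hm (Nat.le_add_right _ _) ↑s).2 h1
      have : dfun m1 (m1 + m2) (↑s + 1) ≤ dfun m1 (m1 + m2) ↑t := hdmono (by omega)
      omega
  intro s t h
  rcases lt_trichotomy (s : ℕ) (t : ℕ) with hlt | heq | hgt
  · exact absurd h (fun h => key s t hlt h)
  · exact Fin.ext heq
  · exact absurd h.symm (fun h => key t s hgt h)

lemma fmerge_bij (m1 m2 : ℕ) : Function.Bijective (fmerge m1 m2) :=
  (Fintype.bijective_iff_injective_and_card _).2 ⟨fmerge_inj m1 m2, by simp⟩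
open SimpleGraph

lemma window_c_iff (m1 m2 k1 k2 : ℕ) (hm : 0 < m1 + m2)
    (hmk : (k1 + k2) * m1 = k1 * (m1 + m2)) (i a : ℕ) :
    (∃ j < k1 + k2, cfun m1 (m1 + m2) ((i + j) % (m1 + m2)) <
        cfun m1 (m1 + m2) ((i + j) % (m1 + m2) + 1) ∧
        cfun m1 (m1 + m2) ((i + j) % (m1 + m2)) = a)
      ↔ ∃ j' < k1, a = (cfun m1 (m1 + m2) i + j') % m1 :=
  window_iff _ _ _ _ _ hm (cfun_zero _ _) (cfun_mono _ _)
    (cfun_step _ _ hm (Nat.le_add_right _ _)) (cfun_per _ _ hm)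
    (cfun_win _ _ _ _ hm hmk) i a

lemma window_d_iff (m1 m2 k1 k2 : ℕ) (hm : 0 < m1 + m2)
    (hmk : (k1 + k2) * m1 = k1 * (m1 + m2)) (i a : ℕ) :
    (∃ j < k1 + k2, dfun m1 (m1 + m2) ((i + j) % (m1 + m2)) <
        dfun m1 (m1 + m2) ((i + j) % (m1 + m2) + 1) ∧
        dfun m1 (m1 + m2) ((i + j) % (m1 + m2)) = a)
      ↔ ∃ j' < k2, a = (dfun m1 (m1 + m2) i + j') % m2 := by
  have hle : m1 ≤ m1 + m2 := Nat.le_add_right _ _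
  refine window_iff _ _ _ _ _ hm ?_ ?_ ?_ ?_ ?_ i a
  · simp [dfun, cfun]
  · intro t
    have h1 := cfun_mono m1 (m1 + m2) t
    have h2 := cfun_step m1 (m1 + m2) hm hle t
    have h3 := cfun_le_self m1 (m1 + m2) hm hle t
    unfold dfun; omega
  · intro t
    have h1 := cfun_mono m1 (m1 + m2) t
    unfold dfun; omega
  · intro t
    have h1 := cfun_per m1 (m1 + m2) hm t
    have h2 := cfun_le_self m1 (m1 + m2) hm hle t
    have h3 := cfun_m m1 (m1 + m2) hm
    unfold dfun; omega
  · intro t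
    have h1 := cfun_win m1 (m1 + m2) _ _ hm hmk t
    have h2 := cfun_le_self m1 (m1 + m2) hm hle t
    have h5 : cfun m1 (m1 + m2) t + k1 ≤ t + (k1 + k2) := by
      have := cfun_le_self m1 (m1 + m2) hm hle (t + (k1 + k2))
      omega
    unfold dfun; omega

lemma fmerge_eq_inl_iff (m1 m2 : ℕ) (t : Fin (m1 + m2)) (a : Fin m1) :
    fmerge m1 m2 t = Sum.inl a ↔
      (cfun m1 (m1 + m2) ↑t < cfun m1 (m1 + m2) (↑t + 1) ∧ cfun m1 (m1 + m2) ↑t = ↑a) := by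
  unfold fmerge
  split_ifs with h
  · simp [Fin.ext_iff, h]
  · simp [h]

lemma fmerge_eq_inr_iff (m1 m2 : ℕ) (t : Fin (m1 + m2)) (b : Fin m2) :
    fmerge m1 m2 t = Sum.inr b ↔
      (dfun m1 (m1 + m2) ↑t < dfun m1 (m1 + m2) (↑t + 1) ∧ dfun m1 (m1 + m2) ↑t = ↑b) := by
  have hj := dfun_jump_iff m1 (m1 + m2) t.pos (Nat.le_add_right _ _) ↑t
  unfold fmerge
  split_ifs with h
  · constructor
    · rintro ⟨⟩
    · rintro ⟨hd, -⟩
      exact absurd h (by omega)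
  · simp only [Sum.inr.injEq, Fin.ext_iff]
    constructor
    · intro hv
      exact ⟨hj.2 h, hv⟩
    · rintro ⟨-, hv⟩
      exact hv

/-- The one-sum is the graph on the glued edge set. -/
lemma oneSum_eq {α β : Type} (G : SimpleGraph α) (H : SimpleGraph β) (u : α) (v : β) :
    G.oneSum H u v =
      fromEdgeSet (Sym2.map Sum.inl '' G.edgeSet ∪ Sym2.map (gmap u v) '' H.edgeSet) := by
  ext x y
  rw [glue_adj_iff, SimpleGraph.oneSum, SimpleGraph.fromRel_adj]
  constructor
  · rintro ⟨hne, hr⟩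
    match x, y, hne, hr with
    | Sum.inl a, Sum.inl a', hne, hr =>
      have hadj : G.Adj a a' := by
        rcases hr with h | h
        · exact h
        · exact h.symm
      exact Or.inl ⟨a, a', hadj, hadj.ne, rfl, rfl⟩
    | Sum.inl a, Sum.inr b, hne, hr =>
      have hadj : a = u ∧ H.Adj v b.1 := by
        rcases hr with ⟨h1, h2⟩ | ⟨h1, h2⟩
        · exact ⟨h1, h2⟩
        · exact ⟨h1, h2.symm⟩
      refine Or.inr ⟨v, b.1, hadj.2, hadj.2.ne, ?_, ?_⟩
      · rw [gmap_v, hadj.1]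
      · rw [gmap_ne u v b.2]
    | Sum.inr b, Sum.inl a, hne, hr =>
      have hadj : a = u ∧ H.Adj b.1 v := by
        rcases hr with ⟨h1, h2⟩ | ⟨h1, h2⟩
        · exact ⟨h1, h2⟩
        · exact ⟨h1, h2.symm⟩
      refine Or.inr ⟨b.1, v, hadj.2, hadj.2.ne, ?_, ?_⟩
      · rw [gmap_ne u v b.2]
      · rw [gmap_v, hadj.1]
    | Sum.inr b, Sum.inr b', hne, hr =>
      have hadj : H.Adj b.1 b'.1 := by
        rcases hr with h | h
        · exact h
        · exact h.symm
      refine Or.inr ⟨b.1, b'.1, hadj, hadj.ne, ?_, ?_⟩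
      · rw [gmap_ne u v b.2]
      · rw [gmap_ne u v b'.2]
  · rintro (⟨a, a', hadj, hne, rfl, rfl⟩ | ⟨b, b', hadj, hne, rfl, rfl⟩)
    · rw [SimpleGraph.mem_edgeSet] at hadj
      exact ⟨by simpa using hadj.ne, Or.inl hadj⟩
    · rw [SimpleGraph.mem_edgeSet] at hadj
      rcases eq_or_ne b v with hbv | hbv
      · have hb'v : b' ≠ v := fun h => hne (hbv.trans h.symm)
        rw [hbv] at hadj
        rw [hbv, gmap_v, gmap_ne u v hb'v]
        exact ⟨by simp, Or.inl ⟨rfl, hadj⟩⟩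
      · rcases eq_or_ne b' v with hb'v | hb'v
        · rw [hb'v] at hadj
          rw [hb'v, gmap_v, gmap_ne u v hbv]
          exact ⟨by simp, Or.inl ⟨rfl, hadj⟩⟩
        · rw [gmap_ne u v hbv, gmap_ne u v hb'v]
          refine ⟨by simp [hne], Or.inl hadj⟩

lemma oneSum_edgeSet {α β : Type} (G : SimpleGraph α) (H : SimpleGraph β) (u : α) (v : β) :
    (G.oneSum H u v).edgeSet =
      Sym2.map Sum.inl '' G.edgeSet ∪ Sym2.map (gmap u v) '' H.edgeSet := by
  rw [oneSum_eq, edgeSet_fromEdgeSet, sdiff_eq_left]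
  rw [Set.disjoint_right]
  rintro s hdiag (⟨s0, hs0, rfl⟩ | ⟨s0, hs0, rfl⟩)
  · induction s0 with
    | _ a a' =>
      simp only [Sym2.map_pair_eq, Set.mem_setOf_eq, Sym2.mk_isDiag_iff] at hdiag
      exact (G.mem_edgeSet.1 hs0).ne (by simpa using hdiag)
  · induction s0 with
    | _ b b' =>
      simp only [Sym2.map_pair_eq, Set.mem_setOf_eq, Sym2.mk_isDiag_iff] at hdiag
      exact (H.mem_edgeSet.1 hs0).ne (gmap_inj u v hdiag)

/-- The edge bijection for the one-sum. -/
lemma oneSum_edge_bij {α β : Type} (G : SimpleGraph α) (H : SimpleGraph β) (u : α) (v : β) :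
    Function.Bijective (fun x : G.edgeSet ⊕ H.edgeSet =>
      (⟨Sum.elim (fun e : G.edgeSet => Sym2.map Sum.inl (e : Sym2 α))
          (fun e : H.edgeSet => Sym2.map (gmap u v) (e : Sym2 β)) x, by
        rw [oneSum_edgeSet]
        rcases x with e | e
        · exact Or.inl ⟨↑e, e.2, rfl⟩
        · exact Or.inr ⟨↑e, e.2, rfl⟩⟩ : (G.oneSum H u v).edgeSet)) := by
  have cross : ∀ (s1 : Sym2 α) (s2 : Sym2 β), s2 ∈ H.edgeSet →
      Sym2.map Sum.inl s1 ≠ Sym2.map (gmap u v) s2 := by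
    intro s1 s2 hs2
    induction s2 with
    | _ b b' =>
      have hne : b ≠ b' := (H.mem_edgeSet.1 hs2).ne
      intro heq
      have hbb : ∃ w : β, w ≠ v ∧ w ∈ s(b, b') := by
        rcases eq_or_ne b v with rfl | hbv
        · exact ⟨b', fun h => hne h.symm, by simp⟩
        · exact ⟨b, hbv, by simp⟩
      obtain ⟨w, hwv, hw⟩ := hbb
      have hmem : gmap u v w ∈ Sym2.map (gmap u v) s(b, b') := Sym2.mem_map.2 ⟨w, hw, rfl⟩
      rw [← heq] at hmem
      obtain ⟨z, -, hz⟩ := Sym2.mem_map.1 hmem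
      rw [gmap_ne u v hwv] at hz
      exact absurd hz (by simp)
  constructor
  · rintro (e | e) (e' | e') h
    · rw [Subtype.mk.injEq] at h
      exact congrArg Sum.inl (Subtype.ext (Sym2.map.injective Sum.inl_injective h))
    · rw [Subtype.mk.injEq] at h
      exact absurd h (cross _ _ e'.2)
    · rw [Subtype.mk.injEq] at h
      exact absurd h.symm (cross _ _ e.2)
    · rw [Subtype.mk.injEq] at h
      exact congrArg Sum.inr (Subtype.ext (Sym2.map.injective (gmap_inj u v) h))
  · rintro ⟨s, hs⟩
    rw [oneSum_edgeSet] at hs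
    rcases hs with ⟨s0, hs0, rfl⟩ | ⟨s0, hs0, rfl⟩
    · exact ⟨Sum.inl ⟨s0, hs0⟩, rfl⟩
    · exact ⟨Sum.inr ⟨s0, hs0⟩, rfl⟩

lemma edgeFinset_card_of_card_le_one {γ : Type} [Fintype γ] (K : SimpleGraph γ)
    (h : Fintype.card γ ≤ 1) : K.edgeFinset.card = 0 := by
  rw [Finset.card_eq_zero, Finset.eq_empty_iff_forall_notMem]
  intro e he
  rw [SimpleGraph.mem_edgeFinset] at he
  induction e with
  | _ a b =>
    exact (K.mem_edgeSet.1 he).ne (Fintype.card_le_one_iff.1 h a b)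
/-- If `G` and `H` are cyclically orderable graphs with equal density
`d(G) = d(H)`, then every series composition `G ⊕ H` is cyclically orderable. -/
theorem oneSum_cyclicallyOrderable_of_density_eq {α β : Type} [Fintype α] [Fintype β]
    (G : SimpleGraph α) (H : SimpleGraph β) (u : α) (v : β)
    (hG : G.CyclicallyOrderable) (hH : H.CyclicallyOrderable)
    (hd : G.density = H.density) :
    (G.oneSum H u v).CyclicallyOrderable := by
  classical
  set m1 := G.edgeFinset.card with hm1def
  set m2 := H.edgeFinset.card with hm2def
  set k1 := Fintype.card α - 1 with hk1def
  set k2 := Fintype.card β - 1 with hk2def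
  obtain ⟨O1, hO1⟩ := hG
  obtain ⟨O2, hO2⟩ := hH
  have hne1 : Nonempty α := (hO1 0).isConnected.nonempty
  have hne2 : Nonempty β := (hO2 0).isConnected.nonempty
  have hca : 1 ≤ Fintype.card α := Fintype.card_pos_iff.mpr hne1
  have hcb : 1 ≤ Fintype.card β := Fintype.card_pos_iff.mpr hne2
  have hcross : m1 * k2 = k1 * m2 := by
    rcases Nat.eq_zero_or_pos k1 with hk1 | hk1
    · have hm10 : m1 = 0 := by
        rw [hm1def]; exact edgeFinset_card_of_card_le_one G (by omega)
      simp [hm10, hk1]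
    rcases Nat.eq_zero_or_pos k2 with hk2 | hk2
    · have hm20 : m2 = 0 := by
        rw [hm2def]; exact edgeFinset_card_of_card_le_one H (by omega)
      simp [hm20, hk2]
    unfold SimpleGraph.density at hd
    rw [← hm1def, ← hm2def] at hd
    have e1 : ((Fintype.card α : ℚ) - 1) = (k1 : ℚ) := by
      have h : Fintype.card α = k1 + 1 := by omega
      rw [h]; push_cast; ring
    have e2 : ((Fintype.card β : ℚ) - 1) = (k2 : ℚ) := by
      have h : Fintype.card β = k2 + 1 := by omega
      rw [h]; push_cast; ring
    rw [e1, e2, div_eq_div_iff (by exact_mod_cast hk1.ne' : (k1 : ℚ) ≠ 0)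
      (by exact_mod_cast hk2.ne' : (k2 : ℚ) ≠ 0)] at hd
    have : (m1 * k2 : ℚ) = (k1 * m2 : ℚ) := by push_cast; linarith
    exact_mod_cast this
  have hmk : (k1 + k2) * m1 = k1 * (m1 + m2) := by
    rw [Nat.add_mul, Nat.mul_add, Nat.mul_comm k2 m1, hcross]
  have hcardE : (G.oneSum H u v).edgeFinset.card = m1 + m2 := by
    rw [SimpleGraph.edgeFinset_card, hm1def, hm2def, SimpleGraph.edgeFinset_card,
      SimpleGraph.edgeFinset_card, ← Fintype.card_sum]
    exact (Fintype.card_congr (Equiv.ofBijective _ (oneSum_edge_bij G H u v))).symm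
  set F : Fin (m1 + m2) ≃ Fin m1 ⊕ Fin m2 :=
    Equiv.ofBijective _ (fmerge_bij m1 m2) with hF
  set Φ : (G.edgeSet ⊕ H.edgeSet) ≃ (G.oneSum H u v).edgeSet :=
    Equiv.ofBijective _ (oneSum_edge_bij G H u v) with hΦ
  set OO : (G.oneSum H u v).edgeSet ≃ Fin ((G.oneSum H u v).edgeFinset.card) :=
    Φ.symm.trans ((O1.sumCongr O2).trans (F.symm.trans (finCongr hcardE.symm))) with hOO
  refine ⟨OO, ?_⟩
  intro i
  set c := cfun m1 (m1 + m2) with hc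
  set d := dfun m1 (m1 + m2) with hdd
  have hk : Fintype.card (α ⊕ {b : β // b ≠ v}) - 1 = k1 + k2 := by
    rw [Fintype.card_sum]
    have hsub : Fintype.card {b : β // b ≠ v} = Fintype.card β - 1 := by
      simp [Fintype.card_subtype_compl]
    rw [hsub, hk1def, hk2def]; omega
  rw [hk]
  have hSeq : {s : Sym2 (α ⊕ {b : β // b ≠ v}) |
        ∃ e : (G.oneSum H u v).edgeSet, (e : Sym2 (α ⊕ {b : β // b ≠ v})) = s ∧
          ∃ j < k1 + k2, (OO e : ℕ) = (i + j) % (G.oneSum H u v).edgeFinset.card} =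
      Sym2.map Sum.inl '' {s : Sym2 α | ∃ e : G.edgeSet, (e : Sym2 α) = s ∧
          ∃ j < k1, (O1 e : ℕ) = (c i + j) % m1} ∪
      Sym2.map (gmap u v) '' {s : Sym2 β | ∃ e : H.edgeSet, (e : Sym2 β) = s ∧
          ∃ j < k2, (O2 e : ℕ) = (d i + j) % m2} := by
    ext s
    simp only [Set.mem_setOf_eq, Set.mem_union, Set.mem_image]
    constructor
    · rintro ⟨e, rfl, j, hj, hOe⟩
      have hmod : (i + j) % (G.oneSum H u v).edgeFinset.card = (i + j) % (m1 + m2) := by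
        rw [hcardE]
      rw [hmod] at hOe
      have hm : 0 < m1 + m2 := (F.symm ((O1.sumCongr O2) (Φ.symm e))).pos
      have hOe' : ((F.symm ((O1.sumCongr O2) (Φ.symm e))) : ℕ) = (i + j) % (m1 + m2) := by
        rw [hOO] at hOe
        simpa [Equiv.trans_apply] using hOe
      rcases hsplit : Φ.symm e with eg | eh
      · have he : e = Φ (Sum.inl eg) := by rw [← hsplit, Equiv.apply_symm_apply]
        rw [hsplit] at hOe'
        have hfm : fmerge m1 m2 (F.symm (Sum.inl (O1 eg))) = Sum.inl (O1 eg) := by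
          have h1 : F (F.symm (Sum.inl (O1 eg))) = Sum.inl (O1 eg) :=
            Equiv.apply_symm_apply _ _
          rwa [hF, Equiv.ofBijective_apply] at h1
        rw [fmerge_eq_inl_iff] at hfm
        simp only [Equiv.sumCongr_apply, Sum.map_inl] at hOe'
        rw [hOe'] at hfm
        obtain ⟨j', hj', ha⟩ :=
          (window_c_iff m1 m2 k1 k2 hm hmk i ↑(O1 eg)).1 ⟨j, hj, hfm.1, hfm.2⟩
        exact Or.inl ⟨↑eg, ⟨eg, rfl, j', hj', ha⟩, by rw [he, hΦ]; rfl⟩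
      · have he : e = Φ (Sum.inr eh) := by rw [← hsplit, Equiv.apply_symm_apply]
        rw [hsplit] at hOe'
        have hfm : fmerge m1 m2 (F.symm (Sum.inr (O2 eh))) = Sum.inr (O2 eh) := by
          have h1 : F (F.symm (Sum.inr (O2 eh))) = Sum.inr (O2 eh) :=
            Equiv.apply_symm_apply _ _
          rwa [hF, Equiv.ofBijective_apply] at h1
        rw [fmerge_eq_inr_iff] at hfm
        simp only [Equiv.sumCongr_apply, Sum.map_inr] at hOe'
        rw [hOe'] at hfm
        obtain ⟨j', hj', ha⟩ :=
          (window_d_iff m1 m2 k1 k2 hm hmk i ↑(O2 eh)).1 ⟨j, hj, hfm.1, hfm.2⟩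
        exact Or.inr ⟨↑eh, ⟨eh, rfl, j', hj', ha⟩, by rw [he, hΦ]; rfl⟩
    · rintro (⟨s1, ⟨eg, rfl, j', hj', hO1e⟩, rfl⟩ | ⟨s2, ⟨eh, rfl, j', hj', hO2e⟩, rfl⟩)
      · have hm : 0 < m1 + m2 := by have := (O1 eg).pos; omega
        obtain ⟨j, hj, hjump, hceq⟩ :=
          (window_c_iff m1 m2 k1 k2 hm hmk i ↑(O1 eg)).2 ⟨j', hj', hO1e⟩
        refine ⟨Φ (Sum.inl eg), rfl, j, hj, ?_⟩
        rw [show (i + j) % (G.oneSum H u v).edgeFinset.card = (i + j) % (m1 + m2) from by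
          rw [hcardE]]
        set t : Fin (m1 + m2) := ⟨(i + j) % (m1 + m2), Nat.mod_lt _ hm⟩ with ht
        have hfm : fmerge m1 m2 t = Sum.inl (O1 eg) :=
          (fmerge_eq_inl_iff m1 m2 t (O1 eg)).2 ⟨hjump, hceq⟩
        have hFt : F t = Sum.inl (O1 eg) := by rw [hF, Equiv.ofBijective_apply]; exact hfm
        have hFs : F.symm (Sum.inl (O1 eg)) = t := by rw [← hFt, Equiv.symm_apply_apply]
        rw [hOO]
        simp only [Equiv.trans_apply, Equiv.symm_apply_apply, Equiv.sumCongr_apply,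
          Sum.map_inl, hFs, finCongr_apply, Fin.coe_cast]
        rfl
      · have hm : 0 < m1 + m2 := by have := (O2 eh).pos; omega
        obtain ⟨j, hj, hjump, hceq⟩ :=
          (window_d_iff m1 m2 k1 k2 hm hmk i ↑(O2 eh)).2 ⟨j', hj', hO2e⟩
        refine ⟨Φ (Sum.inr eh), rfl, j, hj, ?_⟩
        rw [show (i + j) % (G.oneSum H u v).edgeFinset.card = (i + j) % (m1 + m2) from by
          rw [hcardE]]
        set t : Fin (m1 + m2) := ⟨(i + j) % (m1 + m2), Nat.mod_lt _ hm⟩ with ht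
        have hfm : fmerge m1 m2 t = Sum.inr (O2 eh) :=
          (fmerge_eq_inr_iff m1 m2 t (O2 eh)).2 ⟨hjump, hceq⟩
        have hFt : F t = Sum.inr (O2 eh) := by rw [hF, Equiv.ofBijective_apply]; exact hfm
        have hFs : F.symm (Sum.inr (O2 eh)) = t := by rw [← hFt, Equiv.symm_apply_apply]
        rw [hOO]
        simp only [Equiv.trans_apply, Equiv.symm_apply_apply, Equiv.sumCongr_apply,
          Sum.map_inr, hFs, finCongr_apply, Fin.coe_cast]
        rfl
  rw [hSeq]
  exact glue_isTree u v _ _ (hO1 (c i)) (hO2 (d i))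

end
end

section
/- For every positive integer t, the friendship graph Fd_t (the graph obtained from t copies of the triangle K_3 by gluing them at a single common vertex) is cyclically orderable. -/
open scoped Classical

noncomputable section

/-- The friendship graph `Fd_t`: `t` disjoint triangles glued at a single common
vertex (`none` is the common vertex; `some (i, j)` is the `j`-th outer vertex of
the `i`-th triangle). -/
def friendshipGraph (t : ℕ) : SimpleGraph (Option (Fin t × Fin 2)) :=
  SimpleGraph.fromRel fun x y =>
    match x, y with
    | none, some _ => True
    | some p, some q => p.1 = q.1
    | _, _ => False

namespace FriendshipCBO

/-- the friendship graph relation, copied -/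
def fg (t : ℕ) : SimpleGraph (Option (Fin t × Fin 2)) :=
  SimpleGraph.fromRel fun x y =>
    match x, y with
    | none, some _ => True
    | some p, some q => p.1 = q.1
    | _, _ => False

variable {t : ℕ}

/-- the `j`-th edge of the `r`-th triangle -/
def edg (p : Fin t × Fin 3) : Sym2 (Option (Fin t × Fin 2)) :=
  if h : p.2 = 2 then s(some (p.1, 0), some (p.1, 1))
  else s(none, some (p.1, ⟨p.2.val, by
    have h3 := p.2.isLt
    have : p.2.val ≠ 2 := fun hv => h (Fin.ext hv)
    omega⟩))

lemma edg_zero (r : Fin t) : edg (r, 0) = s(none, some (r, 0)) := by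
  simp [edg, Fin.ext_iff]

lemma edg_one (r : Fin t) : edg (r, 1) = s(none, some (r, 1)) := by
  simp [edg, Fin.ext_iff]

lemma edg_two (r : Fin t) : edg (r, 2) = s(some (r, 0), some (r, 1)) := by
  simp [edg, Fin.ext_iff]

lemma edg_mem (p : Fin t × Fin 3) : edg p ∈ (fg t).edgeSet := by
  obtain ⟨r, ⟨j, hj⟩⟩ := p
  interval_cases j
  · rw [show (⟨0,hj⟩ : Fin 3) = 0 from rfl, edg_zero]
    simp [fg, SimpleGraph.fromRel_adj]
  · rw [show (⟨1,hj⟩ : Fin 3) = 1 from rfl, edg_one]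
    simp [fg, SimpleGraph.fromRel_adj]
  · rw [show (⟨2,hj⟩ : Fin 3) = 2 from rfl, edg_two]
    simp [fg, SimpleGraph.fromRel_adj, Fin.ext_iff]


lemma fin3_cases (j : Fin 3) : j = 0 ∨ j = 1 ∨ j = 2 := by
  obtain ⟨jv, hj⟩ := j
  rcases (by omega : jv = 0 ∨ jv = 1 ∨ jv = 2) with rfl | rfl | rfl
  · exact Or.inl rfl
  · exact Or.inr (Or.inl rfl)
  · exact Or.inr (Or.inr rfl)

lemma fin2_cases (k : Fin 2) : k = 0 ∨ k = 1 := by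
  obtain ⟨kv, hk⟩ := k
  rcases (by omega : kv = 0 ∨ kv = 1) with rfl | rfl
  · exact Or.inl rfl
  · exact Or.inr rfl

lemma edg_inj : Function.Injective (edg : Fin t × Fin 3 → Sym2 (Option (Fin t × Fin 2))) := by
  rintro ⟨r, j⟩ ⟨r', j'⟩ h
  rcases fin3_cases j with rfl | rfl | rfl <;> rcases fin3_cases j' with rfl | rfl | rfl <;>
    simp_all [edg_zero, edg_one, edg_two, Sym2.eq_iff, Prod.ext_iff, Fin.ext_iff]

lemma edg_surj (e : Sym2 (Option (Fin t × Fin 2))) (he : e ∈ (fg t).edgeSet) :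
    ∃ p : Fin t × Fin 3, edg p = e := by
  induction e with
  | h x y =>
    rw [SimpleGraph.mem_edgeSet] at he
    have hne := he.ne
    have hrel := ((SimpleGraph.fromRel_adj _ _ _).mp he).2
    match x, y with
    | none, none => simp [fg] at hrel
    | none, some (r, k) =>
        rcases fin2_cases k with rfl | rfl
        · exact ⟨(r, 0), edg_zero r⟩
        · exact ⟨(r, 1), edg_one r⟩
    | some (r, k), none =>
        rcases fin2_cases k with rfl | rfl
        · exact ⟨(r, 0), (edg_zero r).trans (Sym2.eq_swap)⟩
        · exact ⟨(r, 1), (edg_one r).trans (Sym2.eq_swap)⟩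
    | some (r, k), some (r', k') =>
        have hr : r = r' := by
          rcases hrel with h | h
          · exact h
          · exact h.symm
        subst hr
        have hkk : k ≠ k' := fun h => hne (by rw [h])
        refine ⟨(r, 2), ?_⟩
        rw [edg_two]
        rcases fin2_cases k with rfl | rfl <;> rcases fin2_cases k' with rfl | rfl
        · exact absurd rfl hkk
        · rfl
        · exact Sym2.eq_swap
        · exact absurd rfl hkk

/-- natural-number label of an edge -/
def lab (p : Fin t × Fin 3) : ℕ := p.2.val * t + p.1.val

lemma lab_lt (p : Fin t × Fin 3) : lab p < 3 * t := by
  obtain ⟨r, j⟩ := p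
  rcases fin3_cases j with rfl | rfl | rfl <;>
    simp [lab] <;> omega

/-- the labelling as an equivalence -/
def labEquiv (ht : 0 < t) : (Fin t × Fin 3) ≃ Fin (3 * t) where
  toFun p := ⟨lab p, lab_lt p⟩
  invFun l := (⟨l.val % t, Nat.mod_lt _ ht⟩, ⟨l.val / t, by
    have := l.isLt
    rw [Nat.div_lt_iff_lt_mul ht]
    omega⟩)
  left_inv p := by
    obtain ⟨r, j⟩ := p
    have hr := r.isLt
    have hj := j.isLt
    ext
    · simp [lab, Nat.mul_add_mod', Nat.mod_eq_of_lt hr]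
    · simp [lab]
      rw [Nat.mul_comm, Nat.mul_add_div ht, Nat.div_eq_of_lt hr]
      omega
  right_inv l := by
    ext
    simp only [lab]
    conv_rhs => rw [← Nat.div_add_mod l.val t]
    ring

/-- the window condition: label `l` is among the `2t` labels starting at `i` -/
def Incl (t i l : ℕ) : Prop := ∃ j < 2 * t, l = (i + j) % (3 * t)

lemma incl_iff (ht : 0 < t) {i l : ℕ} (hi : i < 3 * t) (hl : l < 3 * t) :
    Incl t i l ↔ (i ≤ l ∧ l < i + 2 * t) ∨ (l + 3 * t < i + 2 * t) := by
  constructor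
  · rintro ⟨j, hj, rfl⟩
    rcases Nat.lt_or_ge (i + j) (3 * t) with h | h
    · rw [Nat.mod_eq_of_lt h]
      left
      omega
    · have h6 : i + j - 3 * t < 3 * t := by omega
      have : (i + j) % (3 * t) = i + j - 3 * t := by
        rw [Nat.mod_eq_sub_mod h, Nat.mod_eq_of_lt h6]
      rw [this]
      right
      omega
  · rintro (⟨h1, h2⟩ | h)
    · exact ⟨l - i, by omega, by rw [Nat.add_sub_cancel' h1, Nat.mod_eq_of_lt hl]⟩
    · refine ⟨l + 3 * t - i, by omega, ?_⟩
      rw [Nat.add_sub_cancel' (by omega : i ≤ l + 3 * t), Nat.add_mod_right,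
        Nat.mod_eq_of_lt hl]

lemma incl_shift (i l : ℕ) : Incl t i l ↔ Incl t (i % (3 * t)) l := by
  unfold Incl
  constructor <;> rintro ⟨j, hj, rfl⟩ <;> exact ⟨j, hj, by rw [Nat.mod_add_mod]⟩

lemma incl_iff' (ht : 0 < t) {i l : ℕ} (hl : l < 3 * t) :
    Incl t i l ↔ (i % (3 * t) ≤ l ∧ l < i % (3 * t) + 2 * t) ∨
      (l + 3 * t < i % (3 * t) + 2 * t) := by
  rw [incl_shift]
  exact incl_iff ht (Nat.mod_lt _ (by omega)) hl

/-- the edges of the friendship graph, as an equivalence -/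
def eEquiv (t : ℕ) : (Fin t × Fin 3) ≃ (fg t).edgeSet :=
  Equiv.ofBijective (fun p => ⟨edg p, edg_mem p⟩)
    ⟨fun a b h => edg_inj (Subtype.ext_iff.mp h),
     fun e => by
      obtain ⟨p, hp⟩ := edg_surj e.val e.property
      exact ⟨p, Subtype.ext hp⟩⟩

lemma card_edge (t : ℕ) : (fg t).edgeFinset.card = 3 * t := by
  rw [SimpleGraph.edgeFinset, Set.toFinset_card]
  rw [Fintype.card_congr (eEquiv t).symm]
  simp [Fintype.card_prod]
  ring

lemma card_vert (t : ℕ) : Fintype.card (Option (Fin t × Fin 2)) = 2 * t + 1 := by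
  simp [Fintype.card_option, Fintype.card_prod]
  ring

/-- the cyclic base ordering -/
def ord (ht : 0 < t) : (fg t).edgeSet ≃ Fin ((fg t).edgeFinset.card) :=
  (eEquiv t).symm.trans ((labEquiv ht).trans (finCongr (card_edge t).symm))

lemma ord_val (ht : 0 < t) (e : (fg t).edgeSet) :
    ((ord ht) e : ℕ) = lab ((eEquiv t).symm e) := rfl

/-- the window edge set -/
def SC (ht : 0 < t) (i : ℕ) : Set (Sym2 (Option (Fin t × Fin 2))) :=
  {s : Sym2 (Option (Fin t × Fin 2)) | ∃ e : (fg t).edgeSet, (e : Sym2 (Option (Fin t × Fin 2))) = s ∧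
    ∃ j < Fintype.card (Option (Fin t × Fin 2)) - 1,
      ((ord ht) e : ℕ) = (i + j) % (fg t).edgeFinset.card}

lemma mem_SC (ht : 0 < t) (i : ℕ) (s : Sym2 (Option (Fin t × Fin 2))) :
    s ∈ SC ht i ↔ ∃ p : Fin t × Fin 3, edg p = s ∧ Incl t i (lab p) := by
  simp only [SC, Set.mem_setOf_eq, card_vert, card_edge]
  constructor
  · rintro ⟨e, rfl, j, hj, hOe⟩
    refine ⟨(eEquiv t).symm e, ?_, j, by omega, by rw [← ord_val ht e]; exact hOe⟩
    conv_rhs => rw [← Equiv.apply_symm_apply (eEquiv t) e]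
    rfl
  · rintro ⟨p, rfl, j, hj, hl⟩
    refine ⟨eEquiv t p, rfl, j, by omega, ?_⟩
    rw [ord_val, Equiv.symm_apply_apply]
    exact hl

/-- the window graph -/
def W (ht : 0 < t) (i : ℕ) : SimpleGraph (Option (Fin t × Fin 2)) :=
  SimpleGraph.fromEdgeSet (SC ht i)

lemma adj_spoke (ht : 0 < t) (i : ℕ) (r : Fin t) (k : Fin 2)
    (h : Incl t i (k.val * t + r.val)) : (W ht i).Adj none (some (r, k)) := by
  rw [W, SimpleGraph.fromEdgeSet_adj]
  refine ⟨?_, by simp⟩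
  rw [mem_SC]
  rcases fin2_cases k with rfl | rfl
  · exact ⟨(r, 0), edg_zero r, by simpa [lab] using h⟩
  · exact ⟨(r, 1), edg_one r, by simpa [lab] using h⟩

lemma adj_rim (ht : 0 < t) (i : ℕ) (r : Fin t)
    (h : Incl t i (2 * t + r.val)) : (W ht i).Adj (some (r, 0)) (some (r, 1)) := by
  rw [W, SimpleGraph.fromEdgeSet_adj]
  refine ⟨?_, by simp [Fin.ext_iff]⟩
  rw [mem_SC]
  exact ⟨(r, 2), edg_two r, by simpa [lab] using h⟩

lemma adj_some (ht : 0 < t) (i : ℕ) (r : Fin t) (k : Fin 2)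
    (z : Option (Fin t × Fin 2)) (h : (W ht i).Adj (some (r, k)) z) :
    (z = none ∧ Incl t i (k.val * t + r.val)) ∨
    (z = some (r, ⟨1 - k.val, by omega⟩) ∧ Incl t i (2 * t + r.val)) := by
  rw [W, SimpleGraph.fromEdgeSet_adj] at h
  obtain ⟨hs, hne⟩ := h
  rw [mem_SC] at hs
  obtain ⟨⟨r', j⟩, hedg, hincl⟩ := hs
  rcases fin3_cases j with rfl | rfl | rfl
  · rw [edg_zero, Sym2.eq_iff] at hedg
    rcases hedg with ⟨h1, h2⟩ | ⟨h1, h2⟩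
    · exact absurd h1 (by simp)
    · obtain ⟨rfl, rfl⟩ : r' = r ∧ (0 : Fin 2) = k := by
        simpa [Prod.ext_iff] using h2
      exact Or.inl ⟨h1.symm, by simpa [lab] using hincl⟩
  · rw [edg_one, Sym2.eq_iff] at hedg
    rcases hedg with ⟨h1, h2⟩ | ⟨h1, h2⟩
    · exact absurd h1 (by simp)
    · obtain ⟨rfl, rfl⟩ : r' = r ∧ (1 : Fin 2) = k := by
        simpa [Prod.ext_iff] using h2
      exact Or.inl ⟨h1.symm, by simpa [lab] using hincl⟩
  · rw [edg_two, Sym2.eq_iff] at hedg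
    rcases hedg with ⟨h1, h2⟩ | ⟨h1, h2⟩
    · obtain ⟨rfl, rfl⟩ : r' = r ∧ (0 : Fin 2) = k := by
        simpa [Prod.ext_iff] using h1
      refine Or.inr ⟨?_, by simpa [lab] using hincl⟩
      rw [← h2]
      rfl
    · obtain ⟨rfl, rfl⟩ : r' = r ∧ (1 : Fin 2) = k := by
        simpa [Prod.ext_iff] using h2
      refine Or.inr ⟨?_, by simpa [lab] using hincl⟩
      rw [← h1]
      rfl

lemma at_least_two (ht : 0 < t) (i : ℕ) (r : Fin t) :
    (Incl t i (0 * t + r.val) ∧ Incl t i (1 * t + r.val)) ∨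
    (Incl t i (0 * t + r.val) ∧ Incl t i (2 * t + r.val)) ∨
    (Incl t i (1 * t + r.val) ∧ Incl t i (2 * t + r.val)) := by
  have hr := r.isLt
  have h3 : 0 < 3 * t := by omega
  have hm := Nat.mod_lt i h3
  rw [incl_iff' ht (by omega), incl_iff' ht (by omega), incl_iff' ht (by omega)]
  omega

lemma not_all_three (ht : 0 < t) (i : ℕ) (r : Fin t) :
    ¬(Incl t i (0 * t + r.val) ∧ Incl t i (1 * t + r.val) ∧ Incl t i (2 * t + r.val)) := by
  have hr := r.isLt
  have h3 : 0 < 3 * t := by omega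
  have hm := Nat.mod_lt i h3
  rw [incl_iff' ht (by omega), incl_iff' ht (by omega), incl_iff' ht (by omega)]
  omega

lemma connected (ht : 0 < t) (i : ℕ) : (W ht i).Connected := by
  rw [SimpleGraph.connected_iff]
  have key : ∀ w, (W ht i).Reachable none w := by
    intro w
    match w with
    | none => exact SimpleGraph.Reachable.refl _
    | some (r, k) =>
      rcases fin2_cases k with rfl | rfl
      · rcases at_least_two ht i r with ⟨h1, h2⟩ | ⟨h1, h2⟩ | ⟨h1, h2⟩
        · exact (adj_spoke ht i r 0 (by simpa using h1)).reachable
        · exact (adj_spoke ht i r 0 (by simpa using h1)).reachable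
        · exact ((adj_spoke ht i r 1 (by simpa using h1)).reachable).trans
            ((adj_rim ht i r h2).symm.reachable)
      · rcases at_least_two ht i r with ⟨h1, h2⟩ | ⟨h1, h2⟩ | ⟨h1, h2⟩
        · exact (adj_spoke ht i r 1 (by simpa using h2)).reachable
        · exact ((adj_spoke ht i r 0 (by simpa using h1)).reachable).trans
            ((adj_rim ht i r h2).reachable)
        · exact (adj_spoke ht i r 1 (by simpa using h1)).reachable
  exact ⟨fun u v => (key u).symm.trans (key v), ⟨none⟩⟩

/-- a cycle passes through two distinct neighbours of its basepoint -/
lemma cycle_two_adj {α : Type} {G : SimpleGraph α} {v : α} {c : G.Walk v v}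
    (hc : c.IsCycle) :
    ∃ a b, G.Adj v a ∧ G.Adj v b ∧ a ≠ b ∧ a ∈ c.support ∧ b ∈ c.support := by
  cases c with
  | nil => exact absurd hc SimpleGraph.Walk.IsCycle.not_of_nil
  | @cons _ a _ h p =>
    rw [SimpleGraph.Walk.cons_isCycle_iff] at hc
    obtain ⟨hp, he⟩ := hc
    obtain ⟨b, hvb, q, hq⟩ := SimpleGraph.Walk.exists_eq_cons_of_ne h.ne p.reverse
    refine ⟨a, b, h, hvb, ?_, ?_, ?_⟩
    · intro hab
      subst hab
      apply he
      have hmem : s(v, a) ∈ p.reverse.edges := by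
        rw [hq, SimpleGraph.Walk.edges_cons]
        exact List.mem_cons_self
      rwa [SimpleGraph.Walk.edges_reverse, List.mem_reverse] at hmem
    · rw [SimpleGraph.Walk.support_cons]
      exact List.mem_cons_of_mem _ p.start_mem_support
    · rw [SimpleGraph.Walk.support_cons]
      refine List.mem_cons_of_mem _ ?_
      have hmem : b ∈ p.reverse.support := by
        rw [hq, SimpleGraph.Walk.support_cons]
        exact List.mem_cons_of_mem _ q.start_mem_support
      rwa [SimpleGraph.Walk.support_reverse, List.mem_reverse] at hmem

lemma cycle_incl (ht : 0 < t) (i : ℕ) (r : Fin t) (k : Fin 2)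
    (c : (W ht i).Walk (some (r, k)) (some (r, k))) (hc : c.IsCycle) :
    Incl t i (k.val * t + r.val) ∧ Incl t i (2 * t + r.val) ∧
      some (r, (⟨1 - k.val, by omega⟩ : Fin 2)) ∈ c.support := by
  obtain ⟨a, b, ha, hb, hab, has, hbs⟩ := cycle_two_adj hc
  rcases adj_some ht i r k a ha with ⟨rfl, h1⟩ | ⟨rfl, h1⟩ <;>
    rcases adj_some ht i r k b hb with ⟨rfl, h2⟩ | ⟨rfl, h2⟩
  · exact absurd rfl hab
  · exact ⟨h1, h2, hbs⟩
  · exact ⟨h2, h1, has⟩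
  · exact absurd rfl hab

lemma acyclic (ht : 0 < t) (i : ℕ) : (W ht i).IsAcyclic := by
  have key : ∀ (r : Fin t) (k : Fin 2)
      (c : (W ht i).Walk (some (r, k)) (some (r, k))), ¬c.IsCycle := by
    intro r k c hc
    obtain ⟨h1, h2, hmem⟩ := cycle_incl ht i r k c hc
    obtain ⟨h3, _, _⟩ := cycle_incl ht i r _ (c.rotate _ hmem) (hc.rotate hmem)
    apply not_all_three ht i r
    rcases fin2_cases k with rfl | rfl
    · exact ⟨by simpa using h1, by simpa using h3, h2⟩
    · exact ⟨by simpa using h3, by simpa using h1, h2⟩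
  intro v c hc
  match v with
  | some (r, k) => exact key r k c hc
  | none =>
    obtain ⟨a, b, ha, hb, hab, has, hbs⟩ := cycle_two_adj hc
    match a, ha with
    | none, ha => exact (W ht i).irrefl ha
    | some (r, k), ha =>
      exact key r k (c.rotate _ has) (hc.rotate has)

end FriendshipCBO

/-- For every positive integer `t`, the friendship graph `Fd_t` is cyclically
orderable. -/
theorem friendshipGraph_cyclicallyOrderable (t : ℕ) (ht : 0 < t) :
    (friendshipGraph t).CyclicallyOrderable := by
  have h : (FriendshipCBO.fg t).CyclicallyOrderable :=
    ⟨FriendshipCBO.ord ht, fun i =>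
      ⟨FriendshipCBO.connected ht i, FriendshipCBO.acyclic ht i⟩⟩
  exact h

end
end

section
/- The generalized theta graph Θ_{1,2,5} is not cyclically orderable. -/
open scoped Classical

noncomputable section

/-- The vertex type of the generalized theta graph `Θ_{l 0, …, l (k-1)}`:
`Sum.inl false` and `Sum.inl true` are the two end vertices, and
`Sum.inr ⟨i, j⟩` is the `j`-th internal vertex (0-indexed, counted from the
`false` end) of the `i`-th path, which has `l i - 1` internal vertices. -/
abbrev ThetaVert (k : ℕ) (l : Fin k → ℕ) : Type := Bool ⊕ (Σ i : Fin k, Fin (l i - 1))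

/-- The generalized theta graph `Θ_{l 0, …, l (k-1)}`: two distinct end vertices
joined by `k` internally disjoint paths, the `i`-th of which has length `l i`. -/
def thetaGraph (k : ℕ) (l : Fin k → ℕ) : SimpleGraph (ThetaVert k l) :=
  SimpleGraph.fromRel fun x y =>
    match x, y with
    | Sum.inl a, Sum.inl b => a ≠ b ∧ ∃ i, l i = 1
    | Sum.inl false, Sum.inr ⟨_, j⟩ => (j : ℕ) = 0
    | Sum.inl true, Sum.inr ⟨i, j⟩ => (j : ℕ) = l i - 2
    | Sum.inr ⟨i, j⟩, Sum.inr ⟨i', j'⟩ => i.1 = i'.1 ∧ (j : ℕ) + 1 = (j' : ℕ)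
    | _, _ => False

def decAdj125 : DecidableRel (thetaGraph 3 ![1,2,5]).Adj := fun x y => by
  unfold thetaGraph
  rw [SimpleGraph.fromRel_adj]
  rcases x with (_|_)|⟨i,j⟩ <;> rcases y with (_|_)|⟨i',j'⟩ <;> exact inferInstance

def finE125 : Fintype (thetaGraph 3 ![1,2,5]).edgeSet :=
  @SimpleGraph.fintypeEdgeSet _ _ _ decAdj125

lemma cardV125 : Fintype.card (ThetaVert 3 ![1,2,5]) = 7 := by decide

lemma card8 (inst : Fintype (thetaGraph 3 ![1,2,5]).edgeSet) :
    (@Set.toFinset _ _ inst).card = 8 := by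
  rw [Subsingleton.elim inst finE125]
  decide

lemma key1 (a b c : Fin 8) (hab : a ≠ b) (hac : a ≠ c) (hbc : b ≠ c) :
    ∃ j : Fin 8, (j ≠ a ∧ j ≠ b ∧ j ≠ c) ∧ (j+1 ≠ a ∧ j+1 ≠ b ∧ j+1 ≠ c) := by
  revert a b c; decide

lemma key2 (a j : Fin 8) (h1 : j ≠ a) (h2 : j + 1 ≠ a) :
    ∃ k : Fin 6, (a : ℕ) = ((j : ℕ) + 2 + (k : ℕ)) % 8 := by
  revert a j; decide

def xv : ThetaVert 3 ![1,2,5] := Sum.inl false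
def yv : ThetaVert 3 ![1,2,5] := Sum.inl true
def zv : ThetaVert 3 ![1,2,5] := Sum.inr ⟨1, ⟨0, by decide⟩⟩

lemma adj_xy : (thetaGraph 3 ![1,2,5]).Adj xv yv := by
  unfold thetaGraph xv yv
  rw [SimpleGraph.fromRel_adj]
  exact ⟨by simp, Or.inl ⟨by simp, ⟨0, rfl⟩⟩⟩

lemma adj_xz : (thetaGraph 3 ![1,2,5]).Adj xv zv := by
  unfold thetaGraph xv zv
  rw [SimpleGraph.fromRel_adj]
  exact ⟨by simp, Or.inl rfl⟩

lemma adj_zy : (thetaGraph 3 ![1,2,5]).Adj zv yv := by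
  unfold thetaGraph zv yv
  rw [SimpleGraph.fromRel_adj]
  exact ⟨by simp, Or.inr rfl⟩


/-- The generalized theta graph `Θ_{1,2,5}` is not cyclically orderable. -/
theorem thetaGraph_one_two_five_not_cyclicallyOrderable :
    ¬ (thetaGraph 3 ![1, 2, 5]).CyclicallyOrderable := by
  rintro ⟨O, hO⟩
  have hm : (thetaGraph 3 ![1,2,5]).edgeFinset.card = 8 := card8 _
  let e1 : (thetaGraph 3 ![1,2,5]).edgeSet := ⟨s(xv, yv), adj_xy⟩
  let e2 : (thetaGraph 3 ![1,2,5]).edgeSet := ⟨s(xv, zv), adj_xz⟩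
  let e3 : (thetaGraph 3 ![1,2,5]).edgeSet := ⟨s(zv, yv), adj_zy⟩
  let a : Fin 8 := Fin.cast hm (O e1)
  let b : Fin 8 := Fin.cast hm (O e2)
  let c : Fin 8 := Fin.cast hm (O e3)
  have hinj : Function.Injective (fun e : (thetaGraph 3 ![1,2,5]).edgeSet => Fin.cast hm (O e)) :=
    (Fin.cast_injective hm).comp O.injective
  have hab : a ≠ b := fun h => by
    have := hinj h
    simp only [e1, e2, Subtype.mk.injEq, Sym2.eq_iff] at this
    simp [xv, yv, zv] at this
  have hac : a ≠ c := fun h => by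
    have := hinj h
    simp only [e1, e3, Subtype.mk.injEq, Sym2.eq_iff] at this
    simp [xv, yv, zv] at this
  have hbc : b ≠ c := fun h => by
    have := hinj h
    simp only [e2, e3, Subtype.mk.injEq, Sym2.eq_iff] at this
    simp [xv, yv, zv] at this
  obtain ⟨j, ⟨hja, hjb, hjc⟩, ⟨hja', hjb', hjc'⟩⟩ := key1 a b c hab hac hbc
  have hacyc := (hO ((j : ℕ) + 2)).IsAcyclic
  set S : Set (Sym2 (ThetaVert 3 ![1,2,5])) :=
    {s | ∃ e : (thetaGraph 3 ![1,2,5]).edgeSet, (e : Sym2 _) = s ∧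
      ∃ jj < Fintype.card (ThetaVert 3 ![1,2,5]) - 1,
        (O e : ℕ) = ((j : ℕ) + 2 + jj) % (thetaGraph 3 ![1,2,5]).edgeFinset.card} with hS
  have hmem : ∀ (e : (thetaGraph 3 ![1,2,5]).edgeSet),
      j ≠ Fin.cast hm (O e) → j + 1 ≠ Fin.cast hm (O e) → (e : Sym2 _) ∈ S := by
    intro e h1 h2
    obtain ⟨k, hk⟩ := key2 (Fin.cast hm (O e)) j h1 h2
    refine ⟨e, rfl, k, ?_, ?_⟩
    · rw [cardV125]; exact lt_of_lt_of_le k.isLt (by norm_num)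
    · conv_rhs => rw [hm]
      simpa using hk
  have hxy : (SimpleGraph.fromEdgeSet S).Adj xv yv :=
    (SimpleGraph.fromEdgeSet_adj S).mpr ⟨hmem e1 hja hja', adj_xy.ne⟩
  have hxz : (SimpleGraph.fromEdgeSet S).Adj xv zv :=
    (SimpleGraph.fromEdgeSet_adj S).mpr ⟨hmem e2 hjb hjb', adj_xz.ne⟩
  have hzy : (SimpleGraph.fromEdgeSet S).Adj zv yv :=
    (SimpleGraph.fromEdgeSet_adj S).mpr ⟨hmem e3 hjc hjc', adj_zy.ne⟩
  let w : (SimpleGraph.fromEdgeSet S).Walk xv xv :=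
    .cons hxy (.cons hzy.symm (.cons hxz.symm .nil))
  have hcyc : w.IsCycle := by
    rw [SimpleGraph.Walk.isCycle_def]
    refine ⟨?_, ?_, ?_⟩
    · rw [SimpleGraph.Walk.isTrail_def]
      simp only [w, SimpleGraph.Walk.edges_cons, SimpleGraph.Walk.edges_nil]
      simp [Sym2.eq_iff, xv, yv, zv]
    · simp [w]
    · simp only [w, SimpleGraph.Walk.support_cons, SimpleGraph.Walk.support_nil, List.tail_cons]
      simp [xv, yv, zv]
  exact hacyc w hcyc

end
end

section
/- If a connected graph G is cyclically orderable, then G is uniformly dense, i.e., d(H) ≤ d(G) for every connected subgraph H of G. -/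
open scoped Classical

noncomputable section

open SimpleGraph Walk Finset in
lemma tree_bound {V : Type} [Fintype V] {W : SimpleGraph V} (hW : W.IsTree)
    (S : Finset V) (r : V) (hr : r ∈ S) (E : Finset (Sym2 V))
    (hE : ∀ e ∈ E, e ∈ W.edgeSet ∧ ∀ v ∈ e, v ∈ S) :
    E.card ≤ S.card - 1 := by
  classical
  choose f hf hf' using (hW.existsUnique_path · r)
  set g : V → Sym2 V := fun w => if h : (f w).Nil then s(r, r) else ((f w).firstDart h).edge with hg
  have main : ∀ x y : V, W.Adj x y → (f x).length ≤ (f y).length →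
      y ≠ r ∧ g y = s(x, y) := by
    intro x y h h'
    have hyr : y ≠ r := by
      rintro rfl
      rw [← hf' _ .nil IsPath.nil, length_nil,
          ← hf' _ (.cons h .nil) (IsPath.nil.cons <| by simpa using h.ne),
          length_cons, length_nil] at h'
      simp [Nat.le_zero, Nat.one_ne_zero] at h'
    refine ⟨hyr, ?_⟩
    have hnil : ¬ (f y).Nil := not_nil_of_ne (by simpa using hyr)
    have hy' : y ∉ (f x).support := by
      intro hy
      suffices hsuf : (f x).takeUntil y hy = .cons h .nil by
        rw [← take_spec _ hy] at h'
        simp [hsuf, hf' _ _ ((hf _).dropUntil hy)] at h'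
      refine (hW.existsUnique_path _ _).unique ((hf _).takeUntil _) ?_
      simp [h.ne]
    have h2 : f y = .cons h.symm (f x) :=
      (hf' _ (.cons h.symm (f x)) ((cons_isPath_iff _ _).2 ⟨hf _, hy'⟩)).symm
    rw [hg]
    simp only [dif_neg hnil]
    rw [dart_edge_eq_mk'_iff]
    right
    simp only [h2]
    simp [firstDart_toProd, Prod.ext_iff]
  have key : ∀ e ∈ E, ∃ w ∈ S.erase r, g w = e := by
    intro e he
    obtain ⟨heW, heS⟩ := hE e he
    revert heW heS
    induction e using Sym2.ind with
    | _ x y =>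
      intro heW heS
      rw [SimpleGraph.mem_edgeSet] at heW
      rcases le_total (f x).length (f y).length with h' | h'
      · obtain ⟨hyr, hgy⟩ := main x y heW h'
        exact ⟨y, Finset.mem_erase.2 ⟨hyr, heS y (by simp)⟩, hgy⟩
      · obtain ⟨hxr, hgx⟩ := main y x heW.symm h'
        exact ⟨x, Finset.mem_erase.2 ⟨hxr, heS x (by simp)⟩, by rw [hgx, Sym2.eq_swap]⟩
  have hcard : E.card ≤ (S.erase r).card := by
    apply Finset.card_le_card_of_surjOn g
    intro e he
    obtain ⟨w, hw, hwe⟩ := key e he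
    obtain ⟨h1, h2⟩ := Finset.mem_erase.1 hw
    exact ⟨w, by simp [h1, h2], hwe⟩
  simpa [Finset.card_erase_of_mem hr] using hcard

lemma col_count (m n ℓ : ℕ) (hl : ℓ < m) (hn : n ≤ m) :
    ((Finset.range m).filter (fun i => ∃ j < n, ℓ = (i + j) % m)).card = n := by
  classical
  have hm : 0 < m := lt_of_le_of_lt (Nat.zero_le _) hl
  have himg : (Finset.range m).filter (fun i => ∃ j < n, ℓ = (i + j) % m)
      = (Finset.range n).image (fun j => (ℓ + (m - j)) % m) := by
    ext i
    simp only [Finset.mem_filter, Finset.mem_range, Finset.mem_image]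
    constructor
    · rintro ⟨him, j, hj, hij⟩
      refine ⟨j, hj, ?_⟩
      have hjm : j ≤ m := le_of_lt (lt_of_lt_of_le hj hn)
      rw [hij, Nat.mod_add_mod]
      have : i + j + (m - j) = i + m := by omega
      rw [this, Nat.add_mod_right, Nat.mod_eq_of_lt him]
    · rintro ⟨j, hj, rfl⟩
      have hjm : j ≤ m := le_of_lt (lt_of_lt_of_le hj hn)
      refine ⟨Nat.mod_lt _ hm, j, hj, ?_⟩
      rw [Nat.mod_add_mod]
      have : ℓ + (m - j) + j = ℓ + m := by omega
      rw [this, Nat.add_mod_right, Nat.mod_eq_of_lt hl]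
  rw [himg, Finset.card_image_of_injOn, Finset.card_range]
  intro j1 h1 j2 h2 heq
  simp only [Finset.coe_range, Set.mem_Iio] at h1 h2
  have h1m : j1 ≤ m := le_of_lt (lt_of_lt_of_le h1 hn)
  have h2m : j2 ≤ m := le_of_lt (lt_of_lt_of_le h2 hn)
  rcases le_total j1 j2 with hle | hle
  · have hba : ℓ + (m - j2) ≤ ℓ + (m - j1) := by omega
    have hmod : ℓ + (m - j2) ≡ ℓ + (m - j1) [MOD m] := heq.symm
    have hdvd := (Nat.modEq_iff_dvd' hba).1 hmod
    have := Nat.eq_zero_of_dvd_of_lt hdvd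
    omega
  · have hba : ℓ + (m - j1) ≤ ℓ + (m - j2) := by omega
    have hmod : ℓ + (m - j1) ≡ ℓ + (m - j2) [MOD m] := heq
    have hdvd := (Nat.modEq_iff_dvd' hba).1 hmod
    have := Nat.eq_zero_of_dvd_of_lt hdvd
    omega

lemma card_le_of_tree_le {V : Type} [Fintype V] {G W : SimpleGraph V}
    [Fintype G.edgeSet] [Fintype W.edgeSet] (hW : W.IsTree) (hle : W ≤ G) :
    Fintype.card V - 1 ≤ G.edgeFinset.card := by
  have h1 := hW.card_edgeFinset
  have h2 : W.edgeFinset ⊆ G.edgeFinset := by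
    intro e he
    rw [SimpleGraph.mem_edgeFinset] at he ⊢
    exact SimpleGraph.edgeSet_mono hle he
  have h3 := Finset.card_le_card h2
  omega

/-- If a connected graph `G` is cyclically orderable, then `G` is uniformly
dense: `d(H) ≤ d(G)` for every connected subgraph `H` of `G`, where the density
of a connected graph is `d(G) = |E(G)| / (|V(G)| − 1)`. -/
theorem uniformlyDense_of_cyclicallyOrderable {V : Type} [Fintype V]
    (G : SimpleGraph V) (hconn : G.Connected) (hcbo : G.CyclicallyOrderable) :
    ∀ H : G.Subgraph, H.Connected →
      (H.edgeSet.toFinset.card : ℚ) / ((H.verts.toFinset.card : ℚ) - 1)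
        ≤ (G.edgeFinset.card : ℚ) / ((Fintype.card V : ℚ) - 1) := by
  obtain ⟨O, hO⟩ := hcbo
  intro H hH
  have hV : Nonempty V := hconn.nonempty
  have hn1 : 1 ≤ Fintype.card V := Fintype.card_pos
  have hHne : H.verts.Nonempty := hH.nonempty
  set p := H.verts.toFinset.card with hp
  set q := H.edgeSet.toFinset.card with hq
  by_cases hp1 : p ≤ 1
  · -- degenerate case: H has at most one vertex, hence no edges
    have hq0 : q = 0 := by
      rw [hq, Finset.card_eq_zero]
      by_contra hne
      obtain ⟨s, hs⟩ := Finset.nonempty_of_ne_empty hne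
      rw [Set.mem_toFinset] at hs
      induction s using Sym2.ind with
      | _ x y =>
        have hadj : H.Adj x y := (SimpleGraph.Subgraph.mem_edgeSet).1 hs
        have hxy : x ≠ y := (H.adj_sub hadj).ne
        have h2 : 1 < p := Finset.one_lt_card.2
          ⟨x, Set.mem_toFinset.2 (H.edge_vert hadj), y,
           Set.mem_toFinset.2 (H.edge_vert hadj.symm), hxy⟩
        omega
    rw [hq0]
    simp only [Nat.cast_zero, zero_div]
    apply div_nonneg (Nat.cast_nonneg _)
    have : (1 : ℚ) ≤ (Fintype.card V : ℚ) := by exact_mod_cast hn1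
    linarith
  · push_neg at hp1
    have hpn : p ≤ Fintype.card V := by
      rw [hp, ← Finset.card_univ]
      exact Finset.card_le_card (Finset.subset_univ _)
    have hn2 : 2 ≤ Fintype.card V := le_trans hp1 hpn
    -- m ≥ n - 1
    have hmn : Fintype.card V - 1 ≤ G.edgeFinset.card := by
      refine card_le_of_tree_le (hO 0) ?_
      intro v w hvw
      rw [SimpleGraph.fromEdgeSet_adj] at hvw
      obtain ⟨h1, -⟩ := hvw
      simp only [Set.mem_setOf_eq] at h1
      obtain ⟨e, he, -⟩ := h1
      rw [← SimpleGraph.mem_edgeSet, ← he]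
      exact e.2
    have hm1 : 1 ≤ G.edgeFinset.card := by omega
    -- labels
    set lab : Sym2 V → ℕ := fun s =>
      if h : s ∈ G.edgeSet then ((O ⟨s, h⟩ : Fin G.edgeFinset.card) : ℕ) else 0 with hlab
    set P : ℕ → Sym2 V → Prop := fun i s =>
      ∃ j < Fintype.card V - 1, lab s = (i + j) % G.edgeFinset.card with hPdef
    have hlabG : ∀ (s : Sym2 V) (h : s ∈ G.edgeSet), lab s = (O ⟨s, h⟩ : ℕ) := by
      intro s h
      rw [hlab]
      simp only [dif_pos h]
    -- row bound
    have row : ∀ i, ((H.edgeSet.toFinset).filter (P i)).card ≤ p - 1 := by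
      intro i
      obtain ⟨r, hr⟩ := hHne
      refine tree_bound (hO i) H.verts.toFinset r (Set.mem_toFinset.2 hr) _ ?_
      intro e he
      rw [Finset.mem_filter, Set.mem_toFinset] at he
      obtain ⟨heH, j, hj, hje⟩ := he
      have heG : e ∈ G.edgeSet := H.edgeSet_subset heH
      constructor
      · rw [SimpleGraph.edgeSet_fromEdgeSet]
        refine ⟨⟨⟨e, heG⟩, rfl, j, hj, ?_⟩, G.not_isDiag_of_mem_edgeSet heG⟩
        rw [← hlabG e heG]
        exact hje
      · intro v hv
        exact Set.mem_toFinset.2 (SimpleGraph.Subgraph.mem_verts_of_mem_edge heH hv)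
    -- column count
    have col : ∀ s ∈ H.edgeSet.toFinset,
        ((Finset.range G.edgeFinset.card).filter (fun i => P i s)).card
          = Fintype.card V - 1 := by
      intro s hs
      have heG : s ∈ G.edgeSet := H.edgeSet_subset (Set.mem_toFinset.1 hs)
      have hl : lab s < G.edgeFinset.card := by
        rw [hlabG s heG]
        exact (O ⟨s, heG⟩).isLt
      exact col_count G.edgeFinset.card (Fintype.card V - 1) (lab s) hl hmn
    -- double counting
    have hsum : ∑ i ∈ Finset.range G.edgeFinset.card, ((H.edgeSet.toFinset).filter (P i)).card
        = ∑ s ∈ H.edgeSet.toFinset,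
            ((Finset.range G.edgeFinset.card).filter (fun i => P i s)).card := by
      simp only [Finset.card_filter]
      exact Finset.sum_comm
    have key : q * (Fintype.card V - 1) ≤ G.edgeFinset.card * (p - 1) := by
      have h1 : ∑ s ∈ H.edgeSet.toFinset,
            ((Finset.range G.edgeFinset.card).filter (fun i => P i s)).card
          = q * (Fintype.card V - 1) := by
        rw [Finset.sum_congr rfl col, Finset.sum_const, smul_eq_mul]
      have h2 : ∑ i ∈ Finset.range G.edgeFinset.card, ((H.edgeSet.toFinset).filter (P i)).card
          ≤ G.edgeFinset.card * (p - 1) := by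
        calc ∑ i ∈ Finset.range G.edgeFinset.card, ((H.edgeSet.toFinset).filter (P i)).card
            ≤ ∑ _i ∈ Finset.range G.edgeFinset.card, (p - 1) :=
              Finset.sum_le_sum (fun i _ => row i)
          _ = G.edgeFinset.card * (p - 1) := by
              rw [Finset.sum_const, Finset.card_range, smul_eq_mul]
      omega
    -- conclude
    rw [div_le_div_iff₀]
    · have hcast : ((q * (Fintype.card V - 1) : ℕ) : ℚ)
          ≤ ((G.edgeFinset.card * (p - 1) : ℕ) : ℚ) := Nat.cast_le.2 key
      push_cast [Nat.cast_sub (by omega : 1 ≤ Fintype.card V),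
        Nat.cast_sub (by omega : 1 ≤ p)] at hcast
      linarith
    · have : (2 : ℚ) ≤ (p : ℚ) := by exact_mod_cast hp1
      linarith
    · have : (2 : ℚ) ≤ (Fintype.card V : ℚ) := by exact_mod_cast hn2
      linarith


end
end
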